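/- arXiv:1904.03874 — 5 statements merged into one kernel-verified Lean document; each statement's English description precedes it below -/
import Mathlib

section
/- There is an absolute constant K > 0 such that for every n and every m with 2 ≤ m ≤ n/2 the following holds: on the n-point uniform metric space there exists a set R of m requests such that no deterministic online algorithm is c-competitive on R for any c < K·m·log(e·n/m); i.e., for every deterministic online algorithm and every additive constant a there is a finite request sequence ρ over R whose online cost exceeds c·z*(ρ) + a. -/
open scoped ENNReal

/-- A request (task) over `n` states assigns to each state a cost in `[0,∞]`. -/
abbrev Req (n : ℕ) := Fin n → ℝ≥0∞

/-- Cost of the solution `ss` for the request sequence `ρ`, starting at `s₀`: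
`Σ_t (d(s_{t-1}, s_t) + ρ_t(s_t))`. -/
noncomputable def mtsCost {n : ℕ} (d : Fin n → Fin n → ℝ≥0∞) :
    Fin n → List (Req n) → List (Fin n) → ℝ≥0∞
  | _, [], _ => 0
  | _, _ :: _, [] => 0
  | s₀, r :: ρ, s :: ss => d s₀ s + r s + mtsCost d s ρ ss

/-- `z*(ρ)`: the optimal (offline) cost of serving the request sequence `ρ` from `s₀`. -/
noncomputable def mtsOpt {n : ℕ} (d : Fin n → Fin n → ℝ≥0∞) (s₀ : Fin n)
    (ρ : List (Req n)) : ℝ≥0∞ :=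
  ⨅ ss : { ss : List (Fin n) // ss.length = ρ.length }, mtsCost d s₀ ρ ss.1

/-- The sequence of states produced by a deterministic online algorithm `A`
(which sees only the prefix `ρ₁,…,ρ_t` when choosing `s_t`) on the request sequence `ρ`. -/
def mtsStates {n : ℕ} (A : List (Req n) → Fin n) (ρ : List (Req n)) : List (Fin n) :=
  (List.range ρ.length).map fun t => A (ρ.take (t + 1))

/-- The cost incurred by the deterministic online algorithm `A` on `ρ`, starting at `s₀`. -/
noncomputable def mtsAlgCost {n : ℕ} (d : Fin n → Fin n → ℝ≥0∞) (s₀ : Fin n)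
    (A : List (Req n) → Fin n) (ρ : List (Req n)) : ℝ≥0∞ :=
  mtsCost d s₀ ρ (mtsStates A ρ)

/-- `A` is `c`-competitive on the request pool `R`: there is a finite additive constant `a`
such that on every request sequence drawn from `R`, the cost of `A` is at most `c·z*(ρ) + a`. -/
def MtsCompetitive {n : ℕ} (d : Fin n → Fin n → ℝ≥0∞) (s₀ : Fin n) (R : Set (Req n))
    (c : ℝ≥0∞) (A : List (Req n) → Fin n) : Prop :=
  ∃ a : ℝ≥0∞, a ≠ ⊤ ∧ ∀ ρ : List (Req n), (∀ r ∈ ρ, r ∈ R) →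
    mtsAlgCost d s₀ A ρ ≤ c * mtsOpt d s₀ ρ + a

/-- A randomized online algorithm: a finitely supported probability distribution over
deterministic online algorithms. -/
structure MtsRandAlg (n : ℕ) where
  k : ℕ
  alg : Fin k → List (Req n) → Fin n
  p : Fin k → ℝ≥0∞
  sum_p : ∑ i, p i = 1

/-- Expected cost of a randomized online algorithm on `ρ`, starting at `s₀`. -/
noncomputable def mtsRandCost {n : ℕ} (d : Fin n → Fin n → ℝ≥0∞) (s₀ : Fin n)
    (B : MtsRandAlg n) (ρ : List (Req n)) : ℝ≥0∞ :=
  ∑ i, B.p i * mtsAlgCost d s₀ (B.alg i) ρ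

/-- A randomized online algorithm `B` is `c`-competitive on the request pool `R`. -/
def MtsRandCompetitive {n : ℕ} (d : Fin n → Fin n → ℝ≥0∞) (s₀ : Fin n) (R : Set (Req n))
    (c : ℝ≥0∞) (B : MtsRandAlg n) : Prop :=
  ∃ a : ℝ≥0∞, a ≠ ⊤ ∧ ∀ ρ : List (Req n), (∀ r ∈ ρ, r ∈ R) →
    mtsRandCost d s₀ B ρ ≤ c * mtsOpt d s₀ ρ + a

/-- The uniform metric on `n` points: `d(x,y) = 1` for `x ≠ y`, `d(x,x) = 0`. -/
noncomputable def unif (n : ℕ) (x y : Fin n) : ℝ≥0∞ := if x = y then 0 else 1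

/-- The paired-uniform metric on an even number `n` of points with parameter `C > 1`:
points are partitioned into pairs `{2j, 2j+1}`; distance `1` within a pair,
`C` across pairs. -/
noncomputable def pairedUnif (n : ℕ) (C : ℝ) (x y : Fin n) : ℝ≥0∞ :=
  if x = y then 0 else if (x : ℕ) / 2 = (y : ℕ) / 2 then 1 else ENNReal.ofReal C


namespace S2

open List

noncomputable section

def h2 : ℝ≥0∞ := 2⁻¹

variable (n m : ℕ)

/-- exponent: `k = ⌊log₂(n/m)⌋`. -/
def kk : ℕ := Nat.log 2 (n / m)
/-- block length -/
def LL : ℕ := 2 ^ kk n m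
/-- number of blocks -/
def BB : ℕ := m / 2
/-- number of attacks per epoch -/
def EE : ℕ := BB m * (kk n m + 1) - 1

/-- the `f` task of block `b` -/
def fT (b : ℕ) : Req n := fun x =>
  if (x : ℕ) < BB m * LL n m then
    (if b * LL n m ≤ (x : ℕ) ∧ (x : ℕ) < b * LL n m + LL n m then
      h2 ^ ((x : ℕ) - b * LL n m) else 0)
  else ⊤

/-- the `g` task of block `b` -/
def gT (b : ℕ) : Req n := fun x =>
  if (x : ℕ) < BB m * LL n m then
    (if b * LL n m ≤ (x : ℕ) ∧ (x : ℕ) < b * LL n m + LL n m then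
      h2 ^ (LL n m - 1 - ((x : ℕ) - b * LL n m)) else 0)
  else ⊤

/-- dummy task (only used to pad the cardinality for odd `m`) -/
def dT : Req n := fun x => if (x : ℕ) < BB m * LL n m then 0 else ⊤

/-- block adversary state -/
structure BS where
  F : ℕ
  G : ℕ
  lo : ℕ
  rh : ℕ
  atk : ℕ

def bs0 : BS := ⟨0, 0, 0, 0, 0⟩

def midp (s : BS) : ℕ := s.lo + (LL n m - s.lo - s.rh - 1) / 2

def updF (σ : ℕ → BS) (b x : ℕ) : ℕ → BS := fun b' =>
  if b' = b then ⟨(σ b).F + 2 ^ x, (σ b).G, max (σ b).lo x + 1, (σ b).rh, (σ b).atk + 1⟩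
  else σ b'

def updG (σ : ℕ → BS) (b x : ℕ) : ℕ → BS := fun b' =>
  if b' = b then ⟨(σ b).F, (σ b).G + 2 ^ x, (σ b).lo, max (σ b).rh x + 1, (σ b).atk + 1⟩
  else σ b'

/-- one attack: a burst of requests plus the state update -/
def attack (σ : ℕ → BS) (p : Fin n) : List (Req n) × (ℕ → BS) :=
  if (p : ℕ) < BB m * LL n m then
    (if (p : ℕ) % LL n m ≤ midp n m (σ ((p : ℕ) / LL n m)) then
      (List.replicate (2 ^ ((p : ℕ) % LL n m)) (fT n m ((p : ℕ) / LL n m)),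
        updF σ ((p : ℕ) / LL n m) ((p : ℕ) % LL n m))
    else
      (List.replicate (2 ^ (LL n m - 1 - (p : ℕ) % LL n m)) (gT n m ((p : ℕ) / LL n m)),
        updG σ ((p : ℕ) / LL n m) (LL n m - 1 - (p : ℕ) % LL n m)))
  else (List.replicate 1 (fT n m 0), updF σ 0 0)

variable (Alg : List (Req n) → Fin n) (s₀ : Fin n)

/-- position of the online algorithm after the prefix `l` -/
def pos (l : List (Req n)) : Fin n := if l.isEmpty then s₀ else Alg l

/-- run one epoch: `e` attacks -/
def erun : ℕ → (ℕ → BS) → List (Req n) → List (Req n) × (ℕ → BS)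
  | 0, σ, _ => ([], σ)
  | e + 1, σ, pre =>
    let a := attack n m σ (pos n Alg s₀ pre)
    let rest := erun e a.2 (pre ++ a.1)
    (a.1 ++ rest.1, rest.2)

/-- run `N` epochs -/
def frun : ℕ → List (Req n) → List (Req n)
  | 0, _ => []
  | N + 1, pre =>
    let ρe := (erun n m Alg s₀ (EE n m) (fun _ => bs0) pre).1
    ρe ++ frun N (pre ++ ρe)

/-- certified lower bound for the online cost -/
def lowCost : List (Req n) → List (Req n) → ℝ≥0∞
  | _, [] => 0
  | pre, r :: ρ =>
    (if pos n Alg s₀ (pre ++ [r]) = pos n Alg s₀ pre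
      then min 1 (r (pos n Alg s₀ pre)) else 1)
      + lowCost (pre ++ [r]) ρ

/-- cost of sitting at `y` -/
def sitSum (ρ : List (Req n)) (y : Fin n) : ℝ≥0∞ := (ρ.map (fun r => r y)).sum

/-! ### basic lemmas -/

lemma h2_le_one : h2 ≤ 1 := ENNReal.inv_le_one.mpr one_le_two

lemma h2_pow_le_one (j : ℕ) : h2 ^ j ≤ 1 := pow_le_one' h2_le_one j

lemma two_pow_mul_h2_pow (j : ℕ) : (2 : ℝ≥0∞) ^ j * h2 ^ j = 1 := by
  rw [h2, ← mul_pow, ENNReal.mul_inv_cancel two_ne_zero (by norm_num), one_pow]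

lemma min1_add (a b : ℝ≥0∞) : min 1 (a + b) ≤ min 1 a + min 1 b := by
  rcases le_or_gt 1 a with h | h
  · calc min 1 (a + b) ≤ 1 := min_le_left _ _
      _ ≤ min 1 a + min 1 b := by rw [min_eq_left h]; exact le_self_add
  · rcases le_or_gt 1 b with h' | h'
    · calc min 1 (a + b) ≤ 1 := min_le_left _ _
        _ ≤ min 1 a + min 1 b := by rw [min_eq_left h']; exact le_add_self
    · rw [min_eq_right h.le, min_eq_right h'.le]
      exact min_le_right _ _

lemma lowCost_append : ∀ (ρ₁ ρ₂ pre : List (Req n)),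
    lowCost n Alg s₀ pre (ρ₁ ++ ρ₂)
      = lowCost n Alg s₀ pre ρ₁ + lowCost n Alg s₀ (pre ++ ρ₁) ρ₂
  | [], ρ₂, pre => by simp [lowCost]
  | r :: ρ₁, ρ₂, pre => by
    have h := lowCost_append ρ₁ ρ₂ (pre ++ [r])
    simp only [List.cons_append, lowCost, List.append_eq, h, List.append_assoc,
      List.singleton_append, List.nil_append, add_assoc]

lemma pos_append_singleton (pre : List (Req n)) (r : Req n) :
    pos n Alg s₀ (pre ++ [r]) = Alg (pre ++ [r]) := by
  simp [pos]

lemma lowCost_replicate (r : Req n) : ∀ (c : ℕ) (pre : List (Req n)),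
    min 1 ((c : ℝ≥0∞) * min 1 (r (pos n Alg s₀ pre)))
      ≤ lowCost n Alg s₀ pre (List.replicate c r)
  | 0, pre => by simp [lowCost]
  | c + 1, pre => by
    rw [List.replicate_succ, Nat.cast_add, Nat.cast_one]
    set v := min 1 (r (pos n Alg s₀ pre)) with hv
    have hv1 : v ≤ 1 := min_le_left _ _
    simp only [lowCost]
    by_cases h : pos n Alg s₀ (pre ++ [r]) = pos n Alg s₀ pre
    · rw [if_pos h]
      have IH := lowCost_replicate r c (pre ++ [r])
      rw [h, ← hv] at IH
      calc min 1 (((c : ℝ≥0∞) + 1) * v) = min 1 (v + (c : ℝ≥0∞) * v) := by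
            rw [add_mul, one_mul, add_comm]
        _ ≤ min 1 v + min 1 ((c : ℝ≥0∞) * v) := min1_add _ _
        _ ≤ v + lowCost n Alg s₀ (pre ++ [r]) (List.replicate c r) := by
            rw [min_eq_right hv1]
            exact add_le_add_right IH _
    · rw [if_neg h]
      calc min 1 (((c : ℝ≥0∞) + 1) * v) ≤ 1 := min_le_left _ _
        _ ≤ 1 + lowCost n Alg s₀ (pre ++ [r]) (List.replicate c r) := le_self_add

def lowC : (List (Req n) → Fin n) → Fin n → List (Req n) → ℝ≥0∞
  | _, _, [] => 0
  | A, s, r :: ρ =>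
    (if A [r] = s then min 1 (r s) else 1) + lowC (fun l => A (r :: l)) (A [r]) ρ

lemma mtsStates_cons (A : List (Req n) → Fin n) (r : Req n) (ρ : List (Req n)) :
    mtsStates A (r :: ρ) = A [r] :: mtsStates (fun l => A (r :: l)) ρ := by
  simp only [mtsStates, List.length_cons, List.range_succ_eq_map, List.map_cons,
    List.map_map]
  constructor

lemma lowC_le_mtsCost : ∀ (ρ : List (Req n)) (A : List (Req n) → Fin n) (s : Fin n),
    lowC n A s ρ ≤ mtsCost (unif n) s ρ (mtsStates A ρ)
  | [], A, s => by simp [lowC, mtsStates, mtsCost]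
  | r :: ρ, A, s => by
    rw [mtsStates_cons]
    show lowC n A s (r :: ρ) ≤ unif n s (A [r]) + r (A [r]) + _
    simp only [lowC]
    refine add_le_add ?_ (lowC_le_mtsCost ρ _ _)
    by_cases h : A [r] = s
    · rw [if_pos h, h, unif, if_pos rfl, zero_add]
      exact min_le_right _ _
    · rw [if_neg h, unif, if_neg (fun hh => h hh.symm)]
      exact le_add_right le_rfl

lemma lowCost_eq_lowC : ∀ (ρ pre : List (Req n)),
    lowCost n Alg s₀ pre ρ = lowC n (fun l => Alg (pre ++ l)) (pos n Alg s₀ pre) ρ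
  | [], pre => by simp [lowCost, lowC]
  | r :: ρ, pre => by
    simp only [lowCost, lowC]
    congr 1
    · rw [pos_append_singleton]
    · rw [lowCost_eq_lowC ρ (pre ++ [r]), pos_append_singleton]
      congr 1
      funext l
      rw [List.append_assoc, List.singleton_append]

lemma mtsAlgCost_ge_lowCost (ρ : List (Req n)) :
    lowCost n Alg s₀ [] ρ ≤ mtsAlgCost (unif n) s₀ Alg ρ := by
  rw [lowCost_eq_lowC]
  have := lowC_le_mtsCost n ρ (fun l => Alg l) s₀
  simpa [pos, mtsAlgCost] using this

lemma unif_le_one (s y : Fin n) : unif n s y ≤ 1 := by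
  unfold unif; split <;> simp

lemma sitSum_append (ρ₁ ρ₂ : List (Req n)) (y : Fin n) :
    sitSum n (ρ₁ ++ ρ₂) y = sitSum n ρ₁ y + sitSum n ρ₂ y := by
  simp [sitSum]

lemma sitSum_replicate (c : ℕ) (r : Req n) (y : Fin n) :
    sitSum n (List.replicate c r) y = (c : ℝ≥0∞) * r y := by
  simp [sitSum, List.map_replicate, List.sum_replicate, nsmul_eq_mul]

lemma mtsCost_append (d : Fin n → Fin n → ℝ≥0∞) :
    ∀ (ρ₁ : List (Req n)) (ss₁ : List (Fin n)), ss₁.length = ρ₁.length →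
      ∀ (s : Fin n) (ρ₂ : List (Req n)) (ss₂ : List (Fin n)),
      mtsCost d s (ρ₁ ++ ρ₂) (ss₁ ++ ss₂)
        = mtsCost d s ρ₁ ss₁ + mtsCost d (ss₁.getLastD s) ρ₂ ss₂
  | [], [], _, s, ρ₂, ss₂ => by simp [mtsCost]
  | r :: ρ₁, s₁ :: ss₁, h, s, ρ₂, ss₂ => by
    simp only [List.length_cons, Nat.add_right_cancel_iff] at h
    simp only [List.cons_append, mtsCost, List.append_eq, List.getLastD_cons,
      mtsCost_append d ρ₁ ss₁ h s₁ ρ₂ ss₂, add_assoc]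

lemma mtsCost_sit (y : Fin n) : ∀ (ρ : List (Req n)) (s : Fin n),
    mtsCost (unif n) s ρ (List.replicate ρ.length y) ≤ unif n s y + sitSum n ρ y
  | [], s => by simp [mtsCost, sitSum]
  | r :: ρ, s => by
    simp only [List.length_cons, List.replicate_succ, mtsCost, sitSum, List.map_cons,
      List.sum_cons]
    have IH : mtsCost (unif n) y ρ (List.replicate ρ.length y) ≤ sitSum n ρ y := by
      have h := mtsCost_sit y ρ y
      have hyy : unif n y y = 0 := by simp [unif]
      rwa [hyy, zero_add] at h
    rw [add_assoc]
    exact add_le_add_right (add_le_add_right IH _) _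



/-! ### parameter facts -/

lemma hm0 (hm : 2 ≤ m) : 0 < m := by omega

lemma hdiv2 (hm : 2 ≤ m) (hnm : 2 * m ≤ n) : 2 ≤ n / m :=
  (Nat.le_div_iff_mul_le (hm0 m hm)).mpr hnm

lemma hk1 (hm : 2 ≤ m) (hnm : 2 * m ≤ n) : 1 ≤ kk n m := by
  have h := hdiv2 n m hm hnm
  have := (Nat.le_log_iff_pow_le (by norm_num : (1:ℕ) < 2)
      (show n / m ≠ 0 by omega)).mpr (show 2 ^ 1 ≤ n / m by simpa using h)
  simpa [kk] using this

lemma hL2 (hm : 2 ≤ m) (hnm : 2 * m ≤ n) : 2 ≤ LL n m := by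
  have := hk1 n m hm hnm
  calc 2 = 2 ^ 1 := rfl
    _ ≤ 2 ^ kk n m := Nat.pow_le_pow_right (by norm_num) this
    _ = LL n m := rfl

lemma hL0 (hm : 2 ≤ m) (hnm : 2 * m ≤ n) : 0 < LL n m := by
  have := hL2 n m hm hnm; omega

lemma hB1 (hm : 2 ≤ m) : 1 ≤ BB m := by
  have : 2 / 2 ≤ m / 2 := Nat.div_le_div_right hm
  simpa [BB] using this

lemma hLnm (hm : 2 ≤ m) (hnm : 2 * m ≤ n) : LL n m ≤ n / m := by
  have : 2 ^ Nat.log 2 (n / m) ≤ n / m :=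
    Nat.pow_log_le_self 2 (by have := hdiv2 n m hm hnm; omega)
  simpa [LL, kk] using this

lemma hBL (hm : 2 ≤ m) (hnm : 2 * m ≤ n) : BB m * LL n m ≤ n := by
  have h1 : 2 * BB m ≤ m := by
    have : 2 * (m / 2) ≤ m := Nat.mul_div_le m 2
    simpa [BB] using this
  have h2 : m * LL n m ≤ m * (n / m) := Nat.mul_le_mul_left m (hLnm n m hm hnm)
  have h3 : m * (n / m) ≤ n := Nat.mul_div_le n m
  have h4 : 2 * (BB m * LL n m) ≤ m * LL n m := by
    rw [← mul_assoc]
    exact Nat.mul_le_mul_right _ h1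
  omega

lemma hE1 (hm : 2 ≤ m) (hnm : 2 * m ≤ n) : 1 ≤ EE n m := by
  have hb := hB1 m hm
  have hk := hk1 n m hm hnm
  have : 2 ≤ BB m * (kk n m + 1) := by nlinarith
  simp only [EE]; omega

/-! ### task values -/

lemma fT_in (b o : ℕ) (x : Fin n) (hx : (x : ℕ) < BB m * LL n m)
    (hb : (x : ℕ) = b * LL n m + o) (ho : o < LL n m) : fT n m b x = h2 ^ o := by
  unfold fT
  rw [if_pos hx, if_pos ⟨by omega, by omega⟩]
  congr 1
  omega

lemma gT_in (b o : ℕ) (x : Fin n) (hx : (x : ℕ) < BB m * LL n m)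
    (hb : (x : ℕ) = b * LL n m + o) (ho : o < LL n m) :
    gT n m b x = h2 ^ (LL n m - 1 - o) := by
  unfold gT
  rw [if_pos hx, if_pos ⟨by omega, by omega⟩]
  congr 1
  omega

lemma fT_out (b : ℕ) (x : Fin n) (hx : (x : ℕ) < BB m * LL n m)
    (hL : 0 < LL n m) (hb : (x : ℕ) / LL n m ≠ b) : fT n m b x = 0 := by
  unfold fT
  rw [if_pos hx, if_neg]
  rintro ⟨h1, h2⟩
  exact hb (Nat.div_eq_of_lt_le (by simpa [mul_comm] using h1)
    (by rw [add_mul, one_mul]; simpa [mul_comm] using h2))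

lemma gT_out (b : ℕ) (x : Fin n) (hx : (x : ℕ) < BB m * LL n m)
    (hL : 0 < LL n m) (hb : (x : ℕ) / LL n m ≠ b) : gT n m b x = 0 := by
  unfold gT
  rw [if_pos hx, if_neg]
  rintro ⟨h1, h2⟩
  exact hb (Nat.div_eq_of_lt_le (by simpa [mul_comm] using h1)
    (by rw [add_mul, one_mul]; simpa [mul_comm] using h2))

lemma fT_far (b : ℕ) (x : Fin n) (hx : ¬ (x : ℕ) < BB m * LL n m) : fT n m b x = ⊤ := by
  unfold fT; rw [if_neg hx]

variable {n m}

lemma pos_block (p : Fin n) (hp : (p : ℕ) < BB m * LL n m) (hL : 0 < LL n m) :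
    (p : ℕ) = ((p : ℕ) / LL n m) * LL n m + (p : ℕ) % LL n m ∧ (p : ℕ) % LL n m < LL n m :=
  ⟨by rw [mul_comm]; exact (Nat.div_add_mod _ _).symm, Nat.mod_lt _ hL⟩

variable (n m)

/-! ### extraction -/

lemma attack_lowCost (hm : 2 ≤ m) (hnm : 2 * m ≤ n) (σ : ℕ → BS)
    (pre : List (Req n)) :
    1 ≤ lowCost n Alg s₀ pre (attack n m σ (pos n Alg s₀ pre)).1 := by
  have hL := hL0 n m hm hnm
  set p := pos n Alg s₀ pre with hpdef
  have key : ∀ (c : ℕ) (r : Req n), (c : ℝ≥0∞) * min 1 (r p) = 1 →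
      1 ≤ lowCost n Alg s₀ pre (List.replicate c r) := by
    intro c r hcr
    have := lowCost_replicate n Alg s₀ r c pre
    rw [← hpdef, hcr] at this
    simpa using this
  unfold attack
  by_cases hp : (p : ℕ) < BB m * LL n m
  · rw [if_pos hp]
    obtain ⟨hb, ho⟩ := pos_block p hp hL
    by_cases hmid : (p : ℕ) % LL n m ≤ midp n m (σ ((p : ℕ) / LL n m))
    · rw [if_pos hmid]
      apply key
      rw [fT_in n m _ _ p hp hb ho, min_eq_right (h2_pow_le_one _)]
      push_cast
      exact two_pow_mul_h2_pow _
    · rw [if_neg hmid]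
      apply key
      rw [gT_in n m _ _ p hp hb ho, min_eq_right (h2_pow_le_one _)]
      push_cast
      exact two_pow_mul_h2_pow _
  · rw [if_neg hp]
    apply key
    rw [fT_far n m 0 p hp]
    simp

lemma erun_lowCost (hm : 2 ≤ m) (hnm : 2 * m ≤ n) :
    ∀ (e : ℕ) (σ : ℕ → BS) (pre : List (Req n)),
      (e : ℝ≥0∞) ≤ lowCost n Alg s₀ pre (erun n m Alg s₀ e σ pre).1
  | 0, σ, pre => by simp
  | e + 1, σ, pre => by
    show (((e : ℕ) + 1 : ℕ) : ℝ≥0∞) ≤ lowCost n Alg s₀ pre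
      ((attack n m σ (pos n Alg s₀ pre)).1 ++ _)
    rw [lowCost_append, Nat.cast_add, Nat.cast_one, add_comm ((e : ℝ≥0∞)) 1]
    exact add_le_add (attack_lowCost n m Alg s₀ hm hnm σ pre)
      (erun_lowCost hm hnm e _ _)

lemma frun_lowCost (hm : 2 ≤ m) (hnm : 2 * m ≤ n) :
    ∀ (N : ℕ) (pre : List (Req n)),
      ((N * EE n m : ℕ) : ℝ≥0∞) ≤ lowCost n Alg s₀ pre (frun n m Alg s₀ N pre)
  | 0, pre => by simp
  | N + 1, pre => by
    show _ ≤ lowCost n Alg s₀ pre ((erun n m Alg s₀ (EE n m) (fun _ => bs0) pre).1 ++ _)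
    rw [lowCost_append]
    have h1 := erun_lowCost n m Alg s₀ hm hnm (EE n m) (fun _ => bs0) pre
    have h2 := frun_lowCost hm hnm N
      (pre ++ (erun n m Alg s₀ (EE n m) (fun _ => bs0) pre).1)
    calc ((((N + 1) * EE n m : ℕ)) : ℝ≥0∞)
        = ((EE n m : ℕ) : ℝ≥0∞) + ((N * EE n m : ℕ) : ℝ≥0∞) := by push_cast; ring
      _ ≤ _ := add_le_add h1 h2


/-! ### invariants -/

def Inv (σ : ℕ → BS) : Prop :=
  ∀ b, (σ b).F ≤ 2 ^ (σ b).lo - 1 ∧ (σ b).G ≤ 2 ^ (σ b).rh - 1 ∧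
    ((σ b).atk ≤ kk n m → (σ b).lo + (σ b).rh + 2 ^ (kk n m - (σ b).atk) ≤ LL n m)

lemma Inv_init : Inv n m (fun _ => bs0) := by
  intro b
  refine ⟨by simp [bs0], by simp [bs0], ?_⟩
  intro _
  simp [bs0, LL]

lemma Inv_updF (σ : ℕ → BS) (b x : ℕ) (hInv : Inv n m σ)
    (hx : x ≤ midp n m (σ b)) : Inv n m (updF σ b x) := by
  intro b'
  by_cases hb : b' = b
  · subst hb
    obtain ⟨h1, h2, h3⟩ := hInv b'
    simp only [updF, eq_self_iff_true, if_true]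
    refine ⟨?_, h2, ?_⟩
    · have e1 : 2 ^ (σ b').lo ≤ 2 ^ max (σ b').lo x :=
        Nat.pow_le_pow_right (by norm_num) (le_max_left _ _)
      have e2 : 2 ^ x ≤ 2 ^ max (σ b').lo x :=
        Nat.pow_le_pow_right (by norm_num) (le_max_right _ _)
      have e3 : 2 ^ (max (σ b').lo x + 1) = 2 * 2 ^ max (σ b').lo x := by
        rw [pow_succ]; ring
      have e4 : 1 ≤ 2 ^ (σ b').lo := Nat.one_le_two_pow
      omega
    · intro hatk
      have hlt : (σ b').atk < kk n m := by omega
      have h3' := h3 (by omega)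
      have hsplit : 2 ^ (kk n m - (σ b').atk)
          = 2 * 2 ^ (kk n m - ((σ b').atk + 1)) := by
        have : kk n m - (σ b').atk = (kk n m - ((σ b').atk + 1)) + 1 := by omega
        rw [this, pow_succ]; ring
      have ht1 : 1 ≤ 2 ^ (kk n m - ((σ b').atk + 1)) := Nat.one_le_two_pow
      have hmid : midp n m (σ b')
          = (σ b').lo + (LL n m - (σ b').lo - (σ b').rh - 1) / 2 := rfl
      omega
  · obtain ⟨h1, h2, h3⟩ := hInv b'
    simp only [updF, if_neg hb]
    exact ⟨h1, h2, h3⟩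

lemma Inv_updG (σ : ℕ → BS) (b o : ℕ) (hInv : Inv n m σ) (ho : o < LL n m)
    (hmid : midp n m (σ b) < o) : Inv n m (updG σ b (LL n m - 1 - o)) := by
  intro b'
  by_cases hb : b' = b
  · subst hb
    obtain ⟨h1, h2, h3⟩ := hInv b'
    simp only [updG, eq_self_iff_true, if_true]
    refine ⟨h1, ?_, ?_⟩
    · have e1 : 2 ^ (σ b').rh ≤ 2 ^ max (σ b').rh (LL n m - 1 - o) :=
        Nat.pow_le_pow_right (by norm_num) (le_max_left _ _)
      have e2 : 2 ^ (LL n m - 1 - o) ≤ 2 ^ max (σ b').rh (LL n m - 1 - o) :=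
        Nat.pow_le_pow_right (by norm_num) (le_max_right _ _)
      have e3 : 2 ^ (max (σ b').rh (LL n m - 1 - o) + 1)
          = 2 * 2 ^ max (σ b').rh (LL n m - 1 - o) := by
        rw [pow_succ]; ring
      have e4 : 1 ≤ 2 ^ (σ b').rh := Nat.one_le_two_pow
      omega
    · intro hatk
      have hlt : (σ b').atk < kk n m := by omega
      have h3' := h3 (by omega)
      have hsplit : 2 ^ (kk n m - (σ b').atk)
          = 2 * 2 ^ (kk n m - ((σ b').atk + 1)) := by
        have : kk n m - (σ b').atk = (kk n m - ((σ b').atk + 1)) + 1 := by omega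
        rw [this, pow_succ]; ring
      have ht1 : 1 ≤ 2 ^ (kk n m - ((σ b').atk + 1)) := Nat.one_le_two_pow
      have hmid' : midp n m (σ b')
          = (σ b').lo + (LL n m - (σ b').lo - (σ b').rh - 1) / 2 := rfl
      omega
  · obtain ⟨h1, h2, h3⟩ := hInv b'
    simp only [updG, if_neg hb]
    exact ⟨h1, h2, h3⟩

lemma Inv_attack (hm : 2 ≤ m) (hnm : 2 * m ≤ n) (σ : ℕ → BS) (p : Fin n)
    (hInv : Inv n m σ) : Inv n m (attack n m σ p).2 := by
  have hL := hL0 n m hm hnm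
  unfold attack
  by_cases hp : (p : ℕ) < BB m * LL n m
  · rw [if_pos hp]
    by_cases hmid : (p : ℕ) % LL n m ≤ midp n m (σ ((p : ℕ) / LL n m))
    · rw [if_pos hmid]
      exact Inv_updF n m σ _ _ hInv hmid
    · rw [if_neg hmid]
      exact Inv_updG n m σ _ _ hInv (Nat.mod_lt _ hL) (by omega)
  · rw [if_neg hp]
    exact Inv_updF n m σ 0 0 hInv (Nat.zero_le _)

lemma Inv_erun (hm : 2 ≤ m) (hnm : 2 * m ≤ n) :
    ∀ (e : ℕ) (σ : ℕ → BS) (pre : List (Req n)), Inv n m σ →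
      Inv n m (erun n m Alg s₀ e σ pre).2
  | 0, σ, pre, h => h
  | e + 1, σ, pre, h =>
    Inv_erun hm hnm e _ _ (Inv_attack n m hm hnm σ _ h)

/-! ### attack counting -/

lemma sum_atk_upd (f g : ℕ → BS) (b : ℕ) (hb : b < BB m)
    (hfg : ∀ b', b' ≠ b → g b' = f b') (hgb : (g b).atk = (f b).atk + 1) :
    ∑ b' ∈ Finset.range (BB m), (g b').atk
      = (∑ b' ∈ Finset.range (BB m), (f b').atk) + 1 := by
  have hmem : b ∈ Finset.range (BB m) := Finset.mem_range.mpr hb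
  rw [← Finset.add_sum_erase _ _ hmem, ← Finset.add_sum_erase _ _ hmem, hgb]
  have : ∑ b' ∈ (Finset.range (BB m)).erase b, (g b').atk
      = ∑ b' ∈ (Finset.range (BB m)).erase b, (f b').atk := by
    apply Finset.sum_congr rfl
    intro b' hb'
    rw [hfg b' (Finset.ne_of_mem_erase hb')]
  omega

lemma attack_atksum (hm : 2 ≤ m) (hnm : 2 * m ≤ n) (σ : ℕ → BS) (p : Fin n) :
    ∑ b' ∈ Finset.range (BB m), (((attack n m σ p).2) b').atk
      = (∑ b' ∈ Finset.range (BB m), (σ b').atk) + 1 := by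
  have hL := hL0 n m hm hnm
  have hB := hB1 m hm
  unfold attack
  by_cases hp : (p : ℕ) < BB m * LL n m
  · have hbB : (p : ℕ) / LL n m < BB m := by
      rw [Nat.div_lt_iff_lt_mul hL]
      omega
    rw [if_pos hp]
    by_cases hmid : (p : ℕ) % LL n m ≤ midp n m (σ ((p : ℕ) / LL n m))
    · rw [if_pos hmid]
      exact sum_atk_upd m _ _ _ hbB (fun b' h => by simp [updF, if_neg h])
        (by simp [updF])
    · rw [if_neg hmid]
      exact sum_atk_upd m _ _ _ hbB (fun b' h => by simp [updG, if_neg h])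
        (by simp [updG])
  · rw [if_neg hp]
    exact sum_atk_upd m _ _ 0 (by omega) (fun b' h => by simp [updF, if_neg h])
      (by simp [updF])

lemma erun_atksum (hm : 2 ≤ m) (hnm : 2 * m ≤ n) :
    ∀ (e : ℕ) (σ : ℕ → BS) (pre : List (Req n)),
      ∑ b' ∈ Finset.range (BB m), ((erun n m Alg s₀ e σ pre).2 b').atk
        = (∑ b' ∈ Finset.range (BB m), (σ b').atk) + e
  | 0, σ, pre => by simp [erun]
  | e + 1, σ, pre => by
    show ∑ b' ∈ Finset.range (BB m),
        ((erun n m Alg s₀ e _ _).2 b').atk = _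
    rw [erun_atksum hm hnm e _ _, attack_atksum n m hm hnm σ _]
    omega


/-! ### pour accounting -/

lemma div_of_block (b w : ℕ) (hL : 0 < LL n m) (hw : w < LL n m) :
    (b * LL n m + w) / LL n m = b := by
  rw [add_comm, mul_comm, Nat.add_mul_div_left _ _ hL, Nat.div_eq_of_lt hw, zero_add]

lemma natcast_two_pow (a : ℕ) : (((2 : ℕ) ^ a : ℕ) : ℝ≥0∞) = (2 : ℝ≥0∞) ^ a := by
  push_cast; rfl

lemma attack_sitSum (hm : 2 ≤ m) (hnm : 2 * m ≤ n) (σ : ℕ → BS) (p : Fin n)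
    (b w : ℕ) (hb : b < BB m) (hw : w < LL n m) (y : Fin n)
    (hy : (y : ℕ) = b * LL n m + w) :
    sitSum n (attack n m σ p).1 y
      + ((σ b).F : ℝ≥0∞) * h2 ^ w + ((σ b).G : ℝ≥0∞) * h2 ^ (LL n m - 1 - w)
      = ((((attack n m σ p).2) b).F : ℝ≥0∞) * h2 ^ w
        + ((((attack n m σ p).2) b).G : ℝ≥0∞) * h2 ^ (LL n m - 1 - w) := by
  have hL := hL0 n m hm hnm
  have hyBL : (y : ℕ) < BB m * LL n m := by
    have : b * LL n m + w < (b + 1) * LL n m := by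
      rw [add_mul, one_mul]; omega
    have h2' : (b + 1) * LL n m ≤ BB m * LL n m := Nat.mul_le_mul_right _ (by omega)
    omega
  have hydiv : (y : ℕ) / LL n m = b := by rw [hy]; exact div_of_block n m b w hL hw
  unfold attack
  by_cases hp : (p : ℕ) < BB m * LL n m
  · rw [if_pos hp]
    by_cases hmid : (p : ℕ) % LL n m ≤ midp n m (σ ((p : ℕ) / LL n m))
    · rw [if_pos hmid]
      simp only [sitSum_replicate]
      by_cases hbb : (p : ℕ) / LL n m = b
      · rw [hbb, fT_in n m b w y hyBL hy hw]
        simp only [updF, eq_self_iff_true, if_true]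
        rw [natcast_two_pow]
        push_cast
        ring
      · rw [fT_out n m _ y hyBL hL (by rw [hydiv]; exact fun h => hbb h.symm)]
        simp only [updF, if_neg (fun h : b = (p : ℕ) / LL n m => hbb h.symm)]
        ring
    · rw [if_neg hmid]
      simp only [sitSum_replicate]
      by_cases hbb : (p : ℕ) / LL n m = b
      · rw [hbb, gT_in n m b w y hyBL hy hw]
        simp only [updG, eq_self_iff_true, if_true]
        rw [natcast_two_pow]
        push_cast
        ring
      · rw [gT_out n m _ y hyBL hL (by rw [hydiv]; exact fun h => hbb h.symm)]
        simp only [updG, if_neg (fun h : b = (p : ℕ) / LL n m => hbb h.symm)]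
        ring
  · rw [if_neg hp]
    simp only [sitSum_replicate]
    by_cases hbb : b = 0
    · subst hbb
      have hy0 : (y : ℕ) = 0 * LL n m + w := by simpa using hy
      rw [fT_in n m 0 w y hyBL hy0 hw]
      simp only [updF, eq_self_iff_true, if_true]
      push_cast
      ring
    · rw [fT_out n m 0 y hyBL hL (by rw [hydiv]; exact hbb)]
      simp only [updF, if_neg hbb]
      ring

lemma erun_sitSum (hm : 2 ≤ m) (hnm : 2 * m ≤ n) (b w : ℕ) (hb : b < BB m)
    (hw : w < LL n m) (y : Fin n) (hy : (y : ℕ) = b * LL n m + w) :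
    ∀ (e : ℕ) (σ : ℕ → BS) (pre : List (Req n)),
      sitSum n (erun n m Alg s₀ e σ pre).1 y
        + ((σ b).F : ℝ≥0∞) * h2 ^ w + ((σ b).G : ℝ≥0∞) * h2 ^ (LL n m - 1 - w)
        = (((erun n m Alg s₀ e σ pre).2 b).F : ℝ≥0∞) * h2 ^ w
          + (((erun n m Alg s₀ e σ pre).2 b).G : ℝ≥0∞) * h2 ^ (LL n m - 1 - w)
  | 0, σ, pre => by simp [erun, sitSum]
  | e + 1, σ, pre => by
    have h1 := attack_sitSum n m hm hnm σ (pos n Alg s₀ pre) b w hb hw y hy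
    set a := attack n m σ (pos n Alg s₀ pre) with ha
    have hIH := erun_sitSum hm hnm b w hb hw y hy e a.2 (pre ++ a.1)
    show sitSum n (a.1 ++ (erun n m Alg s₀ e a.2 (pre ++ a.1)).1) y
        + ((σ b).F : ℝ≥0∞) * h2 ^ w + ((σ b).G : ℝ≥0∞) * h2 ^ (LL n m - 1 - w)
      = (((erun n m Alg s₀ e a.2 (pre ++ a.1)).2 b).F : ℝ≥0∞) * h2 ^ w
        + (((erun n m Alg s₀ e a.2 (pre ++ a.1)).2 b).G : ℝ≥0∞)
          * h2 ^ (LL n m - 1 - w)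
    rw [sitSum_append]
    have hre : sitSum n a.1 y + sitSum n (erun n m Alg s₀ e a.2 (pre ++ a.1)).1 y
        + ((σ b).F : ℝ≥0∞) * h2 ^ w + ((σ b).G : ℝ≥0∞) * h2 ^ (LL n m - 1 - w)
      = sitSum n (erun n m Alg s₀ e a.2 (pre ++ a.1)).1 y
        + (sitSum n a.1 y + ((σ b).F : ℝ≥0∞) * h2 ^ w
          + ((σ b).G : ℝ≥0∞) * h2 ^ (LL n m - 1 - w)) := by ring
    rw [hre, h1, ← add_assoc]
    exact hIH

/-! ### the refuge -/

lemma epoch_refuge (hm : 2 ≤ m) (hnm : 2 * m ≤ n) (pre : List (Req n)) :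
    ∃ y : Fin n, (y : ℕ) < BB m * LL n m ∧
      sitSum n (erun n m Alg s₀ (EE n m) (fun _ => bs0) pre).1 y ≤ 2 := by
  have hL := hL0 n m hm hnm
  set σf := (erun n m Alg s₀ (EE n m) (fun _ => bs0) pre).2 with hσf
  have hInv : Inv n m σf := Inv_erun n m Alg s₀ hm hnm _ _ _ (Inv_init n m)
  have hsum : ∑ b' ∈ Finset.range (BB m), (σf b').atk = EE n m := by
    rw [hσf, erun_atksum n m Alg s₀ hm hnm]
    simp [bs0]
  have hex : ∃ b, b < BB m ∧ (σf b).atk ≤ kk n m := by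
    by_contra hcon
    push_neg at hcon
    have hge : BB m * (kk n m + 1) ≤ ∑ b' ∈ Finset.range (BB m), (σf b').atk := by
      calc BB m * (kk n m + 1)
          = ∑ _b' ∈ Finset.range (BB m), (kk n m + 1) := by
            rw [Finset.sum_const, Finset.card_range, smul_eq_mul]
        _ ≤ ∑ b' ∈ Finset.range (BB m), (σf b').atk :=
            Finset.sum_le_sum fun b' hb' =>
              hcon b' (Finset.mem_range.mp hb')
    rw [hsum] at hge
    have hb := hB1 m hm
    have hk := hk1 n m hm hnm
    have : 2 ≤ BB m * (kk n m + 1) := by nlinarith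
    simp only [EE] at hge
    omega
  obtain ⟨b, hb, hatk⟩ := hex
  obtain ⟨hF, hG, hwin⟩ := hInv b
  have hwin' := hwin hatk
  have h1le : 1 ≤ 2 ^ (kk n m - (σf b).atk) := Nat.one_le_two_pow
  set w := (σf b).lo with hwdef
  have hw : w < LL n m := by omega
  have hrh : (σf b).rh ≤ LL n m - 1 - w := by omega
  have hyn : b * LL n m + w < n := by
    have h1 : b * LL n m + w < (b + 1) * LL n m := by rw [add_mul, one_mul]; omega
    have h2' : (b + 1) * LL n m ≤ BB m * LL n m := Nat.mul_le_mul_right _ (by omega)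
    have h3 := hBL n m hm hnm
    omega
  refine ⟨⟨b * LL n m + w, hyn⟩, ?_, ?_⟩
  · have h1 : b * LL n m + w < (b + 1) * LL n m := by rw [add_mul, one_mul]; omega
    have h2' : (b + 1) * LL n m ≤ BB m * LL n m := Nat.mul_le_mul_right _ (by omega)
    simpa using lt_of_lt_of_le h1 h2'
  · have hacc := erun_sitSum n m Alg s₀ hm hnm b w hb hw
      ⟨b * LL n m + w, hyn⟩ (by simp) (EE n m) (fun _ => bs0) pre
    simp only [show bs0.F = 0 from rfl, show bs0.G = 0 from rfl, Nat.cast_zero,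
      zero_mul, add_zero, ← hσf] at hacc
    rw [hacc]
    have bF : ((σf b).F : ℝ≥0∞) * h2 ^ w ≤ 1 := by
      calc ((σf b).F : ℝ≥0∞) * h2 ^ w ≤ ((2 ^ w : ℕ) : ℝ≥0∞) * h2 ^ w := by
            apply mul_le_mul_left
            have h0 : 1 ≤ 2 ^ w := Nat.one_le_two_pow
            exact_mod_cast Nat.le_of_lt_succ (show (σf b).F < 2 ^ w + 1 by omega)
        _ = 1 := by rw [natcast_two_pow]; exact two_pow_mul_h2_pow w
    have bG : ((σf b).G : ℝ≥0∞) * h2 ^ (LL n m - 1 - w) ≤ 1 := by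
      have hG2 : (σf b).G ≤ 2 ^ (LL n m - 1 - w) := by
        have : (2:ℕ) ^ (σf b).rh ≤ 2 ^ (LL n m - 1 - w) :=
          Nat.pow_le_pow_right (by norm_num) hrh
        have h1' : 1 ≤ (2:ℕ) ^ (σf b).rh := Nat.one_le_two_pow
        omega
      calc ((σf b).G : ℝ≥0∞) * h2 ^ (LL n m - 1 - w)
          ≤ ((2 ^ (LL n m - 1 - w) : ℕ) : ℝ≥0∞) * h2 ^ (LL n m - 1 - w) := by
            apply mul_le_mul_left
            exact_mod_cast hG2
        _ = 1 := by rw [natcast_two_pow]; exact two_pow_mul_h2_pow _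
    calc ((σf b).F : ℝ≥0∞) * h2 ^ w + ((σf b).G : ℝ≥0∞) * h2 ^ (LL n m - 1 - w)
        ≤ 1 + 1 := add_le_add bF bG
      _ = 2 := one_add_one_eq_two


/-! ### the offline solution -/

lemma attack_ne_nil (σ : ℕ → BS) (p : Fin n) : (attack n m σ p).1 ≠ [] := by
  unfold attack
  by_cases hp : (p : ℕ) < BB m * LL n m
  · rw [if_pos hp]
    by_cases hmid : (p : ℕ) % LL n m ≤ midp n m (σ ((p : ℕ) / LL n m))
    · rw [if_pos hmid]
      simp [← List.length_eq_zero_iff]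
    · rw [if_neg hmid]
      simp [← List.length_eq_zero_iff]
  · rw [if_neg hp]
    simp [← List.length_eq_zero_iff]

lemma erun_ne_nil (hm : 2 ≤ m) (hnm : 2 * m ≤ n) (pre : List (Req n)) :
    (erun n m Alg s₀ (EE n m) (fun _ => bs0) pre).1 ≠ [] := by
  have hE := hE1 n m hm hnm
  obtain ⟨e, he⟩ : ∃ e, EE n m = e + 1 := ⟨EE n m - 1, by omega⟩
  rw [he]
  show (attack n m (fun _ => bs0) (pos n Alg s₀ pre)).1 ++ _ ≠ []
  intro hcon
  rw [List.append_eq_nil_iff] at hcon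
  exact attack_ne_nil n m _ _ hcon.1

lemma getLastD_replicate (y d : Fin n) : ∀ (k : ℕ), (List.replicate (k + 1) y).getLastD d = y
  | 0 => rfl
  | k + 1 => by
    rw [List.replicate_succ, List.getLastD_cons]
    exact getLastD_replicate y y k

/-- the refuge point of an epoch -/
def refugePt (hm : 2 ≤ m) (hnm : 2 * m ≤ n) (pre : List (Req n)) : Fin n :=
  Classical.choose (epoch_refuge n m Alg s₀ hm hnm pre)

lemma refugePt_sit (hm : 2 ≤ m) (hnm : 2 * m ≤ n) (pre : List (Req n)) :
    sitSum n (erun n m Alg s₀ (EE n m) (fun _ => bs0) pre).1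
      (refugePt n m Alg s₀ hm hnm pre) ≤ 2 :=
  (Classical.choose_spec (epoch_refuge n m Alg s₀ hm hnm pre)).2

/-- the offline solution -/
def optSS (hm : 2 ≤ m) (hnm : 2 * m ≤ n) : ℕ → List (Req n) → List (Fin n)
  | 0, _ => []
  | N + 1, pre =>
    List.replicate (erun n m Alg s₀ (EE n m) (fun _ => bs0) pre).1.length
        (refugePt n m Alg s₀ hm hnm pre)
      ++ optSS hm hnm N (pre ++ (erun n m Alg s₀ (EE n m) (fun _ => bs0) pre).1)

lemma optSS_length (hm : 2 ≤ m) (hnm : 2 * m ≤ n) :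
    ∀ (N : ℕ) (pre : List (Req n)),
      (optSS n m Alg s₀ hm hnm N pre).length = (frun n m Alg s₀ N pre).length
  | 0, pre => rfl
  | N + 1, pre => by
    show (List.replicate _ _ ++ optSS n m Alg s₀ hm hnm N _).length
      = ((erun n m Alg s₀ (EE n m) (fun _ => bs0) pre).1 ++ frun n m Alg s₀ N _).length
    rw [List.length_append, List.length_append, List.length_replicate,
      optSS_length hm hnm N _]

lemma optSS_cost (hm : 2 ≤ m) (hnm : 2 * m ≤ n) :
    ∀ (N : ℕ) (pre : List (Req n)) (s : Fin n),
      mtsCost (unif n) s (frun n m Alg s₀ N pre) (optSS n m Alg s₀ hm hnm N pre)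
        ≤ ((3 * N : ℕ) : ℝ≥0∞)
  | 0, pre, s => by simp [frun, optSS, mtsCost]
  | N + 1, pre, s => by
    set ρe := (erun n m Alg s₀ (EE n m) (fun _ => bs0) pre).1 with hρe
    set y := refugePt n m Alg s₀ hm hnm pre with hy
    show mtsCost (unif n) s (ρe ++ frun n m Alg s₀ N (pre ++ ρe))
        (List.replicate ρe.length y ++ optSS n m Alg s₀ hm hnm N (pre ++ ρe)) ≤ _
    rw [mtsCost_append n (unif n) ρe (List.replicate ρe.length y)
      List.length_replicate s _ _]
    have hne : ρe ≠ [] := erun_ne_nil n m Alg s₀ hm hnm pre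
    obtain ⟨k, hk⟩ : ∃ k, ρe.length = k + 1 := by
      cases hl : ρe.length with
      | zero => exact absurd (List.length_eq_zero_iff.mp hl) hne
      | succ k => exact ⟨k, rfl⟩
    have hlast : (List.replicate ρe.length y).getLastD s = y := by
      rw [hk]; exact getLastD_replicate n y s k
    rw [hlast]
    have h1 : mtsCost (unif n) s ρe (List.replicate ρe.length y) ≤ 3 := by
      calc mtsCost (unif n) s ρe (List.replicate ρe.length y)
          ≤ unif n s y + sitSum n ρe y := mtsCost_sit n y ρe s
        _ ≤ 1 + 2 := add_le_add (unif_le_one n s y)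
            (refugePt_sit n m Alg s₀ hm hnm pre)
        _ = 3 := by norm_num
    have h2 := optSS_cost hm hnm N (pre ++ ρe) y
    calc mtsCost (unif n) s ρe (List.replicate ρe.length y)
          + mtsCost (unif n) y (frun n m Alg s₀ N (pre ++ ρe))
            (optSS n m Alg s₀ hm hnm N (pre ++ ρe))
        ≤ 3 + ((3 * N : ℕ) : ℝ≥0∞) := add_le_add h1 h2
      _ = ((3 * (N + 1) : ℕ) : ℝ≥0∞) := by push_cast; ring

lemma mtsOpt_le (hm : 2 ≤ m) (hnm : 2 * m ≤ n) (N : ℕ) :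
    mtsOpt (unif n) s₀ (frun n m Alg s₀ N []) ≤ ((3 * N : ℕ) : ℝ≥0∞) := by
  refine le_trans (iInf_le _ ⟨optSS n m Alg s₀ hm hnm N [],
    optSS_length n m Alg s₀ hm hnm N []⟩) ?_
  exact optSS_cost n m Alg s₀ hm hnm N [] s₀


/-! ### the request set -/

def tasksIdx (i : ℕ) : Req n :=
  if i < BB m then fT n m i else if i < 2 * BB m then gT n m (i - BB m) else dT n m

def RR : Finset (Req n) := (Finset.range m).image (tasksIdx n m)

lemma h2_lt_one : h2 < 1 := by
  rw [h2]
  exact ENNReal.inv_lt_one.mpr (by norm_num)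

lemma h2_pow_ne_one (a : ℕ) (ha : 1 ≤ a) : h2 ^ a ≠ 1 := by
  obtain ⟨b, rfl⟩ : ∃ b, a = b + 1 := ⟨a - 1, by omega⟩
  have h1 : h2 ^ (b + 1) ≤ h2 := by
    rw [pow_succ]
    calc h2 ^ b * h2 ≤ 1 * h2 := mul_le_mul_left (h2_pow_le_one b) h2
      _ = h2 := one_mul h2
  exact ne_of_lt (lt_of_le_of_lt h1 h2_lt_one)

lemma pt_lt (hm : 2 ≤ m) (hnm : 2 * m ≤ n) (i : ℕ) (hi : i < BB m) (w : ℕ) (hw : w < LL n m) : i * LL n m + w < n := by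
  have h1 : i * LL n m + w < (i + 1) * LL n m := by rw [add_mul, one_mul]; omega
  have h2' : (i + 1) * LL n m ≤ BB m * LL n m := Nat.mul_le_mul_right _ (by omega)
  have h3 := hBL n m hm hnm
  omega

lemma pt_lt' (hm : 2 ≤ m) (hnm : 2 * m ≤ n) (i : ℕ) (hi : i < BB m) (w : ℕ) (hw : w < LL n m) :
    i * LL n m + w < BB m * LL n m := by
  have h1 : i * LL n m + w < (i + 1) * LL n m := by rw [add_mul, one_mul]; omega
  have h2' : (i + 1) * LL n m ≤ BB m * LL n m := Nat.mul_le_mul_right _ (by omega)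
  omega

lemma fT_ne_fT (hm : 2 ≤ m) (hnm : 2 * m ≤ n) (i j : ℕ) (hi : i < BB m) (hj : j < BB m) (hij : i ≠ j) :
    fT n m i ≠ fT n m j := by
  have hL := hL0 n m hm hnm
  intro h
  have := congrFun h ⟨i * LL n m + 0, pt_lt n m hm hnm i hi 0 hL⟩
  rw [fT_in n m i 0 _ (pt_lt' n m hm hnm i hi 0 hL) (by simp) hL,
    fT_out n m j _ (pt_lt' n m hm hnm i hi 0 hL) hL
      (by rw [show ((⟨i * LL n m + 0, pt_lt n m hm hnm i hi 0 hL⟩ : Fin n) : ℕ)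
            = i * LL n m + 0 from rfl, div_of_block n m i 0 hL hL]; exact hij)] at this
  simp at this

lemma gT_ne_gT (hm : 2 ≤ m) (hnm : 2 * m ≤ n) (i j : ℕ) (hi : i < BB m) (hj : j < BB m) (hij : i ≠ j) :
    gT n m i ≠ gT n m j := by
  have hL := hL0 n m hm hnm
  have hw : LL n m - 1 < LL n m := by omega
  intro h
  have := congrFun h ⟨i * LL n m + (LL n m - 1), pt_lt n m hm hnm i hi _ hw⟩
  rw [gT_in n m i (LL n m - 1) _ (pt_lt' n m hm hnm i hi _ hw) (by simp) hw,
    gT_out n m j _ (pt_lt' n m hm hnm i hi _ hw) hL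
      (by rw [show ((⟨i * LL n m + (LL n m - 1), pt_lt n m hm hnm i hi _ hw⟩ : Fin n) : ℕ)
            = i * LL n m + (LL n m - 1) from rfl, div_of_block n m i _ hL hw]
          exact hij)] at this
  rw [Nat.sub_self] at this
  simp at this

lemma fT_ne_gT (hm : 2 ≤ m) (hnm : 2 * m ≤ n) (i j : ℕ) (hi : i < BB m) (hj : j < BB m) : fT n m i ≠ gT n m j := by
  have hL := hL0 n m hm hnm
  have hL2' := hL2 n m hm hnm
  have hw : LL n m - 1 < LL n m := by omega
  intro h
  have := congrFun h ⟨j * LL n m + (LL n m - 1), pt_lt n m hm hnm j hj _ hw⟩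
  rw [gT_in n m j (LL n m - 1) _ (pt_lt' n m hm hnm j hj _ hw) (by simp) hw,
    Nat.sub_self] at this
  by_cases hij : i = j
  · subst hij
    rw [fT_in n m i (LL n m - 1) _ (pt_lt' n m hm hnm i hi _ hw) (by simp) hw] at this
    exact h2_pow_ne_one (LL n m - 1) (by omega) (by simpa using this)
  · rw [fT_out n m i _ (pt_lt' n m hm hnm j hj _ hw) hL
      (by rw [show ((⟨j * LL n m + (LL n m - 1), pt_lt n m hm hnm j hj _ hw⟩ : Fin n) : ℕ)
            = j * LL n m + (LL n m - 1) from rfl, div_of_block n m j _ hL hw]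
          exact fun hh => hij hh.symm)] at this
    simp at this

lemma fT_ne_dT (hm : 2 ≤ m) (hnm : 2 * m ≤ n) (i : ℕ) (hi : i < BB m) : fT n m i ≠ dT n m := by
  have hL := hL0 n m hm hnm
  intro h
  have := congrFun h ⟨i * LL n m + 0, pt_lt n m hm hnm i hi 0 hL⟩
  rw [fT_in n m i 0 _ (pt_lt' n m hm hnm i hi 0 hL) (by simp) hL] at this
  unfold dT at this
  rw [if_pos (pt_lt' n m hm hnm i hi 0 hL)] at this
  simp at this

lemma gT_ne_dT (hm : 2 ≤ m) (hnm : 2 * m ≤ n) (i : ℕ) (hi : i < BB m) : gT n m i ≠ dT n m := by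
  have hL := hL0 n m hm hnm
  have hw : LL n m - 1 < LL n m := by omega
  intro h
  have := congrFun h ⟨i * LL n m + (LL n m - 1), pt_lt n m hm hnm i hi _ hw⟩
  rw [gT_in n m i (LL n m - 1) _ (pt_lt' n m hm hnm i hi _ hw) (by simp) hw,
    Nat.sub_self] at this
  unfold dT at this
  rw [if_pos (pt_lt' n m hm hnm i hi _ hw)] at this
  simp at this

lemma tasksIdx_injOn (hm : 2 ≤ m) (hnm : 2 * m ≤ n) : Set.InjOn (tasksIdx n m) (Finset.range m) := by
  have hBm : 2 * BB m ≤ m := by simp only [BB]; omega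
  have hBm1 : m ≤ 2 * BB m + 1 := by simp only [BB]; omega
  intro i hi j hj hij
  simp only [Finset.coe_range, Set.mem_Iio] at hi hj
  unfold tasksIdx at hij
  by_cases ci : i < BB m <;> by_cases cj : j < BB m
  · rw [if_pos ci, if_pos cj] at hij
    by_contra hne
    exact fT_ne_fT n m hm hnm i j ci cj hne hij
  · rw [if_pos ci, if_neg cj] at hij
    by_cases cj2 : j < 2 * BB m
    · rw [if_pos cj2] at hij
      exact absurd hij (fT_ne_gT n m hm hnm i (j - BB m) ci (by omega))
    · rw [if_neg cj2] at hij
      exact absurd hij (fT_ne_dT n m hm hnm i ci)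
  · rw [if_neg ci, if_pos cj] at hij
    by_cases ci2 : i < 2 * BB m
    · rw [if_pos ci2] at hij
      exact absurd hij.symm (fT_ne_gT n m hm hnm j (i - BB m) cj (by omega))
    · rw [if_neg ci2] at hij
      exact absurd hij.symm (fT_ne_dT n m hm hnm j cj)
  · rw [if_neg ci, if_neg cj] at hij
    by_cases ci2 : i < 2 * BB m <;> by_cases cj2 : j < 2 * BB m
    · rw [if_pos ci2, if_pos cj2] at hij
      have : i - BB m = j - BB m := by
        by_contra hne
        exact gT_ne_gT n m hm hnm _ _ (by omega) (by omega) hne hij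
      omega
    · rw [if_pos ci2, if_neg cj2] at hij
      exact absurd hij (gT_ne_dT n m hm hnm (i - BB m) (by omega))
    · rw [if_neg ci2, if_pos cj2] at hij
      exact absurd hij.symm (gT_ne_dT n m hm hnm (j - BB m) (by omega))
    · omega

lemma RR_card (hm : 2 ≤ m) (hnm : 2 * m ≤ n) : (RR n m).card = m := by
  unfold RR
  rw [Finset.card_image_of_injOn (tasksIdx_injOn n m hm hnm), Finset.card_range]

lemma fT_mem_RR (hm : 2 ≤ m) (hnm : 2 * m ≤ n) (b : ℕ) (hb : b < BB m) : fT n m b ∈ RR n m := by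
  have hBm : 2 * BB m ≤ m := by simp only [BB]; omega
  unfold RR
  rw [Finset.mem_image]
  exact ⟨b, Finset.mem_range.mpr (by omega), by simp [tasksIdx, if_pos hb]⟩

lemma gT_mem_RR (hm : 2 ≤ m) (hnm : 2 * m ≤ n) (b : ℕ) (hb : b < BB m) : gT n m b ∈ RR n m := by
  have hBm : 2 * BB m ≤ m := by simp only [BB]; omega
  unfold RR
  rw [Finset.mem_image]
  refine ⟨BB m + b, Finset.mem_range.mpr (by omega), ?_⟩
  unfold tasksIdx
  rw [if_neg (by omega), if_pos (by omega), Nat.add_sub_cancel_left]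

lemma attack_mem_RR (hm : 2 ≤ m) (hnm : 2 * m ≤ n) (σ : ℕ → BS) (p : Fin n) :
    ∀ r ∈ (attack n m σ p).1, r ∈ RR n m := by
  have hL := hL0 n m hm hnm
  have hB := hB1 m hm
  intro r hr
  unfold attack at hr
  by_cases hp : (p : ℕ) < BB m * LL n m
  · rw [if_pos hp] at hr
    have hbB : (p : ℕ) / LL n m < BB m := by
      rw [Nat.div_lt_iff_lt_mul hL]; omega
    by_cases hmid : (p : ℕ) % LL n m ≤ midp n m (σ ((p : ℕ) / LL n m))
    · rw [if_pos hmid] at hr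
      rw [List.eq_of_mem_replicate hr]
      exact fT_mem_RR n m hm hnm _ hbB
    · rw [if_neg hmid] at hr
      rw [List.eq_of_mem_replicate hr]
      exact gT_mem_RR n m hm hnm _ hbB
  · rw [if_neg hp] at hr
    rw [List.eq_of_mem_replicate hr]
    exact fT_mem_RR n m hm hnm 0 (by omega)

lemma erun_mem_RR (hm : 2 ≤ m) (hnm : 2 * m ≤ n) :
    ∀ (e : ℕ) (σ : ℕ → BS) (pre : List (Req n)),
      ∀ r ∈ (erun n m Alg s₀ e σ pre).1, r ∈ RR n m
  | 0, σ, pre => by simp [erun]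
  | e + 1, σ, pre => by
    intro r hr
    have : r ∈ (attack n m σ (pos n Alg s₀ pre)).1
        ∨ r ∈ (erun n m Alg s₀ e (attack n m σ (pos n Alg s₀ pre)).2
          (pre ++ (attack n m σ (pos n Alg s₀ pre)).1)).1 := by
      rw [← List.mem_append]
      exact hr
    rcases this with h | h
    · exact attack_mem_RR n m hm hnm σ _ r h
    · exact erun_mem_RR hm hnm e _ _ r h

lemma frun_mem_RR (hm : 2 ≤ m) (hnm : 2 * m ≤ n) :
    ∀ (N : ℕ) (pre : List (Req n)), ∀ r ∈ frun n m Alg s₀ N pre, r ∈ RR n m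
  | 0, pre => by simp [frun]
  | N + 1, pre => by
    intro r hr
    have : r ∈ (erun n m Alg s₀ (EE n m) (fun _ => bs0) pre).1
        ∨ r ∈ frun n m Alg s₀ N
          (pre ++ (erun n m Alg s₀ (EE n m) (fun _ => bs0) pre).1) := by
      rw [← List.mem_append]
      exact hr
    rcases this with h | h
    · exact erun_mem_RR n m Alg s₀ hm hnm _ _ _ r h
    · exact frun_mem_RR hm hnm N _ r h


/-! ### the numeric estimate -/

lemma enm_ge_one (hm : 2 ≤ m) (hnm : 2 * m ≤ n) :
    (1 : ℝ) ≤ Real.exp 1 * n / m := by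
  have hm0' : (0:ℝ) < m := by exact_mod_cast hm0 m hm
  have hmn : (2:ℝ) * m ≤ n := by exact_mod_cast hnm
  have he : (1:ℝ) ≤ Real.exp 1 := Real.one_le_exp (by norm_num)
  rw [le_div_iff₀ hm0']
  nlinarith

lemma key_log (hm : 2 ≤ m) (hnm : 2 * m ≤ n) :
    (m : ℝ) * Real.log (Real.exp 1 * n / m) ≤ 12 * (EE n m : ℝ) := by
  have hk := hk1 n m hm hnm
  have hB := hB1 m hm
  have hm0' : (0:ℝ) < m := by exact_mod_cast hm0 m hm
  have hn0 : (0:ℝ) < n := by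
    have : (4:ℕ) ≤ n := by omega
    exact_mod_cast (by omega : 0 < n)
  have hnat : n < m * 2 ^ (kk n m + 2) := by
    have h1 : n / m < 2 ^ (kk n m + 1) := by
      have := Nat.lt_pow_succ_log_self (by norm_num : 1 < 2) (n / m)
      simpa [kk] using this
    have h2 : n < m * (n / m) + m := by
      have hd := Nat.div_add_mod n m
      have hmod := Nat.mod_lt n (show 0 < m by omega)
      omega
    have h4 : m * (n / m + 1) ≤ m * 2 ^ (kk n m + 1) :=
      Nat.mul_le_mul_left _ (by omega)
    have h5 : m * 2 ^ (kk n m + 1) ≤ m * 2 ^ (kk n m + 2) :=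
      Nat.mul_le_mul_left _ (Nat.pow_le_pow_right (by norm_num) (by omega))
    have h6 : m * (n / m + 1) = m * (n / m) + m := by ring
    omega
  have hlog2 : Real.log 2 < 0.6931471808 := Real.log_two_lt_d9
  have hlog2' : (0:ℝ) ≤ Real.log 2 := Real.log_nonneg one_le_two
  have hloge : Real.log (Real.exp 1 * n / m) = 1 + (Real.log n - Real.log m) := by
    rw [Real.log_div (by positivity) (ne_of_gt hm0'),
      Real.log_mul (Real.exp_ne_zero 1) (ne_of_gt hn0), Real.log_exp]
    ring
  have hlognm : Real.log n - Real.log m ≤ (kk n m + 2) * Real.log 2 := by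
    have hcast : (n:ℝ) ≤ (m : ℝ) * 2 ^ (kk n m + 2) := by exact_mod_cast hnat.le
    have hlog : Real.log n ≤ Real.log ((m : ℝ) * 2 ^ (kk n m + 2)) :=
      Real.log_le_log hn0 hcast
    rw [Real.log_mul (ne_of_gt hm0') (by positivity), Real.log_pow] at hlog
    push_cast at hlog ⊢
    linarith
  have hkR : (1:ℝ) ≤ (kk n m : ℝ) := by exact_mod_cast hk
  have hk2 : Real.log (Real.exp 1 * n / m) ≤ 2 * ((kk n m : ℝ) + 1) := by
    rw [hloge]
    nlinarith
  have hm3B : (m:ℝ) ≤ 3 * (BB m : ℝ) := by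
    exact_mod_cast (show m ≤ 3 * BB m by simp only [BB]; omega)
  have hBE : (BB m : ℝ) * ((kk n m : ℝ) + 1) ≤ 2 * (EE n m : ℝ) := by
    have h2' : 2 ≤ BB m * (kk n m + 1) := by nlinarith
    have h3' : BB m * (kk n m + 1) ≤ 2 * EE n m := by
      simp only [EE]; omega
    calc (BB m : ℝ) * ((kk n m : ℝ) + 1)
        = ((BB m * (kk n m + 1) : ℕ) : ℝ) := by push_cast; ring
      _ ≤ ((2 * EE n m : ℕ) : ℝ) := by exact_mod_cast h3'
      _ = 2 * (EE n m : ℝ) := by push_cast; ring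
  have hlogpos : 0 ≤ Real.log (Real.exp 1 * n / m) :=
    Real.log_nonneg (enm_ge_one n m hm hnm)
  have hBpos : (0:ℝ) ≤ (BB m : ℝ) := by positivity
  calc (m : ℝ) * Real.log (Real.exp 1 * n / m)
      ≤ (m : ℝ) * (2 * ((kk n m : ℝ) + 1)) :=
        mul_le_mul_of_nonneg_left hk2 (by positivity)
    _ ≤ (3 * (BB m : ℝ)) * (2 * ((kk n m : ℝ) + 1)) :=
        mul_le_mul_of_nonneg_right hm3B (by nlinarith)
    _ = 6 * ((BB m : ℝ) * ((kk n m : ℝ) + 1)) := by ring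
    _ ≤ 6 * (2 * (EE n m : ℝ)) := by nlinarith
    _ = 12 * (EE n m : ℝ) := by ring

end

end S2

/-- There is an absolute constant `K > 0` such that for every `n` and every `m`
with `2 ≤ m ≤ n/2`, on the `n`-point uniform metric space there exists a set `R` of `m`
requests such that no deterministic online algorithm is `c`-competitive on `R` for any
`c < K·m·log(e·n/m)`. -/
theorem stmt2 :
    ∃ K : ℝ, 0 < K ∧
      ∀ (n m : ℕ), 2 ≤ m → 2 * m ≤ n →
        ∃ R : Finset (Req n), R.card = m ∧
          ∀ (s₀ : Fin n) (c : ℝ≥0∞),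
            c < ENNReal.ofReal (K * (m : ℝ) * Real.log (Real.exp 1 * (n : ℝ) / (m : ℝ))) →
              ∀ A : List (Req n) → Fin n, ¬ MtsCompetitive (unif n) s₀ ↑R c A := by
  classical
  refine ⟨1/100, by norm_num, ?_⟩
  intro n m hm hnm
  refine ⟨S2.RR n m, S2.RR_card n m hm hnm, ?_⟩
  intro s₀ c hc Alg hcomp
  obtain ⟨a, ha, hbound⟩ := hcomp
  have hlogpos : 0 ≤ (1/100 : ℝ) * (m : ℝ) * Real.log (Real.exp 1 * n / m) := by
    have := Real.log_nonneg (S2.enm_ge_one n m hm hnm)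
    positivity
  have hc6 : c * 6 ≤ ((S2.EE n m : ℕ) : ℝ≥0∞) := by
    have hX : (1/100 : ℝ) * (m : ℝ) * Real.log (Real.exp 1 * n / m) * 6
        ≤ (S2.EE n m : ℝ) := by
      have := S2.key_log n m hm hnm
      nlinarith
    calc c * 6
        ≤ ENNReal.ofReal ((1/100 : ℝ) * (m : ℝ)
            * Real.log (Real.exp 1 * n / m)) * 6 := mul_le_mul_left hc.le 6
      _ = ENNReal.ofReal ((1/100 : ℝ) * (m : ℝ)
            * Real.log (Real.exp 1 * n / m) * 6) := by
          rw [ENNReal.ofReal_mul hlogpos]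
          norm_num
      _ ≤ ENNReal.ofReal ((S2.EE n m : ℝ)) := ENNReal.ofReal_le_ofReal hX
      _ = ((S2.EE n m : ℕ) : ℝ≥0∞) := ENNReal.ofReal_natCast _
  obtain ⟨j, hj⟩ := ENNReal.exists_nat_gt ha
  set N := 2 * j + 2 with hN
  set ρ := S2.frun n m Alg s₀ N [] with hρ
  have hmem : ∀ r ∈ ρ, r ∈ (↑(S2.RR n m) : Set (Req n)) := fun r hr =>
    Finset.mem_coe.mpr (S2.frun_mem_RR n m Alg s₀ hm hnm N [] r hr)
  have hlow : ((N * S2.EE n m : ℕ) : ℝ≥0∞) ≤ mtsAlgCost (unif n) s₀ Alg ρ :=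
    le_trans (S2.frun_lowCost n m Alg s₀ hm hnm N [])
      (S2.mtsAlgCost_ge_lowCost n Alg s₀ ρ)
  have hopt := S2.mtsOpt_le n m Alg s₀ hm hnm N
  have hub := hbound ρ hmem
  set Y := ((N * S2.EE n m : ℕ) : ℝ≥0∞) with hY
  set P := c * ((3 * N : ℕ) : ℝ≥0∞) with hP
  have hcP : c * mtsOpt (unif n) s₀ ρ ≤ P := mul_le_mul_right hopt c
  have hEE1 : 1 ≤ S2.EE n m := S2.hE1 n m hm hnm
  have hYtop : Y ≠ ⊤ := ENNReal.natCast_ne_top _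
  have h2P : 2 * P ≤ Y := by
    have e1 : 2 * P = (c * 6) * ((N : ℕ) : ℝ≥0∞) := by
      rw [hP]
      push_cast
      ring
    have e2 : (c * 6) * ((N : ℕ) : ℝ≥0∞)
        ≤ ((S2.EE n m : ℕ) : ℝ≥0∞) * ((N : ℕ) : ℝ≥0∞) := mul_le_mul_left hc6 _
    have e3 : ((S2.EE n m : ℕ) : ℝ≥0∞) * ((N : ℕ) : ℝ≥0∞) = Y := by
      rw [hY]
      push_cast
      ring
    rw [e1, ← e3]
    exact e2
  have hPtop : P ≠ ⊤ := by
    intro htop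
    have : (⊤ : ℝ≥0∞) ≤ Y := by
      calc (⊤ : ℝ≥0∞) = 2 * ⊤ := by simp
        _ = 2 * P := by rw [htop]
        _ ≤ Y := h2P
    exact hYtop (top_le_iff.mp this)
  have hjY : 2 * ((j : ℕ) : ℝ≥0∞) ≤ Y := by
    have hnat : 2 * j ≤ N * S2.EE n m := by
      have hNE : N ≤ N * S2.EE n m := Nat.le_mul_of_pos_right _ (by omega)
      omega
    calc 2 * ((j : ℕ) : ℝ≥0∞) = ((2 * j : ℕ) : ℝ≥0∞) := by push_cast; ring
      _ ≤ ((N * S2.EE n m : ℕ) : ℝ≥0∞) := by exact_mod_cast hnat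
  have hPY : P + ((j : ℕ) : ℝ≥0∞) ≤ Y := by
    have h2 : 2 * (P + ((j : ℕ) : ℝ≥0∞)) ≤ 2 * Y := by
      calc 2 * (P + ((j : ℕ) : ℝ≥0∞)) = 2 * P + 2 * ((j : ℕ) : ℝ≥0∞) := by ring
        _ ≤ Y + Y := add_le_add h2P hjY
        _ = 2 * Y := (two_mul Y).symm
    exact (ENNReal.mul_le_mul_iff_right (by norm_num) (by norm_num)).mp h2
  have hfinal : c * mtsOpt (unif n) s₀ ρ + a < Y :=
    calc c * mtsOpt (unif n) s₀ ρ + a ≤ P + a := add_le_add_left hcP a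
      _ < P + ((j : ℕ) : ℝ≥0∞) := ENNReal.add_lt_add_left hPtop hj
      _ ≤ Y := hPY
  exact lt_irrefl Y (lt_of_le_of_lt (hlow.trans hub) hfinal)
end

section
/- There is an absolute constant K > 0 such that for every n ≥ 2, on the n-point uniform metric space there exists a set R of just 2 requests such that no randomized online algorithm is c-competitive on R for any c < K·log n; i.e., for every probability distribution D over deterministic online algorithms and every additive constant a, there is a finite request sequence ρ over R with expected online cost E_{A∼D}[cost_A(ρ)] > c·z*(ρ) + a. -/
open scoped ENNReal

namespace Stmt3Aux

variable {n : ℕ}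

lemma unif_self (n : ℕ) (x : Fin n) : unif n x x = 0 := if_pos rfl

lemma unif_le_one (n : ℕ) (x y : Fin n) : unif n x y ≤ 1 := by
  unfold unif; split <;> simp

lemma unif_ne (n : ℕ) {x y : Fin n} (h : x ≠ y) : unif n x y = 1 := if_neg h

lemma mtsCost_nil (d : Fin n → Fin n → ℝ≥0∞) (s₀ : Fin n) (ss : List (Fin n)) :
    mtsCost d s₀ [] ss = 0 := by cases ss <;> rfl

lemma mtsCost_cons (d : Fin n → Fin n → ℝ≥0∞) (s₀ : Fin n) (r : Req n) (ρ : List (Req n))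
    (s : Fin n) (ss : List (Fin n)) :
    mtsCost d s₀ (r :: ρ) (s :: ss) = d s₀ s + r s + mtsCost d s ρ ss := rfl

lemma mtsCost_append (d : Fin n → Fin n → ℝ≥0∞) :
    ∀ (ρ₁ : List (Req n)) (ss₁ : List (Fin n)), ss₁.length = ρ₁.length →
    ∀ (s₀ : Fin n) (ρ₂ : List (Req n)) (ss₂ : List (Fin n)),
    mtsCost d s₀ (ρ₁ ++ ρ₂) (ss₁ ++ ss₂) =
      mtsCost d s₀ ρ₁ ss₁ + mtsCost d (ss₁.getLastD s₀) ρ₂ ss₂ := by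
  intro ρ₁
  induction ρ₁ with
  | nil =>
    intro ss₁ h s₀ ρ₂ ss₂
    have : ss₁ = [] := List.length_eq_zero_iff.mp h
    subst this
    simp [mtsCost_nil]
  | cons r ρ ih =>
    intro ss₁ h s₀ ρ₂ ss₂
    match ss₁ with
    | s :: ss =>
      simp only [List.cons_append, mtsCost_cons, List.getLastD_cons]
      rw [ih ss (by simpa using h) s ρ₂ ss₂]
      ring

/-- the position of algorithm `A` after serving `pref`. -/
def fpos (A : List (Req n) → Fin n) (s₀ : Fin n) (pref : List (Req n)) : Fin n :=
  if pref.isEmpty then s₀ else A pref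

/-- the states `A` uses on the segment `τ` given that `pref` was served before. -/
def sufStates (A : List (Req n) → Fin n) (pref τ : List (Req n)) : List (Fin n) :=
  (List.range τ.length).map fun t => A (pref ++ τ.take (t + 1))

lemma sufStates_length (A : List (Req n) → Fin n) (pref τ : List (Req n)) :
    (sufStates A pref τ).length = τ.length := by simp [sufStates]

/-- the cost `A` incurs on the segment `τ` given that `pref` was served before. -/
noncomputable def sufCost (A : List (Req n) → Fin n) (s₀ : Fin n) (pref τ : List (Req n)) :
    ℝ≥0∞ :=
  mtsCost (unif n) (fpos A s₀ pref) τ (sufStates A pref τ)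

lemma sufStates_nil_pref (A : List (Req n) → Fin n) (τ : List (Req n)) :
    sufStates A [] τ = mtsStates A τ := by
  simp [sufStates, mtsStates]

lemma sufCost_nil_pref (A : List (Req n) → Fin n) (s₀ : Fin n) (τ : List (Req n)) :
    sufCost A s₀ [] τ = mtsAlgCost (unif n) s₀ A τ := by
  rw [sufCost, sufStates_nil_pref, fpos, mtsAlgCost]; rfl

lemma sufCost_nil (A : List (Req n) → Fin n) (s₀ : Fin n) (pref : List (Req n)) :
    sufCost A s₀ pref [] = 0 := by
  simp [sufCost, mtsCost_nil]

lemma sufStates_append (A : List (Req n) → Fin n) (pref τ₁ τ₂ : List (Req n)) :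
    sufStates A pref (τ₁ ++ τ₂) = sufStates A pref τ₁ ++ sufStates A (pref ++ τ₁) τ₂ := by
  unfold sufStates
  rw [List.length_append, List.range_add, List.map_append, List.map_map]
  congr 1
  · apply List.map_congr_left
    intro t ht
    rw [List.mem_range] at ht
    rw [List.take_append_of_le_length (by omega)]
  · apply List.map_congr_left
    intro t ht
    simp only [Function.comp_apply]
    have : τ₁.length + t + 1 = τ₁.length + (t + 1) := by omega
    rw [this, List.take_append, List.append_assoc, List.take_of_length_le (by omega), Nat.add_sub_cancel_left]

lemma sufStates_getLastD (A : List (Req n) → Fin n) (pref τ : List (Req n)) (h : τ ≠ [])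
    (e : Fin n) : (sufStates A pref τ).getLastD e = A (pref ++ τ) := by
  obtain ⟨k, hk⟩ : ∃ k, τ.length = k + 1 :=
    ⟨τ.length - 1, by have := List.length_pos_iff.2 h; omega⟩
  unfold sufStates
  rw [hk, List.range_succ, List.map_append]
  simp only [List.map_cons, List.map_nil, List.getLastD_concat]
  rw [show k + 1 = τ.length from hk.symm, List.take_length]

lemma fpos_append_ne (A : List (Req n) → Fin n) (s₀ : Fin n) (pref τ : List (Req n))
    (h : τ ≠ []) : fpos A s₀ (pref ++ τ) = A (pref ++ τ) := by
  rw [fpos, if_neg]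
  simp [h]

lemma sufCost_append (A : List (Req n) → Fin n) (s₀ : Fin n) (pref τ₁ τ₂ : List (Req n)) :
    sufCost A s₀ pref (τ₁ ++ τ₂) = sufCost A s₀ pref τ₁ + sufCost A s₀ (pref ++ τ₁) τ₂ := by
  rcases eq_or_ne τ₁ [] with rfl | h1
  · simp [sufCost_nil]
  rw [sufCost, sufStates_append,
    mtsCost_append (unif n) τ₁ (sufStates A pref τ₁) (sufStates_length A pref τ₁) _ τ₂ _,
    sufStates_getLastD A pref τ₁ h1, ← fpos_append_ne A s₀ pref τ₁ h1]
  rfl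

lemma mtsAlgCost_append (A : List (Req n) → Fin n) (s₀ : Fin n) (ρ τ : List (Req n)) :
    mtsAlgCost (unif n) s₀ A (ρ ++ τ) = mtsAlgCost (unif n) s₀ A ρ + sufCost A s₀ ρ τ := by
  rw [← sufCost_nil_pref, ← sufCost_nil_pref, sufCost_append]
  simp

/-- cost of serving a constant block while sitting at `σ`. -/
lemma mtsCost_replicate_const_le (e σ : Fin n) (r : Req n) :
    ∀ M : ℕ, mtsCost (unif n) e (List.replicate M r) (List.replicate M σ) ≤
      unif n e σ + M * r σ := by
  intro M
  induction M generalizing e with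
  | zero => simp [mtsCost_nil]
  | succ M ih =>
    rw [List.replicate_succ, List.replicate_succ, mtsCost_cons]
    calc unif n e σ + r σ + mtsCost (unif n) σ (List.replicate M r) (List.replicate M σ)
        ≤ unif n e σ + r σ + (unif n σ σ + M * r σ) := by gcongr; exact ih σ
      _ = unif n e σ + (M + 1 : ℕ) * r σ := by
          rw [unif_self]; push_cast; ring

/-- lower bound for the cost of any state path over a penalty block. -/
lemma block_lb (r : Req n) (P : Fin n → Prop) (v : ℝ≥0∞) (hv : ∀ s, P s → v ≤ r s) :
    ∀ (M : ℕ) (e : Fin n) (ss : List (Fin n)), ss.length = M → P e →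
      min 1 (M * v) ≤ mtsCost (unif n) e (List.replicate M r) ss := by
  intro M
  induction M with
  | zero => intro e ss _ _; simp
  | succ M ih =>
    intro e ss hlen hP
    match ss with
    | s :: ss =>
      rw [List.replicate_succ, mtsCost_cons]
      by_cases hPs : P s
      · have h1 : v + min 1 (M * v) ≤ r s + mtsCost (unif n) s (List.replicate M r) ss := by
          gcongr
          · exact hv s hPs
          · exact ih s ss (by simpa using hlen) hPs
        have h2 : min 1 ((M + 1 : ℕ) * v) ≤ v + min 1 (M * v) := by
          rcases le_total 1 ((M : ℝ≥0∞) * v) with h | h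
          · rw [min_eq_left h]
            exact le_trans (min_le_left _ _) (le_add_self)
          · rw [min_eq_right h]
            refine le_trans (min_le_right _ _) ?_
            push_cast; rw [add_mul, one_mul, add_comm]
          
        calc min 1 ((M + 1 : ℕ) * v) ≤ v + min 1 (M * v) := h2
          _ ≤ r s + mtsCost (unif n) s (List.replicate M r) ss := h1
          _ ≤ unif n e s + r s + mtsCost (unif n) s (List.replicate M r) ss := by
              rw [add_assoc]; exact le_add_self
      · have hes : e ≠ s := fun h => hPs (h ▸ hP)
        rw [unif_ne n hes]
        calc min 1 ((M + 1 : ℕ) * v) ≤ 1 := min_le_left _ _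
          _ ≤ 1 + r s + mtsCost (unif n) s (List.replicate M r) ss := by
              rw [add_assoc]; exact le_self_add

variable {n : ℕ}

lemma natcast_ne_zero (hn : 2 ≤ n) : (n : ℝ≥0∞) ≠ 0 := by
  simp; omega

lemma natcast_ne_top (n : ℕ) : (n : ℝ≥0∞) ≠ ⊤ := ENNReal.natCast_ne_top n

lemma one_le_natcast (hn : 2 ≤ n) : (1 : ℝ≥0∞) ≤ n := by
  exact_mod_cast Nat.one_le_cast.mpr (by omega)

lemma inv_natcast_le_one (hn : 2 ≤ n) : (n : ℝ≥0∞)⁻¹ ≤ 1 :=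
  ENNReal.inv_le_one.mpr (one_le_natcast hn)

/-- `n^a * n⁻ᵇ = 1` when `a = b`. -/
lemma pow_mul_inv_pow_eq_one (hn : 2 ≤ n) (a : ℕ) :
    (n : ℝ≥0∞) ^ a * ((n : ℝ≥0∞)⁻¹) ^ a = 1 := by
  rw [← ENNReal.inv_pow]
  exact ENNReal.mul_inv_cancel (pow_ne_zero a (natcast_ne_zero hn))
    (ENNReal.pow_ne_top (natcast_ne_top n))

/-- antitonicity of powers of `n⁻¹`. -/
lemma inv_pow_anti (hn : 2 ≤ n) {a b : ℕ} (hab : a ≤ b) :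
    ((n : ℝ≥0∞)⁻¹) ^ b ≤ ((n : ℝ≥0∞)⁻¹) ^ a := by
  obtain ⟨c, rfl⟩ := Nat.exists_eq_add_of_le hab
  rw [pow_add]
  calc ((n:ℝ≥0∞)⁻¹)^a * ((n:ℝ≥0∞)⁻¹)^c ≤ ((n:ℝ≥0∞)⁻¹)^a * 1 := by
        gcongr
        exact pow_le_one' (inv_natcast_le_one hn) c
    _ = ((n:ℝ≥0∞)⁻¹)^a := mul_one _

/-- `n^a * n⁻ᵇ ≤ n⁻¹` when `a < b`. -/
lemma pow_mul_inv_pow_le (hn : 2 ≤ n) {a b : ℕ} (hab : a < b) :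
    (n : ℝ≥0∞) ^ a * ((n : ℝ≥0∞)⁻¹) ^ b ≤ (n : ℝ≥0∞)⁻¹ := by
  obtain ⟨c, rfl⟩ : ∃ c, b = a + (c + 1) := ⟨b - a - 1, by omega⟩
  rw [pow_add]
  calc (n:ℝ≥0∞)^a * (((n:ℝ≥0∞)⁻¹)^a * ((n:ℝ≥0∞)⁻¹)^(c+1))
      = ((n:ℝ≥0∞)^a * ((n:ℝ≥0∞)⁻¹)^a) * ((n:ℝ≥0∞)⁻¹)^(c+1) := by ring
    _ = ((n:ℝ≥0∞)⁻¹)^(c+1) := by rw [pow_mul_inv_pow_eq_one hn, one_mul]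
    _ ≤ ((n:ℝ≥0∞)⁻¹)^1 := inv_pow_anti hn (by omega)
    _ = (n:ℝ≥0∞)⁻¹ := pow_one _



/-- request penalizing small states. -/
noncomputable def reqL (n : ℕ) : Req n := fun i => ((n : ℝ≥0∞))⁻¹ ^ (i : ℕ)

/-- request penalizing large states. -/
noncomputable def reqR (n : ℕ) : Req n := fun i => ((n : ℝ≥0∞))⁻¹ ^ (n - 1 - (i : ℕ))

variable (B : MtsRandAlg n) (s₀ : Fin n)

/-- total probability mass of algorithms currently below `h`. -/
noncomputable def massBelow (pref : List (Req n)) (h : ℕ) : ℝ≥0∞ :=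
  ∑ i, if ((fpos (B.alg i) s₀ pref : Fin n) : ℕ) < h then B.p i else 0

noncomputable def massAbove (pref : List (Req n)) (h : ℕ) : ℝ≥0∞ :=
  ∑ i, if ((fpos (B.alg i) s₀ pref : Fin n) : ℕ) < h then 0 else B.p i

lemma massBelow_add_massAbove (pref : List (Req n)) (h : ℕ) :
    massBelow B s₀ pref h + massAbove B s₀ pref h = 1 := by
  rw [massBelow, massAbove, ← Finset.sum_add_distrib, ← B.sum_p]
  apply Finset.sum_congr rfl
  intro i _
  by_cases hi : ((fpos (B.alg i) s₀ pref : Fin n) : ℕ) < h <;> simp [hi]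

lemma massAbove_ge (pref : List (Req n)) (h : ℕ)
    (hm : ¬ (2⁻¹ : ℝ≥0∞) ≤ massBelow B s₀ pref h) : (2⁻¹ : ℝ≥0∞) ≤ massAbove B s₀ pref h := by
  by_contra hc
  rw [not_le] at hm hc
  have := ENNReal.add_lt_add hm hc
  rw [massBelow_add_massAbove, ENNReal.inv_two_add_inv_two] at this
  exact lt_irrefl _ this

open scoped Classical in
/-- the halving adversary: given served prefix `pref` and current alive interval `[l, r)`,
produce the request blocks, the survivor, and the number of blocks. -/
noncomputable def halve : ℕ → List (Req n) → ℕ → ℕ → List (Req n) × ℕ × ℕ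
  | 0, _, l, _ => ([], l, 0)
  | (fuel+1), pref, l, r =>
    if r ≤ l + 1 then ([], l, 0)
    else if 2⁻¹ ≤ massBelow B s₀ pref ((l + r) / 2) then
      (List.replicate (n ^ ((l + r) / 2 - 1)) (reqL n) ++
        (halve fuel (pref ++ List.replicate (n ^ ((l + r) / 2 - 1)) (reqL n)) ((l + r) / 2) r).1,
       (halve fuel (pref ++ List.replicate (n ^ ((l + r) / 2 - 1)) (reqL n)) ((l + r) / 2) r).2.1,
       (halve fuel (pref ++ List.replicate (n ^ ((l + r) / 2 - 1)) (reqL n)) ((l + r) / 2) r).2.2 + 1)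
    else
      (List.replicate (n ^ (n - 1 - (l + r) / 2)) (reqR n) ++
        (halve fuel (pref ++ List.replicate (n ^ (n - 1 - (l + r) / 2)) (reqR n)) l ((l + r) / 2)).1,
       (halve fuel (pref ++ List.replicate (n ^ (n - 1 - (l + r) / 2)) (reqR n)) l ((l + r) / 2)).2.1,
       (halve fuel (pref ++ List.replicate (n ^ (n - 1 - (l + r) / 2)) (reqR n)) l ((l + r) / 2)).2.2 + 1)

lemma halve_mem : ∀ (fuel : ℕ) (pref : List (Req n)) (l r : ℕ),
    ∀ x ∈ (halve B s₀ fuel pref l r).1, x = reqL n ∨ x = reqR n := by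
  intro fuel
  induction fuel with
  | zero => intro pref l r x hx; simp [halve] at hx
  | succ f ih =>
    intro pref l r x hx
    rw [halve] at hx
    split_ifs at hx with h1 h2
    · simp at hx
    · rcases List.mem_append.1 hx with h | h
      · exact Or.inl (List.eq_of_mem_replicate h)
      · exact ih _ _ _ x h
    · rcases List.mem_append.1 hx with h | h
      · exact Or.inr (List.eq_of_mem_replicate h)
      · exact ih _ _ _ x h

lemma halve_surv : ∀ (fuel : ℕ) (pref : List (Req n)) (l r : ℕ), l < r →
    l ≤ (halve B s₀ fuel pref l r).2.1 ∧ (halve B s₀ fuel pref l r).2.1 < r := by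
  intro fuel
  induction fuel with
  | zero => intro pref l r hlr; simp [halve]; omega
  | succ f ih =>
    intro pref l r hlr
    rw [halve]
    split_ifs with h1 h2
    · simp; omega
    · have := ih (pref ++ List.replicate (n ^ ((l + r) / 2 - 1)) (reqL n)) ((l + r) / 2) r
        (by omega)
      simp only
      omega
    · have := ih (pref ++ List.replicate (n ^ (n - 1 - (l + r) / 2)) (reqR n)) l ((l + r) / 2)
        (by omega)
      simp only
      omega

lemma halve_cnt_le : ∀ (fuel : ℕ) (pref : List (Req n)) (l r : ℕ),
    (halve B s₀ fuel pref l r).2.2 ≤ fuel := by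
  intro fuel
  induction fuel with
  | zero => intro pref l r; simp [halve]
  | succ f ih =>
    intro pref l r
    rw [halve]
    split_ifs with h1 h2
    · simp
    · simp only; exact Nat.succ_le_succ (ih _ _ _)
    · simp only; exact Nat.succ_le_succ (ih _ _ _)

lemma halve_cnt_ge : ∀ (fuel : ℕ) (pref : List (Req n)) (l r : ℕ), r - l ≤ fuel + 1 →
    Nat.log 2 (r - l) ≤ (halve B s₀ fuel pref l r).2.2 := by
  intro fuel
  induction fuel with
  | zero =>
    intro pref l r h
    rw [halve]
    have : r - l < 2 := by omega
    simp only
    calc Nat.log 2 (r - l) ≤ Nat.log 2 1 := Nat.log_mono_right (by omega)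
      _ = 0 := by simp
  | succ f ih =>
    intro pref l r h
    rw [halve]
    split_ifs with h1 h2
    · simp only
      calc Nat.log 2 (r - l) ≤ Nat.log 2 1 := Nat.log_mono_right (by omega)
        _ = 0 := by simp
    · simp only
      have hrec := ih (pref ++ List.replicate (n ^ ((l + r) / 2 - 1)) (reqL n)) ((l + r) / 2) r
        (by omega)
      have hmono : Nat.log 2 ((r - l) / 2) ≤ Nat.log 2 (r - (l + r) / 2) :=
        Nat.log_mono_right (by omega)
      have hdiv : Nat.log 2 ((r - l) / 2) = Nat.log 2 (r - l) - 1 := Nat.log_div_base 2 (r - l)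
      have hpos : 0 < Nat.log 2 (r - l) := Nat.log_pos (by omega) (by omega)
      omega
    · simp only
      have hrec := ih (pref ++ List.replicate (n ^ (n - 1 - (l + r) / 2)) (reqR n)) l ((l + r) / 2)
        (by omega)
      have hmono : Nat.log 2 ((r - l) / 2) ≤ Nat.log 2 ((l + r) / 2 - l) :=
        Nat.log_mono_right (by omega)
      have hdiv : Nat.log 2 ((r - l) / 2) = Nat.log 2 (r - l) - 1 := Nat.log_div_base 2 (r - l)
      have hpos : 0 < Nat.log 2 (r - l) := Nat.log_pos (by omega) (by omega)
      omega

lemma getLastD_replicate {α : Type*} (σ e : α) : ∀ M, 0 < M → (List.replicate M σ).getLastD e = σ := by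
  intro M
  induction M generalizing e with
  | zero => omega
  | succ m ih =>
    intro _
    rw [List.replicate_succ, List.getLastD_cons]
    rcases Nat.eq_zero_or_pos m with rfl | hm
    · simp
    · exact ih σ hm

lemma halve_opt (hn : 2 ≤ n) : ∀ (fuel : ℕ) (pref : List (Req n)) (l r : ℕ), l < r → r ≤ n →
    ∀ σf : Fin n, (σf : ℕ) = (halve B s₀ fuel pref l r).2.1 →
    ∀ e : Fin n,
      mtsCost (unif n) e (halve B s₀ fuel pref l r).1
        (List.replicate (halve B s₀ fuel pref l r).1.length σf)
      ≤ unif n e σf + (halve B s₀ fuel pref l r).2.2 * (n : ℝ≥0∞)⁻¹ := by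
  intro fuel
  induction fuel with
  | zero =>
    intro pref l r _ _ σf _ e
    simp [halve, mtsCost_nil]
  | succ f ih =>
    intro pref l r hlr hrn σf hσ e
    rw [halve] at hσ ⊢
    split_ifs at hσ ⊢ with h1 h2
    · simp [mtsCost_nil]
    · -- left block
      simp only at hσ ⊢
      set h := (l + r) / 2 with hh
      set M := n ^ (h - 1) with hM
      set pref' := pref ++ List.replicate M (reqL n) with hpref'
      set res := halve B s₀ f pref' h r with hres
      have hsurv := halve_surv B s₀ f pref' h r (by omega)
      rw [← hres] at hsurv
      have hlen : (List.replicate M (reqL n) ++ res.1).length = M + res.1.length := by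
        simp
      rw [hlen, List.replicate_add,
        mtsCost_append (unif n) (List.replicate M (reqL n)) (List.replicate M σf)
          (by simp) e res.1 _]
      have hMpos : 0 < M := pow_pos (by omega) _
      rw [getLastD_replicate σf e M hMpos]
      have hb1 : mtsCost (unif n) e (List.replicate M (reqL n)) (List.replicate M σf)
          ≤ unif n e σf + (n : ℝ≥0∞)⁻¹ := by
        refine le_trans (mtsCost_replicate_const_le e σf (reqL n) M) ?_
        gcongr
        have : reqL n σf = ((n : ℝ≥0∞)⁻¹) ^ (σf : ℕ) := rfl
        rw [this, hM, Nat.cast_pow]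
        exact pow_mul_inv_pow_le hn (by omega)
      have hb2 : mtsCost (unif n) σf res.1 (List.replicate res.1.length σf)
          ≤ res.2.2 * (n : ℝ≥0∞)⁻¹ := by
        have := ih pref' h r (by omega) hrn σf hσ σf
        rwa [unif_self, zero_add] at this
      calc mtsCost (unif n) e (List.replicate M (reqL n)) (List.replicate M σf) +
            mtsCost (unif n) σf res.1 (List.replicate res.1.length σf)
          ≤ (unif n e σf + (n : ℝ≥0∞)⁻¹) + res.2.2 * (n : ℝ≥0∞)⁻¹ := add_le_add hb1 hb2
        _ = unif n e σf + ((res.2.2 + 1 : ℕ) : ℝ≥0∞) * (n : ℝ≥0∞)⁻¹ := by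
            push_cast; ring
    · -- right block
      simp only at hσ ⊢
      set h := (l + r) / 2 with hh
      set M := n ^ (n - 1 - h) with hM
      set pref' := pref ++ List.replicate M (reqR n) with hpref'
      set res := halve B s₀ f pref' l h with hres
      have hsurv := halve_surv B s₀ f pref' l h (by omega)
      rw [← hres] at hsurv
      have hlen : (List.replicate M (reqR n) ++ res.1).length = M + res.1.length := by
        simp
      rw [hlen, List.replicate_add,
        mtsCost_append (unif n) (List.replicate M (reqR n)) (List.replicate M σf)
          (by simp) e res.1 _]
      have hMpos : 0 < M := pow_pos (by omega) _
      rw [getLastD_replicate σf e M hMpos]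
      have hb1 : mtsCost (unif n) e (List.replicate M (reqR n)) (List.replicate M σf)
          ≤ unif n e σf + (n : ℝ≥0∞)⁻¹ := by
        refine le_trans (mtsCost_replicate_const_le e σf (reqR n) M) ?_
        gcongr
        have : reqR n σf = ((n : ℝ≥0∞)⁻¹) ^ (n - 1 - (σf : ℕ)) := rfl
        rw [this, hM, Nat.cast_pow]
        exact pow_mul_inv_pow_le hn (by omega)
      have hb2 : mtsCost (unif n) σf res.1 (List.replicate res.1.length σf)
          ≤ res.2.2 * (n : ℝ≥0∞)⁻¹ := by
        have := ih pref' l h (by omega) (by omega) σf hσ σf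
        rwa [unif_self, zero_add] at this
      calc mtsCost (unif n) e (List.replicate M (reqR n)) (List.replicate M σf) +
            mtsCost (unif n) σf res.1 (List.replicate res.1.length σf)
          ≤ (unif n e σf + (n : ℝ≥0∞)⁻¹) + res.2.2 * (n : ℝ≥0∞)⁻¹ := add_le_add hb1 hb2
        _ = unif n e σf + ((res.2.2 + 1 : ℕ) : ℝ≥0∞) * (n : ℝ≥0∞)⁻¹ := by
            push_cast; ring

lemma halve_online (hn : 2 ≤ n) : ∀ (fuel : ℕ) (pref : List (Req n)) (l r : ℕ),
    ((halve B s₀ fuel pref l r).2.2 : ℝ≥0∞) * 2⁻¹ ≤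
      ∑ i, B.p i * sufCost (B.alg i) s₀ pref (halve B s₀ fuel pref l r).1 := by
  intro fuel
  induction fuel with
  | zero => intro pref l r; simp [halve]
  | succ f ih =>
    intro pref l r
    rw [halve]
    split_ifs with h1 h2
    · simp
    · -- left block
      simp only
      set h := (l + r) / 2 with hh
      set M := n ^ (h - 1) with hM
      set blk := List.replicate M (reqL n) with hblk
      set pref' := pref ++ blk with hpref'
      set res := halve B s₀ f pref' h r with hres
      have hsplit : ∀ i, sufCost (B.alg i) s₀ pref (blk ++ res.1) =
          sufCost (B.alg i) s₀ pref blk + sufCost (B.alg i) s₀ pref' res.1 := fun i =>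
        sufCost_append (B.alg i) s₀ pref blk res.1
      have key : ∀ i, ((fpos (B.alg i) s₀ pref : Fin n) : ℕ) < h →
          1 ≤ sufCost (B.alg i) s₀ pref blk := by
        intro i hpos
        have hv : ∀ s : Fin n, ((s : ℕ) < h) → ((n : ℝ≥0∞)⁻¹) ^ (h - 1) ≤ reqL n s := by
          intro s hs
          exact inv_pow_anti hn (by omega)
        have := block_lb (reqL n) (fun s => (s : ℕ) < h) (((n : ℝ≥0∞)⁻¹) ^ (h - 1)) hv M
          (fpos (B.alg i) s₀ pref) (sufStates (B.alg i) pref blk)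
          (by rw [sufStates_length, hblk, List.length_replicate]) hpos
        rw [hM, Nat.cast_pow, pow_mul_inv_pow_eq_one hn, min_self] at this
        exact this
      have hA : (2⁻¹ : ℝ≥0∞) ≤ ∑ i, B.p i * sufCost (B.alg i) s₀ pref blk := by
        refine le_trans h2 ?_
        rw [massBelow]
        refine Finset.sum_le_sum fun i _ => ?_
        by_cases hpos : ((fpos (B.alg i) s₀ pref : Fin n) : ℕ) < h
        · rw [if_pos hpos]
          calc B.p i = B.p i * 1 := (mul_one _).symm
            _ ≤ B.p i * sufCost (B.alg i) s₀ pref blk := mul_le_mul_right (key i hpos) _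
        · rw [if_neg hpos]; exact zero_le
      have hB := ih pref' h r
      rw [← hres] at hB
      calc ((res.2.2 + 1 : ℕ) : ℝ≥0∞) * 2⁻¹ = 2⁻¹ + (res.2.2 : ℝ≥0∞) * 2⁻¹ := by
            push_cast; ring
        _ ≤ (∑ i, B.p i * sufCost (B.alg i) s₀ pref blk) +
              ∑ i, B.p i * sufCost (B.alg i) s₀ pref' res.1 := add_le_add hA hB
        _ = ∑ i, B.p i * sufCost (B.alg i) s₀ pref (blk ++ res.1) := by
            rw [← Finset.sum_add_distrib]
            exact Finset.sum_congr rfl fun i _ => by rw [hsplit i, mul_add]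
    · -- right block
      simp only
      set h := (l + r) / 2 with hh
      set M := n ^ (n - 1 - h) with hM
      set blk := List.replicate M (reqR n) with hblk
      set pref' := pref ++ blk with hpref'
      set res := halve B s₀ f pref' l h with hres
      have hsplit : ∀ i, sufCost (B.alg i) s₀ pref (blk ++ res.1) =
          sufCost (B.alg i) s₀ pref blk + sufCost (B.alg i) s₀ pref' res.1 := fun i =>
        sufCost_append (B.alg i) s₀ pref blk res.1
      have key : ∀ i, ¬ (((fpos (B.alg i) s₀ pref : Fin n) : ℕ) < h) →
          1 ≤ sufCost (B.alg i) s₀ pref blk := by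
        intro i hpos
        have hv : ∀ s : Fin n, (h ≤ (s : ℕ)) → ((n : ℝ≥0∞)⁻¹) ^ (n - 1 - h) ≤ reqR n s := by
          intro s hs
          have hsn : (s : ℕ) < n := s.isLt
          exact inv_pow_anti hn (by omega)
        have := block_lb (reqR n) (fun s => h ≤ (s : ℕ)) (((n : ℝ≥0∞)⁻¹) ^ (n - 1 - h)) hv M
          (fpos (B.alg i) s₀ pref) (sufStates (B.alg i) pref blk)
          (by rw [sufStates_length, hblk, List.length_replicate]) (by omega)
        rw [hM, Nat.cast_pow, pow_mul_inv_pow_eq_one hn, min_self] at this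
        exact this
      have hA : (2⁻¹ : ℝ≥0∞) ≤ ∑ i, B.p i * sufCost (B.alg i) s₀ pref blk := by
        refine le_trans (massAbove_ge B s₀ pref h h2) ?_
        rw [massAbove]
        refine Finset.sum_le_sum fun i _ => ?_
        by_cases hpos : ((fpos (B.alg i) s₀ pref : Fin n) : ℕ) < h
        · rw [if_pos hpos]; exact zero_le
        · rw [if_neg hpos]
          calc B.p i = B.p i * 1 := (mul_one _).symm
            _ ≤ B.p i * sufCost (B.alg i) s₀ pref blk := mul_le_mul_right (key i hpos) _
      have hB := ih pref' l h
      rw [← hres] at hB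
      calc ((res.2.2 + 1 : ℕ) : ℝ≥0∞) * 2⁻¹ = 2⁻¹ + (res.2.2 : ℝ≥0∞) * 2⁻¹ := by
            push_cast; ring
        _ ≤ (∑ i, B.p i * sufCost (B.alg i) s₀ pref blk) +
              ∑ i, B.p i * sufCost (B.alg i) s₀ pref' res.1 := add_le_add hA hB
        _ = ∑ i, B.p i * sufCost (B.alg i) s₀ pref (blk ++ res.1) := by
            rw [← Finset.sum_add_distrib]
            exact Finset.sum_congr rfl fun i _ => by rw [hsplit i, mul_add]

/-- the full adversarial sequence: `L` phases of halvings. -/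
noncomputable def adv : ℕ → List (Req n)
  | 0 => []
  | L + 1 => adv L ++ (halve B s₀ n (adv L) 0 n).1

lemma adv_mem : ∀ (L : ℕ) (x : Req n), x ∈ adv B s₀ L → x = reqL n ∨ x = reqR n := by
  intro L
  induction L with
  | zero => intro x hx; simp [adv] at hx
  | succ L ih =>
    intro x hx
    rw [adv] at hx
    rcases List.mem_append.1 hx with h | h
    · exact ih x h
    · exact halve_mem B s₀ n (adv B s₀ L) 0 n x h

lemma adv_opt (hn : 2 ≤ n) : ∀ L : ℕ, ∃ ss : List (Fin n),
    ss.length = (adv B s₀ L).length ∧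
    mtsCost (unif n) s₀ (adv B s₀ L) ss ≤ 2 * L := by
  intro L
  induction L with
  | zero => exact ⟨[], by simp [adv], by simp [adv, mtsCost_nil]⟩
  | succ L ih =>
    obtain ⟨ss, hlen, hcost⟩ := ih
    set ph := halve B s₀ n (adv B s₀ L) 0 n with hph
    have hsurv := halve_surv B s₀ n (adv B s₀ L) 0 n (by omega)
    rw [← hph] at hsurv
    set σf : Fin n := ⟨ph.2.1, by omega⟩ with hσf
    refine ⟨ss ++ List.replicate ph.1.length σf, ?_, ?_⟩
    · rw [adv]; simp [hlen, hph]
    · rw [adv, mtsCost_append (unif n) (adv B s₀ L) ss hlen s₀ ph.1 _]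
      have hleak := halve_opt B s₀ hn n (adv B s₀ L) 0 n (by omega) le_rfl σf (by simp [hσf, hph])
        (ss.getLastD s₀)
      rw [← hph] at hleak
      have hcnt : ph.2.2 ≤ n := by
        have := halve_cnt_le B s₀ n (adv B s₀ L) 0 n
        rw [← hph] at this; exact this
      have hmul : (ph.2.2 : ℝ≥0∞) * (n : ℝ≥0∞)⁻¹ ≤ 1 := by
        calc (ph.2.2 : ℝ≥0∞) * (n : ℝ≥0∞)⁻¹ ≤ (n : ℝ≥0∞) * (n : ℝ≥0∞)⁻¹ :=
              mul_le_mul_left (by exact_mod_cast hcnt) _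
          _ = 1 := ENNReal.mul_inv_cancel (natcast_ne_zero hn) (natcast_ne_top n)
      calc mtsCost (unif n) s₀ (adv B s₀ L) ss +
            mtsCost (unif n) (ss.getLastD s₀) ph.1 (List.replicate ph.1.length σf)
          ≤ 2 * L + (unif n (ss.getLastD s₀) σf + (ph.2.2 : ℝ≥0∞) * (n : ℝ≥0∞)⁻¹) :=
            add_le_add hcost hleak
        _ ≤ 2 * L + (1 + 1) := add_le_add le_rfl (add_le_add (unif_le_one n _ _) hmul)
        _ = 2 * ((L + 1 : ℕ) : ℝ≥0∞) := by push_cast; ring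

lemma adv_opt' (hn : 2 ≤ n) (L : ℕ) : mtsOpt (unif n) s₀ (adv B s₀ L) ≤ 2 * L := by
  obtain ⟨ss, hlen, hcost⟩ := adv_opt B s₀ hn L
  exact le_trans (iInf_le _ ⟨ss, hlen⟩) hcost

lemma adv_online (hn : 2 ≤ n) : ∀ L : ℕ,
    (L : ℝ≥0∞) * (Nat.log 2 n : ℝ≥0∞) * 2⁻¹ ≤ mtsRandCost (unif n) s₀ B (adv B s₀ L) := by
  intro L
  induction L with
  | zero => simp
  | succ L ih =>
    set ph := halve B s₀ n (adv B s₀ L) 0 n with hph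
    have hcnt : Nat.log 2 n ≤ ph.2.2 := by
      have := halve_cnt_ge B s₀ n (adv B s₀ L) 0 n (by omega)
      rw [← hph] at this
      simpa using this
    have hblock := halve_online B s₀ hn n (adv B s₀ L) 0 n
    rw [← hph] at hblock
    have hsplit : mtsRandCost (unif n) s₀ B (adv B s₀ (L + 1)) =
        mtsRandCost (unif n) s₀ B (adv B s₀ L) +
          ∑ i, B.p i * sufCost (B.alg i) s₀ (adv B s₀ L) ph.1 := by
      rw [mtsRandCost, mtsRandCost, ← Finset.sum_add_distrib]
      refine Finset.sum_congr rfl fun i _ => ?_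
      rw [adv, mtsAlgCost_append, mul_add]
    rw [hsplit]
    calc ((L + 1 : ℕ) : ℝ≥0∞) * (Nat.log 2 n : ℝ≥0∞) * 2⁻¹
        = (L : ℝ≥0∞) * (Nat.log 2 n : ℝ≥0∞) * 2⁻¹ + (Nat.log 2 n : ℝ≥0∞) * 2⁻¹ := by
          push_cast; ring
      _ ≤ mtsRandCost (unif n) s₀ B (adv B s₀ L) +
            ∑ i, B.p i * sufCost (B.alg i) s₀ (adv B s₀ L) ph.1 := by
          refine add_le_add ih (le_trans ?_ hblock)
          exact mul_le_mul_left (by exact_mod_cast hcnt) _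

lemma reqL_ne_reqR (hn : 2 ≤ n) : reqL n ≠ reqR n := by
  intro h
  have h0 : reqL n ⟨0, by omega⟩ = reqR n ⟨0, by omega⟩ := by rw [h]
  have hL : reqL n ⟨0, by omega⟩ = 1 := by
    show ((n : ℝ≥0∞))⁻¹ ^ ((0 : ℕ)) = 1
    simp
  have hR : reqR n ⟨0, by omega⟩ ≤ (n : ℝ≥0∞)⁻¹ := by
    show ((n : ℝ≥0∞))⁻¹ ^ (n - 1 - (0 : ℕ)) ≤ (n : ℝ≥0∞)⁻¹
    calc ((n : ℝ≥0∞))⁻¹ ^ (n - 1 - (0:ℕ)) ≤ ((n : ℝ≥0∞))⁻¹ ^ 1 := inv_pow_anti hn (by omega)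
      _ = (n : ℝ≥0∞)⁻¹ := pow_one _
  have hlt : (n : ℝ≥0∞)⁻¹ < 1 := by
    rw [ENNReal.inv_lt_one]
    exact_mod_cast Nat.one_lt_cast.mpr (by omega)
  rw [hL] at h0
  exact absurd (h0.le.trans hR) (not_le.mpr hlt)

end Stmt3Aux

open Stmt3Aux

/-- There is an absolute constant `K > 0` such that for every `n ≥ 2`, on the
`n`-point uniform metric space there exists a set `R` of just `2` requests such that no
randomized online algorithm is `c`-competitive on `R` for any `c < K·log n`. -/
theorem stmt3 :
    ∃ K : ℝ, 0 < K ∧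
      ∀ n : ℕ, 2 ≤ n →
        ∃ R : Finset (Req n), R.card = 2 ∧
          ∀ (s₀ : Fin n) (c : ℝ≥0∞), c < ENNReal.ofReal (K * Real.log (n : ℝ)) →
            ∀ B : MtsRandAlg n, ¬ MtsRandCompetitive (unif n) s₀ ↑R c B := by
  classical
  refine ⟨(8 * Real.log 2)⁻¹, by positivity, ?_⟩
  intro n hn
  refine ⟨{reqL n, reqR n}, Finset.card_pair (reqL_ne_reqR hn), ?_⟩
  intro s₀ c hc B hcomp
  obtain ⟨a, hatop, hA⟩ := hcomp
  set k := Nat.log 2 n with hk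
  have hk1 : 1 ≤ k := Nat.log_pos (by norm_num) hn
  -- from hc, derive c * 4 < k
  have hlog2 : (0:ℝ) < Real.log 2 := Real.log_pos (by norm_num)
  have hreal : (8 * Real.log 2)⁻¹ * Real.log n ≤ (k : ℝ) / 4 := by
    have hnlt : (n : ℝ) ≤ 2 ^ (2 * k) := by
      have h1 : n < 2 ^ (k + 1) := Nat.lt_pow_succ_log_self (by norm_num) n
      have h2 : (2:ℕ) ^ (k + 1) ≤ 2 ^ (2 * k) := Nat.pow_le_pow_right (by norm_num) (by omega)
      have := le_of_lt (lt_of_lt_of_le h1 h2)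
      exact_mod_cast this
    have hlogn : Real.log n ≤ (2 * k) * Real.log 2 := by
      calc Real.log n ≤ Real.log (2 ^ (2 * k)) :=
            Real.log_le_log (by positivity) hnlt
        _ = ((2 * k : ℕ) : ℝ) * Real.log 2 := Real.log_pow _ _
        _ = (2 * k) * Real.log 2 := by push_cast; ring
    calc (8 * Real.log 2)⁻¹ * Real.log n ≤ (8 * Real.log 2)⁻¹ * ((2 * k) * Real.log 2) := by
          gcongr
        _ = (k : ℝ) / 4 := by field_simp; ring
  have hofk : ENNReal.ofReal ((8 * Real.log 2)⁻¹ * Real.log n) ≤ (k : ℝ≥0∞) / 4 := by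
    refine le_trans (ENNReal.ofReal_le_ofReal hreal) ?_
    rw [ENNReal.ofReal_div_of_pos (by norm_num), ENNReal.ofReal_natCast]
    simp
  have hck : c * 4 < (k : ℝ≥0∞) := by
    have : c < (k : ℝ≥0∞) / 4 := lt_of_lt_of_le hc hofk
    exact (ENNReal.lt_div_iff_mul_lt (Or.inl (by norm_num)) (Or.inl (by norm_num))).1 this
  have hctop : c ≠ ⊤ := by
    have h1 : c ≤ c * 4 := le_mul_of_one_le_right zero_le (by norm_num)
    exact ((h1.trans_lt hck).trans (ENNReal.natCast_ne_top k).lt_top).ne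
  set η := (k : ℝ≥0∞) - c * 4 with hη
  have hη0 : η ≠ 0 := by
    rw [hη, ← pos_iff_ne_zero, tsub_pos_iff_lt]
    exact hck
  have hηtop : η ≠ ⊤ :=
    (lt_of_le_of_lt (tsub_le_self) (lt_of_le_of_ne le_top (ENNReal.natCast_ne_top k))).ne
  have hηsum : c * 4 + η = (k : ℝ≥0∞) := add_tsub_cancel_of_le hck.le
  set μ := η * 2⁻¹ with hμ
  have hμ0 : μ ≠ 0 := mul_ne_zero hη0 (by norm_num)
  have hμtop : μ ≠ ⊤ := ENNReal.mul_ne_top hηtop (by norm_num)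
  obtain ⟨N, hN⟩ := ENNReal.exists_nat_gt (ENNReal.div_lt_top hatop hμ0).ne
  have haN : a < N * μ := (ENNReal.div_lt_iff (Or.inl hμ0) (Or.inl hμtop)).1 hN
  have hmem : ∀ r ∈ adv B s₀ N, r ∈ (↑({reqL n, reqR n} : Finset (Req n)) : Set (Req n)) := by
    intro r hr
    rcases adv_mem B s₀ N r hr with h | h <;> simp [h]
  have hle := hA (adv B s₀ N) hmem
  have hlow : (N : ℝ≥0∞) * (k : ℝ≥0∞) * 2⁻¹ ≤ mtsRandCost (unif n) s₀ B (adv B s₀ N) :=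
    adv_online B s₀ hn N
  have hopt : mtsOpt (unif n) s₀ (adv B s₀ N) ≤ 2 * N := adv_opt' B s₀ hn N
  have h42 : (4 : ℝ≥0∞) * 2⁻¹ = 2 := by
    rw [show (4 : ℝ≥0∞) = 2 * 2 by norm_num, mul_assoc,
      ENNReal.mul_inv_cancel (by norm_num) (by norm_num), mul_one]
  have hkey : (N : ℝ≥0∞) * (k : ℝ≥0∞) * 2⁻¹ = c * (2 * N) + N * μ := by
    rw [← hηsum, mul_assoc, add_mul, mul_add]
    have h1 : c * 4 * 2⁻¹ = c * 2 := by rw [mul_assoc, h42]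
    rw [h1, hμ]
    ring
  have hchain : c * mtsOpt (unif n) s₀ (adv B s₀ N) + a < (N : ℝ≥0∞) * (k : ℝ≥0∞) * 2⁻¹ := by
    calc c * mtsOpt (unif n) s₀ (adv B s₀ N) + a ≤ c * (2 * N) + a := by
          gcongr
      _ < c * (2 * N) + N * μ := by
          refine ENNReal.add_lt_add_left ?_ haN
          exact ENNReal.mul_ne_top hctop (by
            refine ENNReal.mul_ne_top (by norm_num) (ENNReal.natCast_ne_top N))
      _ = (N : ℝ≥0∞) * (k : ℝ≥0∞) * 2⁻¹ := hkey.symm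
  exact absurd hle (not_le.mpr (lt_of_lt_of_le hchain hlow))
end

section
/- There is an absolute constant K > 0 such that for every even n ≥ 4 there exists an aspect ratio C > 1 (which may depend on n, e.g. C = Θ(n)) such that on the paired-uniform metric space on n points with parameter C, there exists a set R of just 2 requests such that no deterministic online algorithm is c-competitive on R for any c < n/K. -/
open scoped ENNReal

namespace S4
open List Finset

/-! ### Numeric scale -/

noncomputable def NN (m : ℕ) : ℝ≥0∞ := ((4 * m : ℕ) : ℝ≥0∞)

lemma NN_ne_zero {m : ℕ} (hm : 1 ≤ m) : NN m ≠ 0 := by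
  simp only [NN, ne_eq, Nat.cast_eq_zero]; omega

lemma NN_ne_top {m : ℕ} : NN m ≠ ⊤ := ENNReal.natCast_ne_top _

lemma one_le_NN {m : ℕ} (hm : 1 ≤ m) : 1 ≤ NN m := by
  simp only [NN]; exact_mod_cast Nat.one_le_iff_ne_zero.mpr (by omega)

lemma NNpow_ne_zero {m : ℕ} (hm : 1 ≤ m) (j : ℕ) : NN m ^ j ≠ 0 :=
  pow_ne_zero _ (NN_ne_zero hm)

lemma NNpow_ne_top {m : ℕ} (j : ℕ) : NN m ^ j ≠ ⊤ := ENNReal.pow_ne_top NN_ne_top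

lemma NN_cancel {m : ℕ} (hm : 1 ≤ m) (a b : ℕ) :
    NN m ^ a * (NN m ^ (a + b))⁻¹ = (NN m ^ b)⁻¹ := by
  rw [pow_add, ENNReal.mul_inv (Or.inl (NNpow_ne_zero hm a)) (Or.inl (NNpow_ne_top a)),
    ← mul_assoc, ENNReal.mul_inv_cancel (NNpow_ne_zero hm a) (NNpow_ne_top a), one_mul]

lemma NNpow_inv_le {m : ℕ} (hm : 1 ≤ m) {j : ℕ} (hj : 1 ≤ j) : (NN m ^ j)⁻¹ ≤ (NN m)⁻¹ := by
  refine ENNReal.inv_le_inv.mpr ?_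
  calc NN m = NN m ^ 1 := (pow_one _).symm
    _ ≤ NN m ^ j := pow_le_pow_right₀ (one_le_NN hm) hj

/-! ### The two requests and pulses -/

noncomputable def r0 (n m : ℕ) : Req n :=
  fun x => if (x : ℕ) % 2 = 0 then (NN m ^ ((x : ℕ) / 2))⁻¹ else 0

noncomputable def r1 (n m : ℕ) : Req n :=
  fun x => if (x : ℕ) % 2 = 1 then (NN m ^ (m - (x : ℕ) / 2))⁻¹ else 0

noncomputable def pulse (n m j : ℕ) : List (Req n) :=
  List.replicate ((4 * m) ^ j) (r0 n m) ++ List.replicate ((4 * m) ^ (m - j)) (r1 n m)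

lemma pulse_length_pos {n m : ℕ} (j : ℕ) (hm : 1 ≤ m) : 0 < (pulse n m j).length := by
  have h1 : 0 < (4 * m) ^ j := Nat.pow_pos (by omega)
  simp only [pulse, List.length_append, List.length_replicate]
  omega

lemma pulse_mem {n m j : ℕ} {r : Req n} (hr : r ∈ pulse n m j) : r = r0 n m ∨ r = r1 n m := by
  rcases List.mem_append.mp hr with h | h
  · exact Or.inl (List.mem_replicate.mp h).2
  · exact Or.inr (List.mem_replicate.mp h).2

lemma pulse_charge (n m j : ℕ) (x : Fin n) :
    ((pulse n m j).map (fun r => r x)).sum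
      = NN m ^ j * r0 n m x + NN m ^ (m - j) * r1 n m x := by
  simp only [pulse, List.map_append, List.map_replicate, List.sum_append,
    List.sum_replicate, nsmul_eq_mul, NN]
  push_cast
  ring

/-- charge of a pulse targeted at the pair of the point `x` itself -/
lemma pulse_charge_self {n m : ℕ} (hm : 1 ≤ m) (x : Fin n) :
    ((pulse n m ((x : ℕ) / 2)).map (fun r => r x)).sum = 1 := by
  rw [pulse_charge]
  rcases Nat.mod_two_eq_zero_or_one (x : ℕ) with h | h
  · have h1 : (x : ℕ) % 2 ≠ 1 := by omega
    simp only [r0, r1, if_pos h, if_neg h1, mul_zero, add_zero]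
    exact ENNReal.mul_inv_cancel (NNpow_ne_zero hm _) (NNpow_ne_top _)
  · have h0 : (x : ℕ) % 2 ≠ 0 := by omega
    simp only [r0, r1, if_pos h, if_neg h0, mul_zero, zero_add]
    exact ENNReal.mul_inv_cancel (NNpow_ne_zero hm _) (NNpow_ne_top _)

/-- charge of a pulse at the `a`-point of pair `i`, when the target `j` satisfies `j < i`. -/
lemma pulse_charge_a {n m i j : ℕ} (hm : 1 ≤ m) (u : Fin n) (hu : (u : ℕ) = 2 * i)
    (hj : j < i) :
    ((pulse n m j).map (fun r => r u)).sum ≤ (NN m)⁻¹ := by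
  rw [pulse_charge]
  have h0 : (u : ℕ) % 2 = 0 := by omega
  have h1 : (u : ℕ) % 2 ≠ 1 := by omega
  have hd : (u : ℕ) / 2 = i := by omega
  simp only [r0, r1, if_pos h0, if_neg h1, mul_zero, add_zero, hd]
  have hi : i = j + (i - j) := by omega
  rw [hi, NN_cancel hm]
  exact NNpow_inv_le hm (by omega)

/-- charge of a pulse at the `b`-point of pair `i`, when the target `j` satisfies `i ≤ j < m`. -/
lemma pulse_charge_b {n m i j : ℕ} (hm : 1 ≤ m) (v : Fin n) (hv : (v : ℕ) = 2 * i + 1)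
    (hij : i ≤ j) (hjm : j ≤ m) :
    ((pulse n m j).map (fun r => r v)).sum = (NN m ^ (j - i))⁻¹ := by
  rw [pulse_charge]
  have h1 : (v : ℕ) % 2 = 1 := by omega
  have h0 : (v : ℕ) % 2 ≠ 0 := by omega
  have hd : (v : ℕ) / 2 = i := by omega
  simp only [r0, r1, if_pos h1, if_neg h0, mul_zero, zero_add, hd]
  have hi : m - i = (m - j) + (j - i) := by omega
  rw [hi, NN_cancel hm]

/-! ### Metric facts -/

lemma d_self {n : ℕ} (C : ℝ) (x : Fin n) : pairedUnif n C x x = 0 := if_pos rfl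

lemma d_cross {n m : ℕ} {x y : Fin n} (h : (x : ℕ) / 2 ≠ (y : ℕ) / 2) :
    pairedUnif n (m : ℝ) x y = (m : ℝ≥0∞) := by
  have hxy : x ≠ y := by rintro rfl; exact h rfl
  simp only [pairedUnif, if_neg hxy, if_neg h, ENNReal.ofReal_natCast]

lemma one_le_d {n m : ℕ} (hm : 1 ≤ m) {x y : Fin n} (hxy : x ≠ y) :
    1 ≤ pairedUnif n (m : ℝ) x y := by
  simp only [pairedUnif, if_neg hxy]
  split
  · exact le_refl _
  · rw [ENNReal.ofReal_natCast]; exact_mod_cast hm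

lemma d_le {n m : ℕ} (hm : 1 ≤ m) (x y : Fin n) :
    pairedUnif n (m : ℝ) x y ≤ (m : ℝ≥0∞) := by
  simp only [pairedUnif]
  split
  · exact zero_le'
  · split
    · exact_mod_cast hm
    · rw [ENNReal.ofReal_natCast]

lemma d_pair_le_one {n m : ℕ} {x y : Fin n} (h : (x : ℕ) / 2 = (y : ℕ) / 2) :
    pairedUnif n (m : ℝ) x y ≤ 1 := by
  by_cases hxy : x = y
  · simp [pairedUnif, hxy]
  · simp [pairedUnif, hxy, h]

/-! ### General mtsCost lemmas -/

lemma getLastD_all_eq {α : Type*} : ∀ (σ : List α) (s : α), (∀ x ∈ σ, x = s) → σ.getLastD s = s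
  | [], s, _ => rfl
  | q :: σ', s, h => by
    rw [List.getLastD_cons]
    have hq : q = s := h q (by simp)
    subst hq
    exact getLastD_all_eq σ' q (fun x hx => h x (by simp [hx]))

lemma getLastD_append {α : Type*} : ∀ (l₁ l₂ : List α) (d : α),
    (l₁ ++ l₂).getLastD d = l₂.getLastD (l₁.getLastD d)
  | [], l₂, d => rfl
  | a :: l₁, l₂, d => by
    rw [List.cons_append, List.getLastD_cons, List.getLastD_cons]
    exact getLastD_append l₁ l₂ a

lemma getLastD_replicate {α : Type*} (x d : α) (k : ℕ) (hk : 0 < k) :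
    (List.replicate k x).getLastD d = x := by
  rcases Nat.exists_eq_succ_of_ne_zero (by omega : k ≠ 0) with ⟨l, rfl⟩
  rw [List.replicate_succ, List.getLastD_cons]
  exact getLastD_all_eq _ _ (fun y hy => (List.mem_replicate.mp hy).2)

lemma mtsCost_append {n : ℕ} (d : Fin n → Fin n → ℝ≥0∞) :
    ∀ (ρ : List (Req n)) (σ : List (Fin n)) (s : Fin n) (π : List (Req n)) (τ : List (Fin n)),
      σ.length = ρ.length →
      mtsCost d s (ρ ++ π) (σ ++ τ)
        = mtsCost d s ρ σ + mtsCost d (σ.getLastD s) π τ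
  | [], σ, s, π, τ, h => by
    have : σ = [] := List.eq_nil_of_length_eq_zero h
    subst this
    simp [mtsCost]
  | r :: ρ, q :: σ, s, π, τ, h => by
    simp only [List.cons_append, mtsCost, List.getLastD_cons, List.append_eq]
    rw [mtsCost_append d ρ σ q π τ (by simpa using h)]
    ring
  | r :: ρ, [], s, π, τ, h => by simp at h

lemma mtsCost_static {n : ℕ} (d : Fin n → Fin n → ℝ≥0∞) (hd : ∀ x, d x x = 0) :
    ∀ (ρ : List (Req n)) (σ : List (Fin n)) (s : Fin n),
      σ.length = ρ.length → (∀ x ∈ σ, x = s) →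
      mtsCost d s ρ σ = (ρ.map (fun r => r s)).sum
  | [], σ, s, h, _ => by
    have : σ = [] := List.eq_nil_of_length_eq_zero h
    subst this; simp [mtsCost]
  | r :: ρ, q :: σ, s, h, hall => by
    have hq : q = s := hall q (by simp)
    subst hq
    simp only [mtsCost, hd, zero_add, List.map_cons, List.sum_cons]
    rw [mtsCost_static d hd ρ σ q (by simpa using h)
      (fun x hx => hall x (by simp [hx]))]
  | r :: ρ, [], s, h, _ => by simp at h

lemma one_le_mtsCost_of_move {n m : ℕ} (hm : 1 ≤ m) :
    ∀ (ρ : List (Req n)) (σ : List (Fin n)) (s : Fin n),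
      σ.length = ρ.length → ¬(∀ x ∈ σ, x = s) →
      1 ≤ mtsCost (pairedUnif n (m : ℝ)) s ρ σ
  | [], σ, s, h, hmove => by
    exact absurd (fun x hx => by
      have : σ = [] := List.eq_nil_of_length_eq_zero h
      subst this; simp at hx) hmove
  | r :: ρ, q :: σ, s, h, hmove => by
    simp only [mtsCost]
    by_cases hq : q = s
    · subst hq
      have : ¬(∀ x ∈ σ, x = q) := fun hx => hmove (by
        intro x hx'
        rcases List.mem_cons.mp hx' with rfl | hmem
        · rfl
        · exact hx x hmem)
      calc (1 : ℝ≥0∞) ≤ mtsCost (pairedUnif n (m : ℝ)) q ρ σ :=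
            one_le_mtsCost_of_move hm ρ σ q (by simpa using h) this
        _ ≤ _ := le_add_self
    · calc (1 : ℝ≥0∞) ≤ pairedUnif n (m : ℝ) s q := one_le_d hm (Ne.symm hq)
        _ ≤ _ := by
            rw [add_assoc]
            exact le_self_add
  | r :: ρ, [], s, h, _ => by simp at h

lemma m_le_mtsCost_of_pairmove {n m : ℕ} :
    ∀ (ρ : List (Req n)) (σ : List (Fin n)) (s : Fin n),
      σ.length = ρ.length → ((σ.getLastD s : Fin n) : ℕ) / 2 ≠ (s : ℕ) / 2 →
      (m : ℝ≥0∞) ≤ mtsCost (pairedUnif n (m : ℝ)) s ρ σ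
  | [], σ, s, h, hmove => by
    have : σ = [] := List.eq_nil_of_length_eq_zero h
    subst this; simp at hmove
  | r :: ρ, q :: σ, s, h, hmove => by
    simp only [mtsCost]
    by_cases hq : (q : ℕ) / 2 = (s : ℕ) / 2
    · have hlast : ((q :: σ).getLastD s) = σ.getLastD q := List.getLastD_cons
      rw [hlast] at hmove
      calc (m : ℝ≥0∞) ≤ mtsCost (pairedUnif n (m : ℝ)) q ρ σ :=
            m_le_mtsCost_of_pairmove ρ σ q (by simpa using h) (by rw [hq]; exact hmove)
        _ ≤ _ := le_add_self
    · calc (m : ℝ≥0∞) = pairedUnif n (m : ℝ) s q := (d_cross (fun hh => hq hh.symm)).symm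
        _ ≤ _ := by rw [add_assoc]; exact le_self_add
  | r :: ρ, [], s, h, _ => by simp at h

/-- cost of staying at a fixed point through a nonempty request list, after moving there -/
lemma mtsCost_replicate {n : ℕ} (d : Fin n → Fin n → ℝ≥0∞) (hd : ∀ x, d x x = 0)
    (p x : Fin n) (r : Req n) (ρ : List (Req n)) :
    mtsCost d p (r :: ρ) (List.replicate (r :: ρ).length x)
      = d p x + ((r :: ρ).map (fun r => r x)).sum := by
  simp only [List.length_cons, List.replicate_succ, mtsCost, List.map_cons, List.sum_cons]
  rw [mtsCost_static d hd ρ (List.replicate ρ.length x) x (by simp)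
    (fun y hy => (List.mem_replicate.mp hy).2)]
  ring

/-! ### States of an online algorithm -/

lemma mtsStates_length {n : ℕ} (A : List (Req n) → Fin n) (ρ : List (Req n)) :
    (mtsStates A ρ).length = ρ.length := by simp [mtsStates]

lemma mtsStates_append {n : ℕ} (A : List (Req n) → Fin n) (ρ π : List (Req n)) :
    mtsStates A (ρ ++ π) = mtsStates A ρ ++
      (List.range π.length).map (fun t => A ((ρ ++ π).take (ρ.length + t + 1))) := by
  show (List.range (ρ ++ π).length).map _ = _
  rw [List.length_append, List.range_add, List.map_append, List.map_map]
  congr 1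
  show _ = (List.range ρ.length).map (fun t => A (ρ.take (t + 1)))
  apply List.map_congr_left
  intro t ht
  have ht' : t + 1 ≤ ρ.length := List.mem_range.mp ht
  show A ((ρ ++ π).take (t + 1)) = A (ρ.take (t + 1))
  rw [List.take_append_of_le_length ht']

/-- position of the algorithm after serving `ρ` -/
def apos {n : ℕ} (A : List (Req n) → Fin n) (s₀ : Fin n) (ρ : List (Req n)) : Fin n :=
  (mtsStates A ρ).getLastD s₀

/-! ### The adversarial sequence -/

noncomputable def seq (n m : ℕ) (A : List (Req n) → Fin n) (s₀ : Fin n) : ℕ → List (Req n)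
  | 0 => []
  | k + 1 => seq n m A s₀ k ++
      pulse n m ((apos A s₀ (seq n m A s₀ k) : ℕ) / 2)

/-- target pair of the `k`-th pulse -/
noncomputable def tgt (n m : ℕ) (A : List (Req n) → Fin n) (s₀ : Fin n) (k : ℕ) : ℕ :=
  (apos A s₀ (seq n m A s₀ k) : ℕ) / 2

lemma seq_succ (n m : ℕ) (A : List (Req n) → Fin n) (s₀ : Fin n) (k : ℕ) :
    seq n m A s₀ (k + 1) = seq n m A s₀ k ++ pulse n m (tgt n m A s₀ k) := rfl

lemma tgt_lt {n m : ℕ} (hnm : n = 2 * m) (A : List (Req n) → Fin n) (s₀ : Fin n) (k : ℕ) :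
    tgt n m A s₀ k < m := by
  have := (apos A s₀ (seq n m A s₀ k)).is_lt
  unfold tgt
  omega

lemma seq_mem {n m : ℕ} (A : List (Req n) → Fin n) (s₀ : Fin n) :
    ∀ (k : ℕ) (r : Req n), r ∈ seq n m A s₀ k → r = r0 n m ∨ r = r1 n m
  | 0, r, hr => by simp [seq] at hr
  | k + 1, r, hr => by
    rw [seq_succ] at hr
    rcases List.mem_append.mp hr with h | h
    · exact seq_mem A s₀ k r h
    · exact pulse_mem h

/-- the states suffix of the algorithm on pulse `k` -/
noncomputable def tau (n m : ℕ) (A : List (Req n) → Fin n) (s₀ : Fin n) (k : ℕ) :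
    List (Fin n) :=
  (List.range (pulse n m (tgt n m A s₀ k)).length).map
    (fun t => A ((seq n m A s₀ (k + 1)).take ((seq n m A s₀ k).length + t + 1)))

lemma tau_length (n m : ℕ) (A : List (Req n) → Fin n) (s₀ : Fin n) (k : ℕ) :
    (tau n m A s₀ k).length = (pulse n m (tgt n m A s₀ k) : List (Req n)).length := by
  simp [tau]

lemma states_seq_succ (n m : ℕ) (A : List (Req n) → Fin n) (s₀ : Fin n) (k : ℕ) :
    mtsStates A (seq n m A s₀ (k + 1))
      = mtsStates A (seq n m A s₀ k) ++ tau n m A s₀ k := by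
  rw [seq_succ, mtsStates_append]
  rfl

lemma apos_succ (n m : ℕ) (A : List (Req n) → Fin n) (s₀ : Fin n) (k : ℕ) :
    apos A s₀ (seq n m A s₀ (k + 1))
      = (tau n m A s₀ k).getLastD (apos A s₀ (seq n m A s₀ k)) := by
  unfold apos
  rw [states_seq_succ, getLastD_append]

lemma algCost_succ {n : ℕ} (m : ℕ) (d : Fin n → Fin n → ℝ≥0∞)
    (A : List (Req n) → Fin n) (s₀ : Fin n) (k : ℕ) :
    mtsAlgCost d s₀ A (seq n m A s₀ (k + 1))
      = mtsAlgCost d s₀ A (seq n m A s₀ k)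
        + mtsCost d (apos A s₀ (seq n m A s₀ k)) (pulse n m (tgt n m A s₀ k))
            (tau n m A s₀ k) := by
  unfold mtsAlgCost
  rw [states_seq_succ, seq_succ,
    mtsCost_append d _ _ _ _ _ (mtsStates_length A _)]
  rfl

/-! ### Lower bound for the algorithm -/

/-- number of target changes among the first `k` pulses -/
noncomputable def Mch (n m : ℕ) (A : List (Req n) → Fin n) (s₀ : Fin n) (k : ℕ) : ℕ :=
  ((Finset.range k).filter (fun t => tgt n m A s₀ (t + 1) ≠ tgt n m A s₀ t)).card

lemma Mch_succ (n m : ℕ) (A : List (Req n) → Fin n) (s₀ : Fin n) (k : ℕ) :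
    Mch n m A s₀ (k + 1)
      = Mch n m A s₀ k + (if tgt n m A s₀ (k + 1) ≠ tgt n m A s₀ k then 1 else 0) := by
  unfold Mch
  rw [Finset.range_add_one, Finset.filter_insert]
  split
  · rw [Finset.card_insert_of_notMem (fun h => Finset.notMem_range_self (Finset.mem_of_mem_filter _ h))]
  · rw [add_zero]

/-- Per-pulse lower bound: during a pulse targeted at the pair of the starting point `s`,
any behaviour costs at least 1, and at least `m` if the final pair differs. -/
lemma pulse_lb {n m : ℕ} (hm : 1 ≤ m) (s : Fin n) (σ : List (Fin n))
    (hlen : σ.length = (pulse n m ((s : ℕ) / 2) : List (Req n)).length) :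
    ((if ((σ.getLastD s : Fin n) : ℕ) / 2 = (s : ℕ) / 2 then 1 else m : ℕ) : ℝ≥0∞)
      ≤ mtsCost (pairedUnif n (m : ℝ)) s (pulse n m ((s : ℕ) / 2)) σ := by
  by_cases hall : ∀ x ∈ σ, x = s
  · rw [getLastD_all_eq σ s hall, if_pos rfl]
    rw [mtsCost_static _ (d_self (m : ℝ)) _ _ _ hlen hall, pulse_charge_self hm s]
    simp
  · by_cases hp : ((σ.getLastD s : Fin n) : ℕ) / 2 = (s : ℕ) / 2
    · rw [if_pos hp]
      simpa using one_le_mtsCost_of_move hm _ σ s hlen hall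
    · rw [if_neg hp]
      exact m_le_mtsCost_of_pairmove _ σ s hlen hp

lemma alg_lb {n m : ℕ} (hm : 1 ≤ m) (A : List (Req n) → Fin n) (s₀ : Fin n) :
    ∀ k : ℕ, ((k + (m - 1) * Mch n m A s₀ k : ℕ) : ℝ≥0∞)
      ≤ mtsAlgCost (pairedUnif n (m : ℝ)) s₀ A (seq n m A s₀ k)
  | 0 => by simp [Mch]
  | k + 1 => by
    rw [algCost_succ]
    have hseg := pulse_lb hm (apos A s₀ (seq n m A s₀ k)) (tau n m A s₀ k)
      (tau_length n m A s₀ k)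
    have htgt : ((tau n m A s₀ k).getLastD (apos A s₀ (seq n m A s₀ k)) : ℕ) / 2
        = tgt n m A s₀ (k + 1) := by
      rw [← apos_succ]; rfl
    rw [htgt] at hseg
    rw [show ((apos A s₀ (seq n m A s₀ k) : ℕ) / 2) = tgt n m A s₀ k from rfl] at hseg
    have IH := alg_lb hm A s₀ k
    by_cases h : tgt n m A s₀ (k + 1) = tgt n m A s₀ k
    · rw [if_pos h] at hseg
      have hseg1 : (1 : ℝ≥0∞) ≤ mtsCost (pairedUnif n (m : ℝ))
          (apos A s₀ (seq n m A s₀ k)) (pulse n m (tgt n m A s₀ k))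
          (tau n m A s₀ k) := by exact_mod_cast hseg
      have hMeq : Mch n m A s₀ (k + 1) = Mch n m A s₀ k := by
        rw [Mch_succ, if_neg (by simpa using h), add_zero]
      rw [hMeq]
      have hre : ((k + 1 + (m - 1) * Mch n m A s₀ k : ℕ) : ℝ≥0∞)
          = ((k + (m - 1) * Mch n m A s₀ k : ℕ) : ℝ≥0∞) + 1 := by push_cast; ring
      rw [hre]
      exact add_le_add IH hseg1
    · rw [if_neg h] at hseg
      have hsegm : ((m : ℕ) : ℝ≥0∞) ≤ mtsCost (pairedUnif n (m : ℝ))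
          (apos A s₀ (seq n m A s₀ k)) (pulse n m (tgt n m A s₀ k))
          (tau n m A s₀ k) := hseg
      have hMeq : Mch n m A s₀ (k + 1) = Mch n m A s₀ k + 1 := by
        rw [Mch_succ, if_pos (by simpa using h)]
      rw [hMeq]
      have hnat : k + 1 + (m - 1) * (Mch n m A s₀ k + 1)
          = (k + (m - 1) * Mch n m A s₀ k) + m := by
        rw [Nat.mul_add, Nat.mul_one]
        generalize (m - 1) * Mch n m A s₀ k = x
        omega
      rw [hnat]
      push_cast
      exact add_le_add (by exact_mod_cast IH) hsegm

end S4

namespace S4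
open List Finset

/-! ### The offline solution -/

noncomputable def osol (n m : ℕ) (A : List (Req n) → Fin n) (s₀ : Fin n)
    (u v : Fin n) (i : ℕ) : ℕ → List (Fin n)
  | 0 => []
  | k + 1 => osol n m A s₀ u v i k ++
      List.replicate (pulse n m (tgt n m A s₀ k) : List (Req n)).length
        (if tgt n m A s₀ k < i then u else v)

lemma osol_length (n m : ℕ) (A : List (Req n) → Fin n) (s₀ : Fin n)
    (u v : Fin n) (i : ℕ) :
    ∀ k, (osol n m A s₀ u v i k).length = (seq n m A s₀ k).length
  | 0 => rfl
  | k + 1 => by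
    simp only [osol, seq_succ, List.length_append, List.length_replicate,
      osol_length n m A s₀ u v i k]

/-- the point used by the offline solution during pulse `k` -/
noncomputable def opt_pt (n m : ℕ) (A : List (Req n) → Fin n) (s₀ : Fin n)
    (u v : Fin n) (i : ℕ) (k : ℕ) : Fin n :=
  if tgt n m A s₀ k < i then u else v

lemma osol_getLastD {n m : ℕ} (hm : 1 ≤ m) (A : List (Req n) → Fin n) (s₀ : Fin n)
    (u v : Fin n) (i : ℕ) (k : ℕ) :
    (osol n m A s₀ u v i (k + 1)).getLastD s₀ = opt_pt n m A s₀ u v i k := by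
  show (osol n m A s₀ u v i k ++ _).getLastD s₀ = _
  rw [getLastD_append, getLastD_replicate _ _ _ (pulse_length_pos _ hm)]
  rfl

/-- the charge the offline point takes during pulse `k` -/
lemma opt_pt_charge {n m : ℕ} (hnm : n = 2 * m) (hm : 1 ≤ m)
    (A : List (Req n) → Fin n) (s₀ : Fin n)
    (u v : Fin n) {i : ℕ} (him : i < m) (hu : (u : ℕ) = 2 * i) (hv : (v : ℕ) = 2 * i + 1)
    (k : ℕ) :
    ((pulse n m (tgt n m A s₀ k) : List (Req n)).map
        (fun r => r (opt_pt n m A s₀ u v i k))).sum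
      ≤ (if tgt n m A s₀ k = i then 1 else (NN m)⁻¹) := by
  by_cases hlt : tgt n m A s₀ k < i
  · have h1 : opt_pt n m A s₀ u v i k = u := if_pos hlt
    rw [h1, if_neg (by omega)]
    exact pulse_charge_a hm u hu hlt
  · have h1 : opt_pt n m A s₀ u v i k = v := if_neg hlt
    have htm : tgt n m A s₀ k < m := tgt_lt hnm A s₀ k
    rw [h1, pulse_charge_b hm v hv (by omega) (by omega)]
    by_cases he : tgt n m A s₀ k = i
    · rw [if_pos he]
      simp [he]
    · rw [if_neg he]
      exact NNpow_inv_le hm (by omega)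

/-- cost bound for the offline solution -/
lemma osol_cost {n m : ℕ} (hnm : n = 2 * m) (hm : 1 ≤ m)
    (A : List (Req n) → Fin n) (s₀ : Fin n)
    (u v : Fin n) {i : ℕ} (him : i < m) (hu : (u : ℕ) = 2 * i) (hv : (v : ℕ) = 2 * i + 1) :
    ∀ k, mtsCost (pairedUnif n (m : ℝ)) s₀ (seq n m A s₀ k) (osol n m A s₀ u v i k)
      ≤ (m : ℝ≥0∞)
        + (∑ t ∈ Finset.range k,
            (if t = 0 then 0 else if tgt n m A s₀ t = tgt n m A s₀ (t - 1) then 0 else 1))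
        + (∑ t ∈ Finset.range k, (if tgt n m A s₀ t = i then 1 else (NN m)⁻¹))
  | 0 => by
    simp [seq, osol, mtsCost]
  | k + 1 => by
    have hpulse_ne : (pulse n m (tgt n m A s₀ k) : List (Req n)) ≠ [] := by
      have := pulse_length_pos (n := n) (tgt n m A s₀ k) hm
      intro h; rw [h] at this; simp at this
    obtain ⟨r, ρ', hrρ⟩ : ∃ r ρ', (pulse n m (tgt n m A s₀ k) : List (Req n)) = r :: ρ' := by
      cases hp : (pulse n m (tgt n m A s₀ k) : List (Req n)) with
      | nil => exact absurd hp hpulse_ne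
      | cons r ρ' => exact ⟨r, ρ', rfl⟩
    have hstep : mtsCost (pairedUnif n (m : ℝ)) s₀ (seq n m A s₀ (k + 1))
        (osol n m A s₀ u v i (k + 1))
        = mtsCost (pairedUnif n (m : ℝ)) s₀ (seq n m A s₀ k) (osol n m A s₀ u v i k)
          + (pairedUnif n (m : ℝ) ((osol n m A s₀ u v i k).getLastD s₀)
              (opt_pt n m A s₀ u v i k)
            + ((pulse n m (tgt n m A s₀ k) : List (Req n)).map
                (fun r => r (opt_pt n m A s₀ u v i k))).sum) := by
      rw [seq_succ]
      show mtsCost _ s₀ _ (osol n m A s₀ u v i k ++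
        List.replicate (pulse n m (tgt n m A s₀ k) : List (Req n)).length
          (opt_pt n m A s₀ u v i k)) = _
      rw [mtsCost_append _ _ _ _ _ _ (osol_length n m A s₀ u v i k)]
      congr 1
      rw [hrρ]
      exact mtsCost_replicate _ (d_self (m : ℝ)) _ _ r ρ'
    rw [hstep]
    have hch := opt_pt_charge hnm hm A s₀ u v him hu hv k
    have hmove : pairedUnif n (m : ℝ) ((osol n m A s₀ u v i k).getLastD s₀)
        (opt_pt n m A s₀ u v i k)
        ≤ (if k = 0 then (m : ℝ≥0∞)
            else if tgt n m A s₀ k = tgt n m A s₀ (k - 1) then 0 else 1) := by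
      cases k with
      | zero =>
        rw [if_pos rfl]
        exact d_le hm _ _
      | succ k' =>
        rw [if_neg (Nat.succ_ne_zero k'),
          osol_getLastD hm A s₀ u v i k']
        have hk1 : k' + 1 - 1 = k' := rfl
        rw [hk1]
        by_cases he : tgt n m A s₀ (k' + 1) = tgt n m A s₀ k'
        · rw [if_pos he]
          have : opt_pt n m A s₀ u v i k' = opt_pt n m A s₀ u v i (k' + 1) := by
            unfold opt_pt; rw [he]
          rw [this, d_self]
        · rw [if_neg he]
          unfold opt_pt
          have hupair : (u : ℕ) / 2 = i := by omega
          have hvpair : (v : ℕ) / 2 = i := by omega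
          apply d_pair_le_one
          split <;> split <;> simp [hupair, hvpair]
    cases k with
    | zero =>
      -- cost(1) ≤ m + 0 + ch 0
      have h0 : mtsCost (pairedUnif n (m : ℝ)) s₀ (seq n m A s₀ 0) (osol n m A s₀ u v i 0)
          = 0 := by simp [seq, osol, mtsCost]
      rw [h0, zero_add]
      rw [Finset.sum_range_one, Finset.sum_range_one, if_pos rfl]
      rw [if_pos rfl] at hmove
      calc pairedUnif n (m : ℝ) _ _ + _
          ≤ (m : ℝ≥0∞) + (if tgt n m A s₀ 0 = i then 1 else (NN m)⁻¹) :=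
            add_le_add hmove hch
        _ = (m : ℝ≥0∞) + 0 + (if tgt n m A s₀ 0 = i then 1 else (NN m)⁻¹) := by
            rw [add_zero]
    | succ k' =>
      have IH := osol_cost hnm hm A s₀ u v him hu hv (k' + 1)
      rw [if_neg (Nat.succ_ne_zero k')] at hmove
      calc mtsCost _ s₀ (seq n m A s₀ (k' + 1)) (osol n m A s₀ u v i (k' + 1)) + _
          ≤ ((m : ℝ≥0∞)
              + (∑ t ∈ Finset.range (k' + 1),
                  (if t = 0 then 0 else if tgt n m A s₀ t = tgt n m A s₀ (t - 1) then 0 else 1))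
              + (∑ t ∈ Finset.range (k' + 1), (if tgt n m A s₀ t = i then 1 else (NN m)⁻¹)))
            + ((if tgt n m A s₀ (k' + 1) = tgt n m A s₀ (k' + 1 - 1) then 0 else 1)
              + (if tgt n m A s₀ (k' + 1) = i then 1 else (NN m)⁻¹)) :=
            add_le_add IH (add_le_add hmove hch)
        _ = _ := by
            simp only [Finset.sum_range_succ, Nat.succ_ne_zero, if_false,
              Nat.add_sub_cancel]
            ring

end S4

namespace S4
open Finset

lemma sum_mv_le' (n m : ℕ) (A : List (Req n) → Fin n) (s₀ : Fin n) :
    ∀ k : ℕ, (∑ t ∈ Finset.range (k + 1),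
        (if t = 0 then 0
          else if tgt n m A s₀ t = tgt n m A s₀ (t - 1) then 0 else (1 : ℝ≥0∞)))
      ≤ (Mch n m A s₀ k : ℝ≥0∞)
  | 0 => by simp
  | k + 1 => by
    rw [Finset.sum_range_succ, Mch_succ]
    have hcast : ((Mch n m A s₀ k
        + (if tgt n m A s₀ (k + 1) ≠ tgt n m A s₀ k then 1 else 0) : ℕ) : ℝ≥0∞)
        = (Mch n m A s₀ k : ℝ≥0∞)
          + (if tgt n m A s₀ (k + 1) ≠ tgt n m A s₀ k then 1 else 0) := by
      split <;> simp
    rw [hcast]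
    refine add_le_add (sum_mv_le' n m A s₀ k) ?_
    rw [if_neg (Nat.succ_ne_zero k), show k + 1 - 1 = k from rfl]
    by_cases h : tgt n m A s₀ (k + 1) = tgt n m A s₀ k
    · simp [h]
    · simp [h]

lemma sum_mv_le (n m : ℕ) (A : List (Req n) → Fin n) (s₀ : Fin n) (k : ℕ) :
    (∑ t ∈ Finset.range k,
        (if t = 0 then 0
          else if tgt n m A s₀ t = tgt n m A s₀ (t - 1) then 0 else (1 : ℝ≥0∞)))
      ≤ (Mch n m A s₀ k : ℝ≥0∞) :=
  le_trans (Finset.sum_le_sum_of_subset (Finset.range_subset_range.mpr (Nat.le_succ k)))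
    (sum_mv_le' n m A s₀ k)

lemma sum_ch_le (n m : ℕ) (A : List (Req n) → Fin n) (s₀ : Fin n) (i : ℕ) (k : ℕ) :
    (∑ t ∈ Finset.range k, (if tgt n m A s₀ t = i then (1 : ℝ≥0∞) else (NN m)⁻¹))
      ≤ (((Finset.range k).filter (fun t => tgt n m A s₀ t = i)).card : ℝ≥0∞)
        + (k : ℝ≥0∞) * (NN m)⁻¹ := by
  calc (∑ t ∈ Finset.range k, (if tgt n m A s₀ t = i then (1 : ℝ≥0∞) else (NN m)⁻¹))
      ≤ ∑ t ∈ Finset.range k,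
          ((if tgt n m A s₀ t = i then (1 : ℝ≥0∞) else 0) + (NN m)⁻¹) := by
        refine Finset.sum_le_sum ?_
        intro t _
        by_cases h : tgt n m A s₀ t = i
        · simp [h]
        · simp [h]
    _ = (∑ t ∈ Finset.range k, (if tgt n m A s₀ t = i then (1 : ℝ≥0∞) else 0))
        + ∑ t ∈ Finset.range k, (NN m)⁻¹ := Finset.sum_add_distrib
    _ = (((Finset.range k).filter (fun t => tgt n m A s₀ t = i)).card : ℝ≥0∞)
        + (k : ℝ≥0∞) * (NN m)⁻¹ := by
        rw [Finset.sum_boole, Finset.sum_const, Finset.card_range, nsmul_eq_mul]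

end S4

/-- There is an absolute constant `K > 0` such that for every even `n ≥ 4`
there exists an aspect ratio `C > 1` such that on the paired-uniform metric space on `n`
points with parameter `C`, there exists a set `R` of just `2` requests such that no
deterministic online algorithm is `c`-competitive on `R` for any `c < n/K`. -/
theorem stmt4 :
    ∃ K : ℝ, 0 < K ∧
      ∀ n : ℕ, 4 ≤ n → Even n →
        ∃ C : ℝ, 1 < C ∧
          ∃ R : Finset (Req n), R.card = 2 ∧
            ∀ (s₀ : Fin n) (c : ℝ≥0∞), c < ENNReal.ofReal ((n : ℝ) / K) →
              ∀ A : List (Req n) → Fin n, ¬ MtsCompetitive (pairedUnif n C) s₀ ↑R c A := by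
  classical
  refine ⟨16, by norm_num, ?_⟩
  intro n hn heven
  obtain ⟨r, hr⟩ := heven
  obtain ⟨m, hnm⟩ : ∃ m, n = 2 * m := ⟨r, by omega⟩
  have hm : 2 ≤ m := by omega
  have hm1 : 1 ≤ m := by omega
  refine ⟨(m : ℝ), by exact_mod_cast hm, ?_⟩
  have hne : S4.r0 n m ≠ S4.r1 n m := by
    intro h
    have h0 : (0 : ℕ) < n := by omega
    have h2 := congrFun h (⟨0, h0⟩ : Fin n)
    simp [S4.r0, S4.r1] at h2
  refine ⟨{S4.r0 n m, S4.r1 n m}, Finset.card_pair hne, ?_⟩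
  intro s₀ c hc A hcomp
  obtain ⟨a, ha, hbound⟩ := hcomp
  -- choose the number of pulses
  have hfin : ((m * m : ℕ) : ℝ≥0∞) + 8 * a ≠ ⊤ :=
    ENNReal.add_ne_top.mpr ⟨ENNReal.natCast_ne_top _, ENNReal.mul_ne_top (by norm_num) ha⟩
  obtain ⟨k, hk⟩ := ENNReal.exists_nat_gt hfin
  set ρ := S4.seq n m A s₀ k with hρ
  have hmem : ∀ r' ∈ ρ, r' ∈ (↑({S4.r0 n m, S4.r1 n m} : Finset (Req n)) : Set (Req n)) := by
    intro r' hr'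
    rcases S4.seq_mem A s₀ k r' hr' with h | h <;> simp [h]
  have halg := hbound ρ hmem
  -- pigeonhole: a rarely-targeted pair
  have htgt_mem : ∀ t ∈ Finset.range k, S4.tgt n m A s₀ t ∈ Finset.range m := fun t _ =>
    Finset.mem_range.mpr (S4.tgt_lt hnm A s₀ t)
  have hfiber := Finset.card_eq_sum_card_fiberwise htgt_mem
  obtain ⟨i, him, hTi⟩ : ∃ i ∈ Finset.range m,
      m * ((Finset.range k).filter (fun t => S4.tgt n m A s₀ t = i)).card ≤ k := by
    by_contra hcon
    push_neg at hcon
    have hsum : ∑ i ∈ Finset.range m,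
        ((Finset.range k).filter (fun t => S4.tgt n m A s₀ t = i)).card = k := by
      rw [← hfiber, Finset.card_range]
    have hlt := Finset.sum_lt_sum_of_nonempty
      (Finset.nonempty_range_iff.mpr (by omega : m ≠ 0)) hcon
    rw [Finset.sum_const, Finset.card_range, smul_eq_mul, ← Finset.mul_sum, hsum] at hlt
    exact absurd hlt (lt_irrefl _)
  have him' : i < m := Finset.mem_range.mp him
  set T : ℕ := ((Finset.range k).filter (fun t => S4.tgt n m A s₀ t = i)).card with hT
  set M : ℕ := S4.Mch n m A s₀ k with hM
  -- OPT upper bound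
  have hui : 2 * i < n := by omega
  have hvi : 2 * i + 1 < n := by omega
  have hosol := S4.osol_cost hnm hm1 A s₀ (⟨2 * i, hui⟩ : Fin n) (⟨2 * i + 1, hvi⟩ : Fin n)
    him' rfl rfl k
  have hOPT : mtsOpt (pairedUnif n (m : ℝ)) s₀ ρ
      ≤ (m : ℝ≥0∞) + (M : ℝ≥0∞) + ((T : ℝ≥0∞) + (k : ℝ≥0∞) * (S4.NN m)⁻¹) := by
    refine le_trans (iInf_le _ ⟨S4.osol n m A s₀ ⟨2 * i, hui⟩ ⟨2 * i + 1, hvi⟩ i k,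
      S4.osol_length n m A s₀ _ _ i k⟩) ?_
    refine le_trans hosol ?_
    exact add_le_add (add_le_add le_rfl (S4.sum_mv_le n m A s₀ k))
      (S4.sum_ch_le n m A s₀ i k)
  have hALG := S4.alg_lb hm1 A s₀ k
  -- numeric contradiction
  set B : ℝ≥0∞ := (m : ℝ≥0∞) + (M : ℝ≥0∞) + ((T : ℝ≥0∞) + (k : ℝ≥0∞) * (S4.NN m)⁻¹) with hB
  have hNNinv_ne_top : (S4.NN m)⁻¹ ≠ ⊤ := ENNReal.inv_ne_top.mpr (S4.NN_ne_zero hm1)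
  have hc' : c ≤ (n : ℝ≥0∞) / 16 := by
    have heq : ENNReal.ofReal ((n : ℝ) / 16) = (n : ℝ≥0∞) / 16 := by
      rw [ENNReal.ofReal_div_of_pos (by norm_num), ENNReal.ofReal_natCast,
        ENNReal.ofReal_ofNat]
    exact le_of_lt (heq ▸ hc)
  -- key strict inequality: n*B + 16a < 16*(k + (m-1)M)
  have b1 : ((2 * m : ℕ) : ℝ≥0∞) * ((k : ℝ≥0∞) * (S4.NN m)⁻¹) ≤ (k : ℝ≥0∞) := by
    calc ((2 * m : ℕ) : ℝ≥0∞) * ((k : ℝ≥0∞) * (S4.NN m)⁻¹)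
        = (k : ℝ≥0∞) * (((2 * m : ℕ) : ℝ≥0∞) * (S4.NN m)⁻¹) := by ring
      _ ≤ (k : ℝ≥0∞) * (S4.NN m * (S4.NN m)⁻¹) := by
          refine mul_le_mul' le_rfl (mul_le_mul' ?_ le_rfl)
          unfold S4.NN
          exact Nat.cast_le.mpr (by omega)
      _ = (k : ℝ≥0∞) * 1 := by
          rw [ENNReal.mul_inv_cancel (S4.NN_ne_zero hm1) S4.NN_ne_top]
      _ = (k : ℝ≥0∞) := mul_one _
  have b2 : ((2 * m : ℕ) : ℝ≥0∞) * (T : ℝ≥0∞) ≤ ((2 * k : ℕ) : ℝ≥0∞) := by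
    have hnat : 2 * m * T ≤ 2 * k := by
      calc 2 * m * T = 2 * (m * T) := by ring
        _ ≤ 2 * k := Nat.mul_le_mul_left 2 hTi
    calc ((2 * m : ℕ) : ℝ≥0∞) * (T : ℝ≥0∞) = ((2 * m * T : ℕ) : ℝ≥0∞) := by push_cast; ring
      _ ≤ ((2 * k : ℕ) : ℝ≥0∞) := Nat.cast_le.mpr hnat
  have b3 : ((2 * m : ℕ) : ℝ≥0∞) * (M : ℝ≥0∞) ≤ ((16 * ((m - 1) * M) : ℕ) : ℝ≥0∞) := by
    have hnat : 2 * m * M ≤ 16 * ((m - 1) * M) := by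
      have h2 : 2 * m ≤ 16 * (m - 1) := by omega
      calc 2 * m * M ≤ 16 * (m - 1) * M := Nat.mul_le_mul_right M h2
        _ = 16 * ((m - 1) * M) := by ring
    calc ((2 * m : ℕ) : ℝ≥0∞) * (M : ℝ≥0∞) = ((2 * m * M : ℕ) : ℝ≥0∞) := by push_cast; ring
      _ ≤ _ := Nat.cast_le.mpr hnat
  have b4 : ((2 * m : ℕ) : ℝ≥0∞) * (m : ℝ≥0∞) + 16 * a < 2 * (k : ℝ≥0∞) := by
    have heq : ((2 * m : ℕ) : ℝ≥0∞) * (m : ℝ≥0∞) + 16 * a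
        = 2 * (((m * m : ℕ) : ℝ≥0∞) + 8 * a) := by push_cast; ring
    rw [heq]
    exact (ENNReal.mul_lt_mul_iff_right (by norm_num) (by norm_num)).mpr hk
  have hfin2 : ((2 * m : ℕ) : ℝ≥0∞) * (M : ℝ≥0∞)
      + (((2 * m : ℕ) : ℝ≥0∞) * (T : ℝ≥0∞)
        + ((2 * m : ℕ) : ℝ≥0∞) * ((k : ℝ≥0∞) * (S4.NN m)⁻¹)) ≠ ⊤ := by
    refine ENNReal.add_ne_top.mpr ⟨ENNReal.mul_ne_top (ENNReal.natCast_ne_top _)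
      (ENNReal.natCast_ne_top _), ENNReal.add_ne_top.mpr
      ⟨ENNReal.mul_ne_top (ENNReal.natCast_ne_top _) (ENNReal.natCast_ne_top _),
        ENNReal.mul_ne_top (ENNReal.natCast_ne_top _)
          (ENNReal.mul_ne_top (ENNReal.natCast_ne_top _) hNNinv_ne_top)⟩⟩
  have key : (n : ℝ≥0∞) * B + 16 * a < 16 * ((k + (m - 1) * M : ℕ) : ℝ≥0∞) := by
    have hn' : (n : ℝ≥0∞) = ((2 * m : ℕ) : ℝ≥0∞) := by rw [hnm]
    rw [hn', hB]
    have hexp : ((2 * m : ℕ) : ℝ≥0∞)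
          * ((m : ℝ≥0∞) + (M : ℝ≥0∞) + ((T : ℝ≥0∞) + (k : ℝ≥0∞) * (S4.NN m)⁻¹))
          + 16 * a
        = (((2 * m : ℕ) : ℝ≥0∞) * (m : ℝ≥0∞) + 16 * a)
          + (((2 * m : ℕ) : ℝ≥0∞) * (M : ℝ≥0∞)
            + (((2 * m : ℕ) : ℝ≥0∞) * (T : ℝ≥0∞)
              + ((2 * m : ℕ) : ℝ≥0∞) * ((k : ℝ≥0∞) * (S4.NN m)⁻¹))) := by ring
    rw [hexp]
    have hstrict := ENNReal.add_lt_add_of_lt_of_le hfin2 b4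
      (add_le_add b3 (add_le_add b2 b1))
    refine lt_of_lt_of_le hstrict ?_
    have hnat : 2 * k + (16 * ((m - 1) * M) + (2 * k + k)) ≤ 16 * (k + (m - 1) * M) := by
      generalize (m - 1) * M = x
      omega
    calc 2 * (k : ℝ≥0∞)
          + (((16 * ((m - 1) * M) : ℕ) : ℝ≥0∞) + (((2 * k : ℕ) : ℝ≥0∞) + (k : ℝ≥0∞)))
        = ((2 * k + (16 * ((m - 1) * M) + (2 * k + k)) : ℕ) : ℝ≥0∞) := by push_cast; ring
      _ ≤ ((16 * (k + (m - 1) * M) : ℕ) : ℝ≥0∞) := Nat.cast_le.mpr hnat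
      _ = 16 * ((k + (m - 1) * M : ℕ) : ℝ≥0∞) := by push_cast; ring
  -- conclude
  have h16 : (16 : ℝ≥0∞) * (c * mtsOpt (pairedUnif n (m : ℝ)) s₀ ρ + a)
      < 16 * ((k + (m - 1) * M : ℕ) : ℝ≥0∞) := by
    calc (16 : ℝ≥0∞) * (c * mtsOpt (pairedUnif n (m : ℝ)) s₀ ρ + a)
        = 16 * c * mtsOpt (pairedUnif n (m : ℝ)) s₀ ρ + 16 * a := by ring
      _ ≤ 16 * ((n : ℝ≥0∞) / 16) * B + 16 * a := by
          exact add_le_add (mul_le_mul' (mul_le_mul' le_rfl hc') hOPT) le_rfl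
      _ = (n : ℝ≥0∞) * B + 16 * a := by
          rw [ENNReal.mul_div_cancel (by norm_num) (by norm_num)]
      _ < _ := key
  have hlt : c * mtsOpt (pairedUnif n (m : ℝ)) s₀ ρ + a
      < ((k + (m - 1) * M : ℕ) : ℝ≥0∞) :=
    (ENNReal.mul_lt_mul_iff_right (by norm_num) (by norm_num)).mp h16
  exact absurd halg (not_le.mpr (lt_of_lt_of_le hlt hALG))
end

section
/- For every n-point uniform metric space, every initial state s₀, and every pool R of m nonempty subsets of the points, there exists a deterministic online algorithm for the metrical service system that is m-competitive on R: its cost on every request sequence drawn from R is at most m·z*(ρ) plus an additive constant. -/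
/-- Movement cost of the state sequence `ss` starting from `s₀`: `Σ_t d(s_{t-1}, s_t)`. -/
def mssPathCost {n : ℕ} (d : Fin n → Fin n → ℝ) : Fin n → List (Fin n) → ℝ
  | _, [] => 0
  | s₀, s :: ss => d s₀ s + mssPathCost d s ss

/-- `z*(ρ)`: the optimal (offline) cost of serving the request sequence `ρ` (a sequence of
subsets of the point set) from `s₀`; a feasible solution must satisfy `s_t ∈ ρ_t` for all `t`. -/
noncomputable def mssOpt {n : ℕ} (d : Fin n → Fin n → ℝ) (s₀ : Fin n)
    (ρ : List (Finset (Fin n))) : ℝ :=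
  sInf {x : ℝ | ∃ ss : List (Fin n),
    List.Forall₂ (fun (s : Fin n) (S : Finset (Fin n)) => s ∈ S) ss ρ ∧
    mssPathCost d s₀ ss = x}

/-- The sequence of states produced by a deterministic online algorithm `A`
(which sees only the prefix `ρ₁,…,ρ_t` when choosing `s_t`) on the request sequence `ρ`. -/
def mssStates {n : ℕ} (A : List (Finset (Fin n)) → Fin n) (ρ : List (Finset (Fin n))) :
    List (Fin n) :=
  (List.range ρ.length).map fun t => A (ρ.take (t + 1))

/-- A deterministic online algorithm for a metrical service system is valid if it always
serves the last (nonempty) request from within that request. -/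
def ValidAlg {n : ℕ} (A : List (Finset (Fin n)) → Fin n) : Prop :=
  ∀ (l : List (Finset (Fin n))) (S : Finset (Fin n)), S.Nonempty → A (l ++ [S]) ∈ S

/-- The cost incurred by the deterministic online algorithm `A` on `ρ`, starting at `s₀`. -/
def mssAlgCost {n : ℕ} (d : Fin n → Fin n → ℝ) (s₀ : Fin n)
    (A : List (Finset (Fin n)) → Fin n) (ρ : List (Finset (Fin n))) : ℝ :=
  mssPathCost d s₀ (mssStates A ρ)

/-- `A` is `c`-competitive on the request pool `R`: there is an additive constant `a` such
that on every request sequence drawn from `R`, the cost of `A` is at most `c·z*(ρ) + a`. -/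
def MssCompetitive {n : ℕ} (d : Fin n → Fin n → ℝ) (s₀ : Fin n) (R : Set (Finset (Fin n)))
    (c : ℝ) (A : List (Finset (Fin n)) → Fin n) : Prop :=
  ∃ a : ℝ, ∀ ρ : List (Finset (Fin n)), (∀ S ∈ ρ, S ∈ R) →
    mssAlgCost d s₀ A ρ ≤ c * mssOpt d s₀ ρ + a

/-- A randomized online algorithm for a metrical service system: a finitely supported
probability distribution over (valid) deterministic online algorithms. -/
structure MssRandAlg (n : ℕ) where
  k : ℕ
  alg : Fin k → List (Finset (Fin n)) → Fin n
  valid : ∀ i, ValidAlg (alg i)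
  p : Fin k → ℝ
  p_nonneg : ∀ i, 0 ≤ p i
  sum_p : ∑ i, p i = 1

/-- Expected cost of a randomized online algorithm on `ρ`, starting at `s₀`. -/
def mssRandCost {n : ℕ} (d : Fin n → Fin n → ℝ) (s₀ : Fin n) (B : MssRandAlg n)
    (ρ : List (Finset (Fin n))) : ℝ :=
  ∑ i, B.p i * mssAlgCost d s₀ (B.alg i) ρ

/-- A randomized online algorithm `B` is `c`-competitive on the request pool `R`. -/
def MssRandCompetitive {n : ℕ} (d : Fin n → Fin n → ℝ) (s₀ : Fin n)
    (R : Set (Finset (Fin n))) (c : ℝ) (B : MssRandAlg n) : Prop :=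
  ∃ a : ℝ, ∀ ρ : List (Finset (Fin n)), (∀ S ∈ ρ, S ∈ R) →
    mssRandCost d s₀ B ρ ≤ c * mssOpt d s₀ ρ + a

/-- The uniform metric on `n` points: `d(x,y) = 1` for `x ≠ y`, `d(x,x) = 0`. -/
def unifR (n : ℕ) (x y : Fin n) : ℝ := if x = y then 0 else 1

/-- A two-level HST metric with aspect ratio `C > 1`, given by a map `π` assigning to each
point its cluster: `d(x,y) = 1` for distinct points in the same cluster, `d(x,y) = C` for
points in different clusters, and `d(x,x) = 0`. -/
def hst2 (n : ℕ) (π : Fin n → Fin n) (C : ℝ) (x y : Fin n) : ℝ :=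
  if x = y then 0 else if π x = π y then 1 else C

/-! ### Auxiliary development for stmt6 -/

/-- Pick an element of `S`, defaulting to `dflt`. -/
def mssPick {n : ℕ} (S : Finset (Fin n)) (dflt : Fin n) : Fin n :=
  if h : S.Nonempty then S.min' h else dflt

lemma mssPick_mem {n : ℕ} (S : Finset (Fin n)) (dflt : Fin n) (h : S.Nonempty) :
    mssPick S dflt ∈ S := by
  rw [mssPick, dif_pos h]; exact S.min'_mem h

/-- One step of the phase-based algorithm: state is (position, family of requests this phase). -/
def mssStep {n : ℕ} (st : Fin n × Finset (Finset (Fin n))) (S : Finset (Fin n)) :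
    Fin n × Finset (Finset (Fin n)) :=
  if st.1 ∈ S then (st.1, insert S st.2)
  else if (S ∩ st.2.inf id).Nonempty then (mssPick (S ∩ st.2.inf id) st.1, insert S st.2)
  else (mssPick S st.1, {S})

def mssTraj {n : ℕ} : Fin n × Finset (Finset (Fin n)) → List (Finset (Fin n)) → List (Fin n)
  | _, [] => []
  | st, S :: ρ => (mssStep st S).1 :: mssTraj (mssStep st S) ρ

def mssMoves {n : ℕ} : Fin n × Finset (Finset (Fin n)) → List (Finset (Fin n)) → ℕ
  | _, [] => 0
  | st, S :: ρ => (if st.1 ∈ S then 0 else 1) + mssMoves (mssStep st S) ρ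

def mssResets {n : ℕ} : Fin n × Finset (Finset (Fin n)) → List (Finset (Fin n)) → ℕ
  | _, [] => 0
  | st, S :: ρ =>
    (if st.1 ∉ S ∧ ¬(S ∩ st.2.inf id).Nonempty then 1 else 0) + mssResets (mssStep st S) ρ

def offMoves {n : ℕ} : Fin n → List (Fin n) → ℕ
  | _, [] => 0
  | x, y :: ss => (if x = y then 0 else 1) + offMoves y ss

lemma pathCost_eq_offMoves {n : ℕ} : ∀ (ss : List (Fin n)) (x : Fin n),
    mssPathCost (unifR n) x ss = (offMoves x ss : ℝ)
  | [], x => by simp [mssPathCost, offMoves]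
  | y :: ss, x => by
    rw [mssPathCost, offMoves, pathCost_eq_offMoves ss y, unifR]
    push_cast; split <;> ring

lemma pathCost_traj_le {n : ℕ} : ∀ (ρ : List (Finset (Fin n))) (st),
    mssPathCost (unifR n) st.1 (mssTraj st ρ) ≤ (mssMoves st ρ : ℝ)
  | [], st => by simp [mssPathCost, mssTraj, mssMoves]
  | S :: ρ, st => by
    rw [mssTraj, mssPathCost, mssMoves]
    have h2 := pathCost_traj_le ρ (mssStep st S)
    have h1 : unifR n st.1 (mssStep st S).1 ≤ (if st.1 ∈ S then 0 else 1 : ℕ) := by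
      by_cases h : st.1 ∈ S
      · simp [mssStep, h, unifR]
      · rw [if_neg h]; unfold unifR; split <;> norm_num
    push_cast at h1 h2 ⊢
    linarith

/-- Upper bound: moves ≤ m·resets + m (offset by current family size). -/
lemma mssMoves_le {n : ℕ} (R : Finset (Finset (Fin n))) (hne : ∀ S ∈ R, S.Nonempty) :
    ∀ (ρ : List (Finset (Fin n))) (st : Fin n × Finset (Finset (Fin n))),
    st.1 ∈ st.2.inf id → st.2 ⊆ R → (∀ S ∈ ρ, S ∈ R) →
    mssMoves st ρ + st.2.card ≤ R.card * mssResets st ρ + R.card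
  | [], st, hinv, hsub, _ => by
    simp only [mssMoves, mssResets, Nat.mul_zero, Nat.zero_add]
    exact Finset.card_le_card hsub
  | S :: ρ, st, hinv, hsub, hρ => by
    have hSR : S ∈ R := hρ S (List.mem_cons_self)
    have hρ' : ∀ T ∈ ρ, T ∈ R := fun T hT => hρ T (List.mem_cons_of_mem _ hT)
    have hF : st.2.card ≤ R.card := Finset.card_le_card hsub
    rw [mssMoves, mssResets]
    by_cases h1 : st.1 ∈ S
    · -- stay
      have hstep : mssStep st S = (st.1, insert S st.2) := by rw [mssStep, if_pos h1]
      have hinv' : (mssStep st S).1 ∈ (mssStep st S).2.inf id := by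
        rw [hstep]
        simpa [Finset.inf_insert, Finset.inf_eq_inter] using Finset.mem_inter.2 ⟨h1, hinv⟩
      have hsub' : (mssStep st S).2 ⊆ R := by
        rw [hstep]; exact Finset.insert_subset hSR hsub
      have IH := mssMoves_le R hne ρ (mssStep st S) hinv' hsub' hρ'
      have hc : st.2.card ≤ (mssStep st S).2.card := by
        rw [hstep]; exact Finset.card_le_card (Finset.subset_insert _ _)
      rw [if_pos h1, if_neg (by simp [h1])]
      simp only [Nat.zero_add, Nat.mul_add, Nat.mul_one] at IH ⊢
      omega
    · have hSnot : S ∉ st.2 := fun hmem =>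
        h1 (Finset.le_iff_subset.mp (Finset.inf_le (f := id) hmem) hinv)
      by_cases h2 : (S ∩ st.2.inf id).Nonempty
      · -- move within phase
        have hstep : mssStep st S = (mssPick (S ∩ st.2.inf id) st.1, insert S st.2) := by
          rw [mssStep, if_neg h1, if_pos h2]
        have hmem := mssPick_mem _ st.1 h2
        have hinv' : (mssStep st S).1 ∈ (mssStep st S).2.inf id := by
          rw [hstep]
          simpa [Finset.inf_insert, Finset.inf_eq_inter, Finset.inter_comm] using hmem
        have hsub' : (mssStep st S).2 ⊆ R := by
          rw [hstep]; exact Finset.insert_subset hSR hsub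
        have IH := mssMoves_le R hne ρ (mssStep st S) hinv' hsub' hρ'
        have hc : (mssStep st S).2.card = st.2.card + 1 := by
          rw [hstep]; exact Finset.card_insert_of_notMem hSnot
        rw [if_neg h1, if_neg (by simp [h2])]
        simp only [Nat.zero_add, Nat.mul_add, Nat.mul_one] at IH ⊢
        omega
      · -- reset
        have hstep : mssStep st S = (mssPick S st.1, {S}) := by
          rw [mssStep, if_neg h1, if_neg h2]
        have hinv' : (mssStep st S).1 ∈ (mssStep st S).2.inf id := by
          rw [hstep]
          simpa using mssPick_mem S st.1 (hne S hSR)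
        have hsub' : (mssStep st S).2 ⊆ R := by
          rw [hstep]; simpa using hSR
        have IH := mssMoves_le R hne ρ (mssStep st S) hinv' hsub' hρ'
        have hc : (mssStep st S).2.card = 1 := by rw [hstep]; simp
        rw [if_neg h1, if_pos ⟨h1, h2⟩]
        simp only [Nat.add_mul, Nat.mul_add, Nat.mul_one] at IH ⊢
        omega

/-- Lower bound: any offline solution pays at least (resets − 1); with the invariant, resets. -/
lemma mssResets_le {n : ℕ} :
    ∀ (ρ : List (Finset (Fin n))) (st : Fin n × Finset (Finset (Fin n)))
      (x : Fin n) (ss : List (Fin n)),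
    List.Forall₂ (fun (s : Fin n) (S : Finset (Fin n)) => s ∈ S) ss ρ →
    (x ∈ st.2.inf id → mssResets st ρ ≤ offMoves x ss) ∧
    (mssResets st ρ ≤ offMoves x ss + 1)
  | [], st, x, ss, hf => by
    cases hf; simp [mssResets, offMoves]
  | S :: ρ, st, x, [], hf => by cases hf
  | S :: ρ, st, x, y :: ss', hf => by
    have hy : y ∈ S := by cases hf; assumption
    have hf' : List.Forall₂ (fun (s : Fin n) (S : Finset (Fin n)) => s ∈ S) ss' ρ := by
      cases hf; assumption
    have IH := fun z => mssResets_le ρ (mssStep st S) z ss' hf'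
    rw [mssResets, offMoves]
    by_cases hr : st.1 ∉ S ∧ ¬(S ∩ st.2.inf id).Nonempty
    · -- reset branch
      have hstep : mssStep st S = (mssPick S st.1, {S}) := by
        rw [mssStep, if_neg hr.1, if_neg hr.2]
      have hy' : y ∈ (mssStep st S).2.inf id := by rw [hstep]; simpa using hy
      have h1 := (IH y).1 hy'
      rw [if_pos hr]
      constructor
      · intro hx
        have hxy : ¬ x = y := by
          intro h; subst h
          exact hr.2 ⟨x, Finset.mem_inter.2 ⟨hy, hx⟩⟩
        rw [if_neg hxy]; omega
      · split <;> omega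
    · -- stay or move: family becomes insert S st.2
      have hstep2 : (mssStep st S).2 = insert S st.2 := by
        rw [mssStep]
        by_cases h1 : st.1 ∈ S
        · rw [if_pos h1]
        · rw [if_neg h1, if_pos (by push_neg at hr; exact hr h1)]
      rw [if_neg hr]
      constructor
      · intro hx
        by_cases hy' : y ∈ (mssStep st S).2.inf id
        · have h1 := (IH y).1 hy'
          split <;> omega
        · have hxy : ¬ x = y := by
            intro h; subst h
            refine hy' ?_
            rw [hstep2]
            simpa [Finset.inf_insert, Finset.inf_eq_inter] using Finset.mem_inter.2 ⟨hy, hx⟩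
          have h2 := (IH y).2
          rw [if_neg hxy]; omega
      · have h2 := (IH y).2
        split <;> omega

lemma mssStates_eq_traj {n : ℕ} :
    ∀ (ρ : List (Finset (Fin n))) (st : Fin n × Finset (Finset (Fin n))),
    ((List.range ρ.length).map fun t => ((ρ.take (t + 1)).foldl mssStep st).1) = mssTraj st ρ
  | [], st => by simp [mssTraj]
  | S :: ρ, st => by
    rw [List.length_cons, List.range_succ_eq_map, List.map_cons, List.map_map, mssTraj]
    congr 1
    rw [← mssStates_eq_traj ρ (mssStep st S)]
    apply List.map_congr_left
    intro t _
    simp [Function.comp, List.take_succ_cons]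

lemma exists_feasible {n : ℕ} (s₀ : Fin n) :
    ∀ (ρ : List (Finset (Fin n))), (∀ S ∈ ρ, S.Nonempty) →
    List.Forall₂ (fun (s : Fin n) (S : Finset (Fin n)) => s ∈ S)
      (ρ.map fun S => mssPick S s₀) ρ
  | [], _ => List.Forall₂.nil
  | S :: ρ, h => by
    rw [List.map_cons]
    exact List.Forall₂.cons (mssPick_mem S s₀ (h S (List.mem_cons_self)))
      (exists_feasible s₀ ρ fun T hT => h T (List.mem_cons_of_mem _ hT))


/-- For every `n`-point uniform metric space, every initial state `s₀`, and
every pool `R` of `m` nonempty subsets of the points, there exists a deterministic online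
algorithm for the metrical service system that is `m`-competitive on `R`. -/
theorem stmt6 (n m : ℕ) (s₀ : Fin n) (R : Finset (Finset (Fin n)))
    (hcard : R.card = m) (hne : ∀ S ∈ R, S.Nonempty) :
    ∃ A : List (Finset (Fin n)) → Fin n, ValidAlg A ∧
      MssCompetitive (unifR n) s₀ ↑R (m : ℝ) A := by
  classical
  refine ⟨fun l => (l.foldl mssStep (s₀, ∅)).1, ?_, ?_⟩
  · -- validity
    intro l S hS
    show ((l ++ [S]).foldl mssStep (s₀, ∅)).1 ∈ S
    rw [List.foldl_append, List.foldl_cons, List.foldl_nil]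
    set st := l.foldl mssStep (s₀, (∅ : Finset (Finset (Fin n))))
    rw [mssStep]
    by_cases h1 : st.1 ∈ S
    · rw [if_pos h1]; exact h1
    · rw [if_neg h1]
      by_cases h2 : (S ∩ st.2.inf id).Nonempty
      · rw [if_pos h2]
        exact (Finset.mem_inter.1 (mssPick_mem _ _ h2)).1
      · rw [if_neg h2]; exact mssPick_mem _ _ hS
  · refine ⟨m, ?_⟩
    intro ρ hρ
    have hρR : ∀ S ∈ ρ, S ∈ R := fun S hS => by exact_mod_cast hρ S hS
    have hρne : ∀ S ∈ ρ, S.Nonempty := fun S hS => hne S (hρR S hS)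
    have hinit : ((s₀, (∅ : Finset (Finset (Fin n)))) :
        Fin n × Finset (Finset (Fin n))).1 ∈
        ((s₀, (∅ : Finset (Finset (Fin n)))) : Fin n × Finset (Finset (Fin n))).2.inf id := by
      simp
    -- algorithm cost = path cost of trajectory
    have hAlg : mssAlgCost (unifR n) s₀ (fun l => (l.foldl mssStep (s₀, ∅)).1) ρ =
        mssPathCost (unifR n) s₀ (mssTraj (s₀, ∅) ρ) := by
      simp only [mssAlgCost, mssStates]
      rw [mssStates_eq_traj ρ (s₀, ∅)]
    -- upper bound on moves
    have hUB0 := mssMoves_le R hne ρ (s₀, ∅) hinit (Finset.empty_subset R) hρR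
    rw [hcard] at hUB0
    have hUB : mssMoves (s₀, (∅ : Finset (Finset (Fin n)))) ρ ≤
        m * mssResets (s₀, (∅ : Finset (Finset (Fin n)))) ρ + m := by
      simpa using hUB0
    -- lower bound on opt
    have hLB : (mssResets (s₀, (∅ : Finset (Finset (Fin n)))) ρ : ℝ) ≤ mssOpt (unifR n) s₀ ρ := by
      apply le_csInf
      · exact ⟨mssPathCost (unifR n) s₀ (ρ.map fun S => mssPick S s₀),
          ρ.map fun S => mssPick S s₀, exists_feasible s₀ ρ hρne, rfl⟩
      · rintro x ⟨ss, hss, rfl⟩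
        rw [pathCost_eq_offMoves]
        exact_mod_cast (mssResets_le ρ (s₀, ∅) s₀ ss hss).1 hinit
    have hcost := pathCost_traj_le ρ ((s₀, (∅ : Finset (Finset (Fin n)))))
    rw [hAlg]
    have h1 : mssPathCost (unifR n) s₀ (mssTraj (s₀, ∅) ρ) ≤
        ((m * mssResets (s₀, (∅ : Finset (Finset (Fin n)))) ρ + m : ℕ) : ℝ) := by
      calc mssPathCost (unifR n) s₀ (mssTraj (s₀, ∅) ρ)
          ≤ (mssMoves (s₀, ∅) ρ : ℝ) := hcost
        _ ≤ ((m * mssResets (s₀, (∅ : Finset (Finset (Fin n)))) ρ + m : ℕ) : ℝ) := by exact_mod_cast hUB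
    have h2 : ((m : ℝ)) * (mssResets (s₀, (∅ : Finset (Finset (Fin n)))) ρ : ℝ) ≤
        (m : ℝ) * mssOpt (unifR n) s₀ ρ :=
      mul_le_mul_of_nonneg_left hLB (Nat.cast_nonneg m)
    push_cast at h1
    linarith
end

section
/- For every n ≥ 2 and every m ≥ 2, on the n-point uniform metric space there exists a pool R of at most m nonempty subsets such that no deterministic online algorithm for the metrical service system is c-competitive on R for any c < min{m,n} − 1. (Consequently, the worst-case deterministic competitive ratio for chasing sets drawn from a pool of m subsets of an n-point uniform space is at least min{m,n} − 1, matching the upper bound of m up to an additive 1.) -/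
/-! ### Auxiliary material for the lower bound -/

section Aux

variable {n : ℕ}

/-- Last state of the path `ss` started at `s₀`. -/
def lastSt (s₀ : Fin n) (ss : List (Fin n)) : Fin n := ss.foldl (fun _ x => x) s₀

lemma lastSt_cons (s₀ a : Fin n) (ss : List (Fin n)) :
    lastSt s₀ (a :: ss) = lastSt a ss := rfl

lemma mssPathCost_append (d : Fin n → Fin n → ℝ) (s₀ : Fin n) (xs ys : List (Fin n)) :
    mssPathCost d s₀ (xs ++ ys) = mssPathCost d s₀ xs + mssPathCost d (lastSt s₀ xs) ys := by
  induction xs generalizing s₀ with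
  | nil => simp [mssPathCost, lastSt]
  | cons a l ih =>
      simp only [List.cons_append, mssPathCost, List.append_eq, ih, lastSt_cons]
      ring

lemma unifR_nonneg (x y : Fin n) : 0 ≤ unifR n x y := by
  unfold unifR; split <;> norm_num

lemma unifR_le_one (x y : Fin n) : unifR n x y ≤ 1 := by
  unfold unifR; split <;> norm_num

lemma unifR_self (x : Fin n) : unifR n x x = 0 := by simp [unifR]

lemma unifR_of_ne {x y : Fin n} (h : x ≠ y) : unifR n x y = 1 := by simp [unifR, h]

lemma mssPathCost_nonneg (d : Fin n → Fin n → ℝ) (hd : ∀ x y, 0 ≤ d x y)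
    (s₀ : Fin n) (ss : List (Fin n)) : 0 ≤ mssPathCost d s₀ ss := by
  induction ss generalizing s₀ with
  | nil => simp [mssPathCost]
  | cons a l ih => simpa [mssPathCost] using add_nonneg (hd s₀ a) (ih a)

lemma mssPathCost_replicate_self (c : ℕ) (x : Fin n) :
    mssPathCost (unifR n) x (List.replicate c x) = 0 := by
  induction c with
  | zero => simp [mssPathCost]
  | succ c ih => simp [List.replicate_succ, mssPathCost, unifR_self, ih]

lemma mssPathCost_replicate_le (c : ℕ) (s₀ x : Fin n) :
    mssPathCost (unifR n) s₀ (List.replicate c x) ≤ 1 := by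
  cases c with
  | zero => simp [mssPathCost]
  | succ c =>
      simp only [List.replicate_succ, mssPathCost, mssPathCost_replicate_self, add_zero]
      exact unifR_le_one _ _

lemma lastSt_replicate (c : ℕ) (s₀ x : Fin n) :
    lastSt s₀ (List.replicate (c + 1) x) = x := by
  induction c generalizing s₀ with
  | zero => rfl
  | succ c ih => rw [List.replicate_succ, lastSt_cons, ih]

lemma forall₂_replicate {α β : Type*} {R : α → β → Prop} (x : α) (l : List β)
    (h : ∀ S ∈ l, R x S) : List.Forall₂ R (List.replicate l.length x) l := by
  induction l with
  | nil => simp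
  | cons a t ih =>
      rw [List.length_cons, List.replicate_succ]
      exact List.Forall₂.cons (h a (by simp)) (ih fun S hS => h S (by simp [hS]))

lemma mssStates_snoc (A : List (Finset (Fin n)) → Fin n) (l : List (Finset (Fin n)))
    (S : Finset (Fin n)) :
    mssStates A (l ++ [S]) = mssStates A l ++ [A (l ++ [S])] := by
  unfold mssStates
  rw [List.length_append, List.length_singleton, List.range_succ, List.map_append]
  congr 1
  · apply List.map_congr_left
    intro t ht
    rw [List.mem_range] at ht
    rw [List.take_append_of_le_length (by omega)]
  · have h : List.take (l.length + 1) (l ++ [S]) = l ++ [S] :=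
      List.take_of_length_le (by simp)
    simp [h]

end Aux

section Pool

variable (n k : ℕ) (hkn : k ≤ n)

/-- The first `k` points of `Fin n`. -/
def Pset : Finset (Fin n) := Finset.univ.image (Fin.castLE hkn)

/-- The request erasing the `i`-th of the first `k` points. -/
def req (i : Fin k) : Finset (Fin n) := (Pset n k hkn).erase (Fin.castLE hkn i)

lemma castLE_mem_Pset (i : Fin k) : Fin.castLE hkn i ∈ Pset n k hkn := by
  simp [Pset]

lemma Pset_card : (Pset n k hkn).card = k := by
  rw [Pset, Finset.card_image_of_injective _ (Fin.castLE_injective hkn), Finset.card_univ,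
    Fintype.card_fin]

lemma mem_req_iff (i q : Fin k) : Fin.castLE hkn q ∈ req n k hkn i ↔ q ≠ i := by
  rw [req, Finset.mem_erase]
  constructor
  · rintro ⟨h1, _⟩ rfl; exact h1 rfl
  · intro h
    exact ⟨fun hc => h ((Fin.castLE_injective hkn) hc), castLE_mem_Pset n k hkn q⟩

lemma req_nonempty (hk : 2 ≤ k) (i : Fin k) : (req n k hkn i).Nonempty := by
  rcases eq_or_ne (⟨0, by omega⟩ : Fin k) i with h | h
  · refine ⟨Fin.castLE hkn ⟨1, by omega⟩, (mem_req_iff n k hkn i ⟨1, by omega⟩).mpr ?_⟩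
    intro hc
    rw [← hc] at h
    have := congrArg Fin.val h
    simp at this
  · exact ⟨Fin.castLE hkn ⟨0, by omega⟩, (mem_req_iff n k hkn i _).mpr h⟩

/-- Index of a request of the form `req i` (choice-based). -/
noncomputable def ridx (hk : 2 ≤ k) (S : Finset (Fin n)) : Fin k :=
  if h : ∃ i : Fin k, S = req n k hkn i then h.choose else ⟨0, by omega⟩

lemma ridx_spec (hk : 2 ≤ k) {S : Finset (Fin n)} (h : ∃ i : Fin k, S = req n k hkn i) :
    S = req n k hkn (ridx n k hkn hk S) := by
  rw [ridx, dif_pos h]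
  exact h.choose_spec

/-- Offline bound: any sequence of `L` requests from the pool can be served with cost
at most `L/(k-1) + 1`. -/
lemma offline_bound (hk : 2 ≤ k) :
    ∀ L : ℕ, ∀ l : List (Finset (Fin n)), l.length = L →
      (∀ S ∈ l, ∃ i : Fin k, S = req n k hkn i) →
      ∀ s₀ : Fin n, ∃ ss : List (Fin n),
        List.Forall₂ (fun (s : Fin n) (S : Finset (Fin n)) => s ∈ S) ss l ∧
        mssPathCost (unifR n) s₀ ss ≤ ((L / (k - 1) : ℕ) : ℝ) + 1 := by
  intro L
  induction L using Nat.strong_induction_on with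
  | _ L IH =>
    intro l hlen hform s₀
    rcases Nat.eq_zero_or_pos L with rfl | hL
    · refine ⟨[], ?_, ?_⟩
      · rw [List.length_eq_zero_iff.mp hlen]
        exact List.Forall₂.nil
      · simp [mssPathCost]
    -- choose a point avoiding the first k-1 forbidden indices
    have hbad : ∃ q : Fin k, ∀ S ∈ l.take (k - 1), Fin.castLE hkn q ∈ S := by
      by_contra hco
      push_neg at hco
      set T : Finset (Fin k) := ((l.take (k - 1)).map (ridx n k hkn hk)).toFinset with hT
      have hsub : ∀ q : Fin k, q ∈ T := by
        intro q
        obtain ⟨S, hS, hqS⟩ := hco q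
        have hSl : S ∈ l := List.mem_of_mem_take hS
        have hform' := hform S hSl
        have hSr := ridx_spec n k hkn hk hform'
        have : q = ridx n k hkn hk S := by
          by_contra hne
          exact hqS (by rw [hSr]; exact (mem_req_iff n k hkn _ q).mpr hne)
        rw [hT, List.mem_toFinset]
        exact this ▸ List.mem_map_of_mem hS
      have h1 : (Finset.univ : Finset (Fin k)).card ≤ T.card :=
        Finset.card_le_card (fun q _ => hsub q)
      have h2 : T.card ≤ (l.take (k - 1)).length := by
        rw [hT]
        calc ((l.take (k - 1)).map (ridx n k hkn hk)).toFinset.card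
            ≤ ((l.take (k - 1)).map (ridx n k hkn hk)).length := List.toFinset_card_le _
          _ = (l.take (k - 1)).length := List.length_map _
      have h3 : (l.take (k - 1)).length ≤ k - 1 := by
        rw [List.length_take]; omega
      rw [Finset.card_univ, Fintype.card_fin] at h1
      omega
    obtain ⟨q, hq⟩ := hbad
    set x : Fin n := Fin.castLE hkn q with hx
    by_cases hcase : L ≤ k - 1
    -- short case: serve everything with one move
    · have htake : l.take (k - 1) = l := List.take_of_length_le (by omega)
      rw [htake] at hq
      refine ⟨List.replicate l.length x, ?_, ?_⟩
      · exact forall₂_replicate x l hq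
      · have h1 : mssPathCost (unifR n) s₀ (List.replicate l.length x) ≤ 1 :=
          mssPathCost_replicate_le _ _ _
        have h0 : (0 : ℝ) ≤ ((L / (k - 1) : ℕ) : ℝ) := Nat.cast_nonneg _
        linarith
    -- long case: one move for the first k-1 requests, then recurse
    · push_neg at hcase
      have hk1 : 0 < k - 1 := by omega
      have hdlen : (l.drop (k - 1)).length = L - (k - 1) := by
        rw [List.length_drop, hlen]
      obtain ⟨ss', hss'⟩ := IH (L - (k - 1)) (by omega) (l.drop (k - 1)) hdlen
        (fun S hS => hform S (List.mem_of_mem_drop hS)) x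
      have htlen : (l.take (k - 1)).length = k - 1 := by
        rw [List.length_take]; omega
      refine ⟨List.replicate (l.take (k - 1)).length x ++ ss', ?_, ?_⟩
      · have h1 : List.Forall₂ (fun (s : Fin n) (S : Finset (Fin n)) => s ∈ S)
            (List.replicate (l.take (k - 1)).length x) (l.take (k - 1)) :=
          forall₂_replicate x _ hq
        have := List.rel_append h1 hss'.1
        simpa [List.take_append_drop] using this
      · rw [mssPathCost_append]
        have hrep : mssPathCost (unifR n) s₀ (List.replicate (l.take (k - 1)).length x) ≤ 1 :=
          mssPathCost_replicate_le _ _ _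
        have hlast : lastSt s₀ (List.replicate (l.take (k - 1)).length x) = x := by
          rw [htlen]
          obtain ⟨c, hc⟩ : ∃ c, k - 1 = c + 1 := ⟨k - 2, by omega⟩
          rw [hc]; exact lastSt_replicate c s₀ x
        rw [hlast]
        have hrec := hss'.2
        have hdiv : L / (k - 1) = (L - (k - 1)) / (k - 1) + 1 :=
          Nat.div_eq_sub_div hk1 (le_of_lt hcase)
        rw [hdiv]
        push_cast
        linarith

end Pool

section Adversary

variable {n : ℕ} (k : ℕ) (hkn : k ≤ n) (hk : 2 ≤ k)
variable (A : List (Finset (Fin n)) → Fin n) (s₀ : Fin n)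

/-- Index whose request forbids `s` (if `s` is among the first `k` points). -/
noncomputable def gidx (s : Fin n) : Fin k :=
  if h : ∃ i : Fin k, Fin.castLE hkn i = s then h.choose else ⟨0, by omega⟩

lemma notMem_req_gidx (s : Fin n) : s ∉ req n k hkn (gidx k hkn hk s) := by
  by_cases h : ∃ i : Fin k, Fin.castLE hkn i = s
  · have hgs : Fin.castLE hkn (gidx k hkn hk s) = s := by
      rw [gidx, dif_pos h]; exact h.choose_spec
    intro hc
    rw [req, Finset.mem_erase] at hc
    exact hc.1 hgs.symm
  · intro hc
    have : s ∈ Pset n k hkn := Finset.mem_of_mem_erase hc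
    rw [Pset, Finset.mem_image] at this
    obtain ⟨i, _, hi⟩ := this
    exact h ⟨i, hi⟩

/-- The adversarial request sequence against algorithm `A`. -/
noncomputable def adv : ℕ → List (Finset (Fin n))
  | 0 => []
  | t + 1 =>
      adv t ++ [req n k hkn (gidx k hkn hk (lastSt s₀ (mssStates A (adv t))))]

lemma adv_length (t : ℕ) : (adv k hkn hk A s₀ t).length = t := by
  induction t with
  | zero => rfl
  | succ t ih => rw [adv, List.length_append, ih, List.length_singleton]

lemma adv_form (t : ℕ) : ∀ S ∈ adv k hkn hk A s₀ t, ∃ i : Fin k, S = req n k hkn i := by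
  induction t with
  | zero => intro S hS; simp [adv] at hS
  | succ t ih =>
      intro S hS
      rw [adv, List.mem_append] at hS
      rcases hS with hS | hS
      · exact ih S hS
      · rw [List.mem_singleton] at hS
        exact ⟨_, hS⟩

lemma adv_cost (hA : ValidAlg A) (t : ℕ) :
    mssAlgCost (unifR n) s₀ A (adv k hkn hk A s₀ t) = t := by
  induction t with
  | zero => simp [adv, mssAlgCost, mssStates, mssPathCost]
  | succ t ih =>
      set l := adv k hkn hk A s₀ t with hl
      set S := req n k hkn (gidx k hkn hk (lastSt s₀ (mssStates A l))) with hS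
      have hadv : adv k hkn hk A s₀ (t + 1) = l ++ [S] := rfl
      rw [hadv]
      unfold mssAlgCost
      rw [mssStates_snoc, mssPathCost_append]
      have hnew : A (l ++ [S]) ∈ S := hA l S (req_nonempty n k hkn hk _)
      have hlast_notin : lastSt s₀ (mssStates A l) ∉ S := by
        rw [hS]; exact notMem_req_gidx k hkn hk _
      have hne : lastSt s₀ (mssStates A l) ≠ A (l ++ [S]) :=
        fun hc => hlast_notin (by rw [hc]; exact hnew)
      unfold mssAlgCost at ih
      rw [ih]
      simp [mssPathCost, unifR_of_ne hne]

end Adversary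

lemma mssOpt_nonneg {n : ℕ} (s₀ : Fin n) (ρ : List (Finset (Fin n))) :
    0 ≤ mssOpt (unifR n) s₀ ρ := by
  apply Real.sInf_nonneg
  rintro x ⟨ss, _, rfl⟩
  exact mssPathCost_nonneg _ unifR_nonneg _ _

lemma mssOpt_le {n : ℕ} (s₀ : Fin n) (ρ : List (Finset (Fin n))) (ss : List (Fin n))
    (hss : List.Forall₂ (fun (s : Fin n) (S : Finset (Fin n)) => s ∈ S) ss ρ) :
    mssOpt (unifR n) s₀ ρ ≤ mssPathCost (unifR n) s₀ ss := by
  apply csInf_le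
  · exact ⟨0, fun x ⟨ss', _, hx⟩ => hx ▸ mssPathCost_nonneg _ unifR_nonneg _ _⟩
  · exact ⟨ss, hss, rfl⟩

/-- For every `n ≥ 2` and every `m ≥ 2`, on the `n`-point uniform metric space
there exists a pool `R` of at most `m` nonempty subsets such that no deterministic online
algorithm for the metrical service system is `c`-competitive on `R` for any
`c < min{m,n} − 1`. -/
theorem stmt7 (n m : ℕ) (hn : 2 ≤ n) (hm : 2 ≤ m) :
    ∃ R : Finset (Finset (Fin n)), R.card ≤ m ∧ (∀ S ∈ R, S.Nonempty) ∧
      ∀ (s₀ : Fin n) (c : ℝ), c < ((min m n : ℕ) : ℝ) - 1 →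
        ∀ A : List (Finset (Fin n)) → Fin n, ValidAlg A →
          ¬ MssCompetitive (unifR n) s₀ ↑R c A := by
  set k := min m n with hkdef
  have hk : 2 ≤ k := le_min hm hn
  have hkn : k ≤ n := min_le_right m n
  refine ⟨Finset.univ.image (req n k hkn), ?_, ?_, ?_⟩
  · calc (Finset.univ.image (req n k hkn)).card ≤ Finset.univ.card :=
        Finset.card_image_le
      _ = k := by rw [Finset.card_univ, Fintype.card_fin]
      _ ≤ m := min_le_left m n
  · intro S hS
    rw [Finset.mem_image] at hS
    obtain ⟨i, _, rfl⟩ := hS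
    exact req_nonempty n k hkn hk i
  · intro s₀ c hc A hA hcomp
    obtain ⟨a, ha⟩ := hcomp
    -- key numeric facts
    have hk1R : (1 : ℝ) ≤ ((k - 1 : ℕ) : ℝ) := by
      have : 1 ≤ k - 1 := by omega
      exact_mod_cast this
    have hkm1pos : (0 : ℝ) < ((k - 1 : ℕ) : ℝ) := by linarith
    have hcast : ((k - 1 : ℕ) : ℝ) = ((k : ℕ) : ℝ) - 1 := by
      have : 1 ≤ k := by omega
      push_cast [Nat.cast_sub this]
      ring
    have hck : c < ((k - 1 : ℕ) : ℝ) := by rw [hcast]; exact hc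
    set c' : ℝ := max c 0 with hc'
    have hc'0 : 0 ≤ c' := le_max_right _ _
    have hc'k : c' < ((k - 1 : ℕ) : ℝ) := by
      rw [hc']
      exact max_lt hck (by linarith)
    -- the main inequality for each horizon t
    have key : ∀ t : ℕ, (t : ℝ) ≤ c' * ((t : ℝ) / ((k - 1 : ℕ) : ℝ) + 1) + a := by
      intro t
      set ρ := adv k hkn hk A s₀ t with hρ
      have hmem : ∀ S ∈ ρ, S ∈ (↑(Finset.univ.image (req n k hkn)) :
          Set (Finset (Fin n))) := by
        intro S hS
        obtain ⟨i, rfl⟩ := adv_form k hkn hk A s₀ t S hS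
        simp
      have h1 := ha ρ hmem
      rw [adv_cost k hkn hk A s₀ hA t] at h1
      -- opt bounds
      obtain ⟨ss, hss, hsscost⟩ := offline_bound n k hkn hk t ρ
        (adv_length k hkn hk A s₀ t) (adv_form k hkn hk A s₀ t) s₀
      have hopt_le : mssOpt (unifR n) s₀ ρ ≤ ((t / (k - 1) : ℕ) : ℝ) + 1 :=
        le_trans (mssOpt_le s₀ ρ ss hss) hsscost
      have hopt0 : 0 ≤ mssOpt (unifR n) s₀ ρ := mssOpt_nonneg s₀ ρ
      have hdivle : ((t / (k - 1) : ℕ) : ℝ) ≤ (t : ℝ) / ((k - 1 : ℕ) : ℝ) :=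
        Nat.cast_div_le
      have h2 : c * mssOpt (unifR n) s₀ ρ ≤ c' * mssOpt (unifR n) s₀ ρ :=
        mul_le_mul_of_nonneg_right (le_max_left _ _) hopt0
      have h3 : c' * mssOpt (unifR n) s₀ ρ ≤ c' * ((t : ℝ) / ((k - 1 : ℕ) : ℝ) + 1) :=
        mul_le_mul_of_nonneg_left (by linarith) hc'0
      linarith
    -- derive contradiction
    set ε : ℝ := 1 - c' / ((k - 1 : ℕ) : ℝ) with hε
    have hεpos : 0 < ε := by
      rw [hε]
      have : c' / ((k - 1 : ℕ) : ℝ) < 1 := by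
        rw [div_lt_one hkm1pos]; exact hc'k
      linarith
    obtain ⟨N, hN⟩ := exists_nat_gt ((c' + a) / ε)
    have h1 := key N
    have h2 : (N : ℝ) * ε ≤ c' + a := by
      have hexp : c' * ((N : ℝ) / ((k - 1 : ℕ) : ℝ) + 1) =
          c' / ((k - 1 : ℕ) : ℝ) * (N : ℝ) + c' := by
        field_simp
      rw [hexp] at h1
      rw [hε]
      nlinarith
    have h3 : (c' + a) / ε < (N : ℝ) := hN
    rw [div_lt_iff₀ hεpos] at h3
    linarith
end
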